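/- arXiv:2301.12248 — 10 statements merged into one kernel-verified Lean document; each statement's English description precedes it below -/
import Mathlib

section
/- Let A(n) = \sum_{k=0}^{n} \binom{n}{k}^2 \binom{n+k}{k}^2 (the Apéry numbers). Then for every prime p \ge 3 and all positive integers n and r, we have A(p^r n) \equiv A(p^{r-1} n) (mod p^{2r}), i.e., p^{2r} divides A(p^r n) - A(p^{r-1} n). -/
open Finset

/-- The Apéry numbers. -/
def apery (n : ℕ) : ℤ :=
  ∑ k ∈ Finset.range (n + 1), (n.choose k : ℤ) ^ 2 * ((n + k).choose k : ℤ) ^ 2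

namespace AperySuper

/-- the set of `k` with `1 ≤ k ≤ p*m` and `p ∤ k`. -/
def S (p m : ℕ) : Finset ℕ := (Finset.range (p * m + 1)).filter (fun k => ¬ p ∣ k)

/-- product of all `k ≤ p*m` coprime to `p`. -/
def Pp (p m : ℕ) : ℕ := ∏ k ∈ S p m, k

lemma erase_comm' {α : Type*} [DecidableEq α] (s : Finset α) (a b : α) :
    (s.erase a).erase b = (s.erase b).erase a := by
  ext x
  simp only [Finset.mem_erase]
  tauto

lemma mem_S {p m k : ℕ} : k ∈ S p m ↔ k < p * m + 1 ∧ ¬ p ∣ k := by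
  simp [S]

lemma one_le_of_mem_S {p m k : ℕ} (h : k ∈ S p m) : 1 ≤ k := by
  rcases mem_S.mp h with ⟨_, h2⟩
  rcases Nat.eq_zero_or_pos k with rfl | h1
  · exact absurd (dvd_zero p) h2
  · exact h1

lemma Pp_zero (p : ℕ) : Pp p 0 = 1 := by
  simp [Pp, S, Finset.range_one, Finset.filter_singleton]

lemma factorial_add_prod (n k : ℕ) :
    (n + k).factorial = n.factorial * ∏ i ∈ Finset.Ico (n + 1) (n + k + 1), i := by
  induction k with
  | zero => simp
  | succ k ih =>
    rw [show n + (k + 1) = (n + k) + 1 from rfl,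
      Finset.prod_Ico_succ_top (show n + 1 ≤ n + k + 1 by omega),
      Nat.factorial_succ, ih]
    ring

lemma S_split (p b c : ℕ) :
    S p (b + c) = S p b ∪ (Finset.Ico (p*b+1) (p*b+p*c+1)).filter (fun k => ¬ p ∣ k) := by
  unfold S
  rw [mul_add, Finset.range_eq_Ico,
    ← Finset.Ico_union_Ico_eq_Ico (by omega : (0:ℕ) ≤ p*b+1) (by omega : p*b+1 ≤ p*b+p*c+1),
    Finset.filter_union]
  rw [Finset.range_eq_Ico]

lemma S_split_disj (p b c : ℕ) :
    Disjoint (S p b) ((Finset.Ico (p*b+1) (p*b+p*c+1)).filter (fun k => ¬ p ∣ k)) := by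
  unfold S
  apply Finset.disjoint_filter_filter
  rw [Finset.range_eq_Ico]
  exact Finset.Ico_disjoint_Ico_consecutive 0 (p*b+1) (p*b+p*c+1)

lemma prod_S_shift {M : Type*} [CommMonoid M] (p b c : ℕ) (f : ℕ → M) :
    ∏ k ∈ (Finset.Ico (p*b+1) (p*b+p*c+1)).filter (fun k => ¬ p ∣ k), f k
      = ∏ k ∈ S p c, f (p*b + k) := by
  symm
  apply Finset.prod_nbij' (fun k => p*b + k) (fun k => k - p*b)
  · intro k hk
    rcases mem_S.mp hk with ⟨h1, h2⟩
    have hk1 := one_le_of_mem_S hk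
    simp only [Finset.mem_filter, Finset.mem_Ico]
    refine ⟨⟨by omega, by omega⟩, ?_⟩
    intro hdvd
    exact h2 ((Nat.dvd_add_right (Dvd.intro b rfl)).mp hdvd)
  · intro k hk
    simp only [Finset.mem_filter, Finset.mem_Ico] at hk
    obtain ⟨⟨h1, h2⟩, h3⟩ := hk
    rw [mem_S]
    constructor
    · omega
    · intro hdvd
      apply h3
      have : k - p*b + p*b = k := by omega
      rw [← this]
      exact Nat.dvd_add hdvd (Dvd.intro b rfl)
  · intro k _; omega
  · intro k hk
    simp only [Finset.mem_filter, Finset.mem_Ico] at hk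
    omega
  · intro k _; rfl

lemma filter_Ico_block (p m : ℕ) (hp : 1 ≤ p) :
    (Finset.Ico (p*m+1) (p*m+p+1)).filter (fun k => ¬ p ∣ k) = Finset.Ico (p*m+1) (p*m+p) := by
  ext k
  simp only [Finset.mem_filter, Finset.mem_Ico]
  constructor
  · rintro ⟨⟨h1, h2⟩, h3⟩
    refine ⟨h1, ?_⟩
    have hne : k ≠ p*m + p := by
      intro h
      exact h3 (h ▸ ⟨m+1, by ring⟩)
    omega
  · rintro ⟨h1, h2⟩
    refine ⟨⟨h1, by omega⟩, ?_⟩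
    rintro ⟨t, rfl⟩
    have ht1 : m < t := by
      by_contra h; push_neg at h
      have : p * t ≤ p * m := Nat.mul_le_mul_left p h
      omega
    have ht2 : t < m + 1 := by
      by_contra h; push_neg at h
      have h5 : p * (m+1) ≤ p * t := Nat.mul_le_mul_left p h
      have h6 : p * (m+1) = p * m + p := by ring
      omega
    omega

lemma pow_mul_factorial (p : ℕ) (hp : 1 ≤ p) :
    ∀ m : ℕ, (p * m).factorial = p ^ m * m.factorial * Pp p m := by
  intro m
  induction m with
  | zero => simp [Pp_zero]
  | succ m ih =>
    have h1 : p * (m+1) = p * m + p := by ring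
    have h2 : (p*m + p).factorial
        = (p*m).factorial * ∏ i ∈ Finset.Ico (p*m+1) (p*m+p+1), i :=
      factorial_add_prod _ _
    have h3 : ∏ i ∈ Finset.Ico (p*m+1) (p*m+p+1), i
        = (∏ i ∈ Finset.Ico (p*m+1) (p*m+p), i) * (p*m+p) := by
      rw [show p*m+p+1 = (p*m+p)+1 from rfl, Finset.prod_Ico_succ_top (by omega)]
    have h4 : Pp p (m+1) = Pp p m * ∏ i ∈ Finset.Ico (p*m+1) (p*m+p), i := by
      unfold Pp
      rw [S_split p m 1, Finset.prod_union (S_split_disj p m 1)]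
      congr 1
      rw [show p*m+p*1 = p*m+p by ring, filter_Ico_block p m hp]
    rw [h1, h2, h3, Nat.factorial_succ, ih, h4]
    ring

lemma not_dvd_Pp (p m : ℕ) (hp : p.Prime) : ¬ p ∣ Pp p m := by
  intro h
  obtain ⟨k, hk, hdvd⟩ := hp.prime.exists_mem_finset_dvd h
  exact (mem_S.mp hk).2 hdvd

lemma choose_Pp (p a b : ℕ) (hp : p.Prime) (hba : b ≤ a) :
    (p*a).choose (p*b) * (Pp p b * Pp p (a - b)) = a.choose b * Pp p a := by
  have hp1 : 1 ≤ p := hp.one_lt.le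
  have h0 : p * b ≤ p * a := Nat.mul_le_mul_left _ hba
  have h1 := Nat.choose_mul_factorial_mul_factorial h0
  have h2 := Nat.choose_mul_factorial_mul_factorial hba
  have e1 := pow_mul_factorial p hp1 a
  have e2 := pow_mul_factorial p hp1 b
  have e3 := pow_mul_factorial p hp1 (a-b)
  have h3 : p*a - p*b = p*(a-b) := by
    rcases Nat.le.dest hba with ⟨d, rfl⟩
    simp [Nat.mul_add]
  have hpow : p ^ a = p ^ b * p ^ (a - b) := by
    rw [← pow_add]; congr 1; omega
  apply Nat.eq_of_mul_eq_mul_right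
    (show 0 < p^a * b.factorial * (a-b).factorial by positivity)
  calc (p*a).choose (p*b) * (Pp p b * Pp p (a-b)) * (p^a * b.factorial * (a-b).factorial)
      = (p*a).choose (p*b) * ((p^b * b.factorial * Pp p b)
          * (p^(a-b) * (a-b).factorial * Pp p (a-b))) := by rw [hpow]; ring
    _ = (p*a).choose (p*b) * ((p*b).factorial * (p*(a-b)).factorial) := by
          rw [← e2, ← e3]
    _ = (p*a).choose (p*b) * ((p*b).factorial * (p*a - p*b).factorial) := by rw [h3]
    _ = (p*a).factorial := by rw [← h1]; ring
    _ = p^a * a.factorial * Pp p a := e1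
    _ = p^a * (a.choose b * b.factorial * (a-b).factorial) * Pp p a := by rw [h2]
    _ = a.choose b * Pp p a * (p^a * b.factorial * (a-b).factorial) := by ring

lemma S1_dvd (p c γ : ℕ) (hp : p.Prime) (hp3 : 3 ≤ p) (hγ : p ^ γ ∣ c) :
    (p : ℤ) ^ (1 + γ) ∣ ∑ k ∈ S p c, ∏ j ∈ (S p c).erase k, (j : ℤ) := by
  have hM : ((p^(1+γ) : ℕ) : ℤ) = (p:ℤ)^(1+γ) := by push_cast; ring
  rw [← hM, ← ZMod.intCast_zmod_eq_zero_iff_dvd]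
  push_cast
  apply Finset.sum_involution (fun k _ => p*c - k)
  · -- pair sums vanish
    intro k hk
    rcases mem_S.mp hk with ⟨hklt, hkdvd⟩
    have hk1 := one_le_of_mem_S hk
    have hkne : k ≠ p*c := fun h => hkdvd (h ▸ Dvd.intro c rfl)
    have hklt' : k < p*c := by omega
    have hkbar : p*c - k ∈ S p c := by
      rw [mem_S]
      refine ⟨by omega, ?_⟩
      intro hdvd
      apply hkdvd
      have : p*c - (p*c - k) = k := by omega
      exact this ▸ Nat.dvd_sub (Dvd.intro c rfl) hdvd
    have hne : p*c - k ≠ k := by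
      intro h
      have h2k : 2 * k = p * c := by omega
      have hdvd2k : p ∣ 2 * k := ⟨c, h2k⟩
      rcases (Nat.Prime.dvd_mul hp).mp hdvd2k with h' | h'
      · have := Nat.le_of_dvd (by omega) h'; omega
      · exact hkdvd h'
    have hmem1 : p*c - k ∈ (S p c).erase k := Finset.mem_erase.mpr ⟨hne, hkbar⟩
    have hmem2 : k ∈ (S p c).erase (p*c - k) := Finset.mem_erase.mpr ⟨fun h => hne h.symm, hk⟩
    rw [← Finset.mul_prod_erase _ _ hmem1, ← Finset.mul_prod_erase _ _ hmem2,
      erase_comm' (S p c) (p*c-k) k]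
    have hcast : ((p*c - k : ℕ) : ZMod (p^(1+γ))) + ((k : ℕ) : ZMod (p^(1+γ)))
        = ((p*c : ℕ) : ZMod (p^(1+γ))) := by
      rw [← Nat.cast_add]; congr 1; omega
    have hzero : ((p*c : ℕ) : ZMod (p^(1+γ))) = 0 := by
      rw [ZMod.natCast_eq_zero_iff, pow_add, pow_one]
      exact mul_dvd_mul_left p hγ
    calc ((p*c - k : ℕ) : ZMod (p^(1+γ))) * ∏ j ∈ ((S p c).erase k).erase (p*c-k), (j : ZMod (p^(1+γ)))
          + (k : ZMod (p^(1+γ))) * ∏ j ∈ ((S p c).erase k).erase (p*c-k), (j : ZMod (p^(1+γ)))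
        = (((p*c - k : ℕ) : ZMod (p^(1+γ))) + (k : ZMod (p^(1+γ))))
            * ∏ j ∈ ((S p c).erase k).erase (p*c-k), (j : ZMod (p^(1+γ))) := by ring
      _ = 0 := by rw [hcast, hzero, zero_mul]
  · -- g a ≠ a
    intro k hk _
    rcases mem_S.mp hk with ⟨hklt, hkdvd⟩
    intro h
    have hk1 := one_le_of_mem_S hk
    have hkne : k ≠ p*c := fun h' => hkdvd (h' ▸ Dvd.intro c rfl)
    have h2k : 2 * k = p * c := by omega
    have hdvd2k : p ∣ 2 * k := ⟨c, h2k⟩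
    rcases (Nat.Prime.dvd_mul hp).mp hdvd2k with h' | h'
    · have := Nat.le_of_dvd (by omega) h'; omega
    · exact hkdvd h'
  · -- g maps into S
    intro k hk
    rcases mem_S.mp hk with ⟨hklt, hkdvd⟩
    have hk1 := one_le_of_mem_S hk
    have hkne : k ≠ p*c := fun h' => hkdvd (h' ▸ Dvd.intro c rfl)
    rw [mem_S]
    refine ⟨by omega, ?_⟩
    intro hdvd
    apply hkdvd
    have : p*c - (p*c - k) = k := by omega
    exact this ▸ Nat.dvd_sub (Dvd.intro c rfl) hdvd
  · -- involution
    intro k hk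
    rcases mem_S.mp hk with ⟨hklt, _⟩
    omega

lemma Pp_add_int (p b c : ℕ) :
    (Pp p (b+c) : ℤ) = (Pp p b : ℤ) * ∏ k ∈ S p c, ((p*b : ℤ) + (k : ℤ)) := by
  have h : Pp p (b+c) = Pp p b * ∏ k ∈ S p c, (p*b + k) := by
    unfold Pp
    rw [S_split p b c, Finset.prod_union (S_split_disj p b c), prod_S_shift p b c (fun k => k)]
  rw [h]
  push_cast
  ring

lemma Pp_mul_congr' (p b c β γ : ℕ) (hp : p.Prime) (hp3 : 3 ≤ p)
    (hβ : p ^ β ∣ b) (hγ : p ^ γ ∣ c) (hle : γ ≤ β) :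
    (p : ℤ) ^ (2 + β + γ) ∣ (Pp p (b+c) : ℤ) - (Pp p b : ℤ) * (Pp p c : ℤ) := by
  rw [Pp_add_int]
  rw [← mul_sub]
  apply Dvd.dvd.mul_left
  -- expand the product
  have hG : (∏ k ∈ S p c, ((p*b : ℤ) + (k : ℤ)))
      = ∑ t ∈ (S p c).powerset, (p*b : ℤ)^(t.card) * ∏ k ∈ S p c \ t, (k:ℤ) := by
    rw [Finset.prod_add]
    apply Finset.sum_congr rfl
    intro t _
    rw [Finset.prod_const]
  have hPc : (Pp p c : ℤ) = ∏ k ∈ S p c, (k : ℤ) := by unfold Pp; push_cast; ring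
  have hsplit : (∏ k ∈ S p c, ((p*b : ℤ) + (k : ℤ))) - (Pp p c : ℤ)
      = ∑ t ∈ ((S p c).powerset).erase ∅, (p*b : ℤ)^(t.card) * ∏ k ∈ S p c \ t, (k:ℤ) := by
    rw [hG, ← Finset.add_sum_erase _ _ (Finset.empty_mem_powerset (S p c))]
    simp [hPc]
  rw [hsplit]
  rw [← Finset.sum_filter_add_sum_filter_not (((S p c).powerset).erase ∅)
    (fun t => t.card = 1)]
  apply dvd_add
  · -- singletons
    have hset : (((S p c).powerset).erase ∅).filter (fun t => t.card = 1)
        = (S p c).powersetCard 1 := by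
      ext t
      simp only [Finset.mem_filter, Finset.mem_erase, Finset.mem_powerset,
        Finset.mem_powersetCard]
      constructor
      · rintro ⟨⟨_, h1⟩, h2⟩; exact ⟨h1, h2⟩
      · rintro ⟨h1, h2⟩
        refine ⟨⟨?_, h1⟩, h2⟩
        intro h
        rw [h] at h2
        simp at h2
    rw [hset, Finset.powersetCard_one, Finset.sum_map]
    simp only [Function.Embedding.coeFn_mk, Finset.card_singleton, pow_one]
    have hss : ∀ k ∈ S p c, (p*b : ℤ) * ∏ j ∈ S p c \ {k}, (j:ℤ)
        = (p*b : ℤ) * ∏ j ∈ (S p c).erase k, (j:ℤ) := by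
      intro k _
      rw [Finset.sdiff_singleton_eq_erase]
    rw [Finset.sum_congr rfl hss, ← Finset.mul_sum]
    have h1 : (p:ℤ)^(1+β) ∣ (p*b : ℤ) := by
      have : (p:ℤ)^(1+β) = (p:ℤ) * (p:ℤ)^β := by rw [pow_add, pow_one]
      rw [this]
      apply mul_dvd_mul_left
      exact_mod_cast Int.natCast_dvd_natCast.mpr hβ
    have h2 := S1_dvd p c γ hp hp3 hγ
    have := mul_dvd_mul h1 h2
    rwa [← pow_add, show 1+β+(1+γ) = 2+β+γ by omega] at this
  · -- card ≥ 2
    apply Finset.dvd_sum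
    intro t ht
    simp only [Finset.mem_filter, Finset.mem_erase, Finset.mem_powerset] at ht
    obtain ⟨⟨htne, _⟩, htcard⟩ := ht
    have hc2 : 2 ≤ t.card := by
      have hc0 : t.card ≠ 0 := fun h => htne (Finset.card_eq_zero.mp h)
      omega
    apply Dvd.dvd.mul_right
    have hpb : (p:ℤ)^(1+β) ∣ (p*b : ℤ) := by
      have : (p:ℤ)^(1+β) = (p:ℤ) * (p:ℤ)^β := by rw [pow_add, pow_one]
      rw [this]
      exact mul_dvd_mul_left _ (by exact_mod_cast Int.natCast_dvd_natCast.mpr hβ)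
    have h1 : ((p:ℤ)^(1+β))^(t.card) ∣ (p*b : ℤ)^(t.card) := pow_dvd_pow_of_dvd hpb _
    have h2 : (p:ℤ)^(2+β+γ) ∣ ((p:ℤ)^(1+β))^(t.card) := by
      rw [← pow_mul]
      apply pow_dvd_pow
      calc 2+β+γ ≤ 2+β+β := by omega
        _ ≤ (1+β)*2 := by omega
        _ ≤ (1+β)*t.card := Nat.mul_le_mul_left _ hc2
    exact h2.trans h1

lemma Pp_mul_congr (p b c β γ : ℕ) (hp : p.Prime) (hp3 : 3 ≤ p)
    (hβ : p ^ β ∣ b) (hγ : p ^ γ ∣ c) :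
    (p : ℤ) ^ (2 + β + γ) ∣ (Pp p (b+c) : ℤ) - (Pp p b : ℤ) * (Pp p c : ℤ) := by
  rcases le_total γ β with h | h
  · exact Pp_mul_congr' p b c β γ hp hp3 hβ hγ h
  · have := Pp_mul_congr' p c b γ β hp hp3 hγ hβ h
    rw [add_comm c b, mul_comm ((Pp p c : ℤ)) ((Pp p b : ℤ)),
      show 2+γ+β = 2+β+γ by omega] at this
    exact this

lemma choose_congr (p a b β γ e : ℕ) (hp : p.Prime) (hp3 : 3 ≤ p) (hba : b ≤ a)
    (hβ : p ^ β ∣ b) (hγ : p ^ γ ∣ (a - b)) (he : p ^ e ∣ a.choose b) :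
    (p : ℤ) ^ (2 + β + γ + e) ∣ ((p*a).choose (p*b) : ℤ) - (a.choose b : ℤ) := by
  set Q : ℕ := Pp p b * Pp p (a - b) with hQdef
  have hQnd : ¬ p ∣ Q := by
    intro h
    rcases (Nat.Prime.dvd_mul hp).mp h with h' | h'
    · exact not_dvd_Pp p b hp h'
    · exact not_dvd_Pp p (a-b) hp h'
  have hid : ((p*a).choose (p*b) : ℤ) * (Q : ℤ) = (a.choose b : ℤ) * (Pp p a : ℤ) := by
    exact_mod_cast congrArg (fun x : ℕ => (x : ℤ)) (choose_Pp p a b hp hba)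
  have hM := Pp_mul_congr p b (a-b) β γ hp hp3 hβ hγ
  rw [show b + (a - b) = a by omega] at hM
  have hdvd : (p:ℤ)^(2+β+γ+e)
      ∣ (((p*a).choose (p*b) : ℤ) - (a.choose b : ℤ)) * (Q : ℤ) := by
    have heq : (((p*a).choose (p*b) : ℤ) - (a.choose b : ℤ)) * (Q : ℤ)
        = (a.choose b : ℤ) * ((Pp p a : ℤ) - (Pp p b : ℤ) * (Pp p (a-b) : ℤ)) := by
      rw [sub_mul, hid, hQdef]
      push_cast
      ring
    rw [heq, show 2+β+γ+e = e+(2+β+γ) by omega, pow_add]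
    apply mul_dvd_mul
    · exact_mod_cast Int.natCast_dvd_natCast.mpr he
    · exact hM
  -- cancel Q
  have h2 : p^(2+β+γ+e) ∣ (((p*a).choose (p*b) : ℤ) - (a.choose b : ℤ)).natAbs * Q := by
    have := Int.natAbs_dvd_natAbs.mpr hdvd
    simpa [Int.natAbs_mul, Int.natAbs_pow] using this
  have hcop : Nat.Coprime (p^(2+β+γ+e)) Q :=
    Nat.Coprime.pow_left _ (hp.coprime_iff_not_dvd.mpr hQnd)
  have h3 : p^(2+β+γ+e) ∣ (((p*a).choose (p*b) : ℤ) - (a.choose b : ℤ)).natAbs :=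
    hcop.dvd_of_dvd_mul_right h2
  have h4 : ((p:ℤ)^(2+β+γ+e)).natAbs ∣ (((p*a).choose (p*b) : ℤ) - (a.choose b : ℤ)).natAbs := by
    simpa [Int.natAbs_pow] using h3
  exact Int.natAbs_dvd_natAbs.mp h4

lemma pow_dvd_choose_aux (p α s u a j : ℕ) (hp : p.Prime)
    (hj : j = p ^ s * u) (hu : ¬ p ∣ u) (hj1 : 1 ≤ j) (hja : j ≤ a)
    (hpa : p ^ α ∣ a) (hsα : s ≤ α) : p ^ (α - s) ∣ a.choose j := by
  have hkey : a * (a-1).choose (j-1) = a.choose j * j := by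
    have h := Nat.add_one_mul_choose_eq (a-1) (j-1)
    have e1 : a - 1 + 1 = a := by omega
    have e2 : j - 1 + 1 = j := by omega
    rwa [e1, e2] at h
  have h1 : p ^ α ∣ a.choose j * j := by
    rw [← hkey]
    exact hpa.mul_right _
  have h2 : p ^ s * p ^ (α - s) ∣ p^s * (a.choose j * u) := by
    rw [← pow_add, show s + (α - s) = α by omega]
    have heq : a.choose j * j = p ^ s * (a.choose j * u) := by rw [hj]; ring
    rwa [heq] at h1
  have h3 : p ^ (α - s) ∣ a.choose j * u :=
    (Nat.mul_dvd_mul_iff_left (pow_pos hp.pos s)).mp h2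
  exact (Nat.Coprime.pow_left _ (hp.coprime_iff_not_dvd.mpr hu)).dvd_of_dvd_mul_right h3

end AperySuper

open AperySuper

theorem supercongruence_apery (p : ℕ) (hp : p.Prime) (hp3 : 3 ≤ p)
    (n r : ℕ) (hn : 0 < n) (hr : 0 < r) :
    (p : ℤ) ^ (2 * r) ∣ apery (p ^ r * n) - apery (p ^ (r - 1) * n) := by
  classical
  have hp0 : 0 < p := by omega
  set a := p ^ (r - 1) * n with ha
  have ha1 : 1 ≤ a := Nat.mul_pos (pow_pos hp0 _) hn
  have hNa : p ^ r * n = p * a := by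
    rw [ha, ← mul_assoc]
    congr 1
    rw [← pow_succ']
    congr 1
    omega
  have hadvd : p ^ (r-1) ∣ a := dvd_mul_right _ _
  rw [hNa]
  -- reindex the sum over multiples of p
  have hre : ∑ k ∈ (Finset.range (p*a+1)).filter (fun k => p ∣ k),
        (((p*a).choose k : ℤ) ^ 2 * (((p*a) + k).choose k : ℤ) ^ 2)
      = ∑ j ∈ Finset.range (a+1),
        (((p*a).choose (p*j) : ℤ) ^ 2 * (((p*(a+j))).choose (p*j) : ℤ) ^ 2) := by
    symm
    apply Finset.sum_nbij' (fun j => p * j) (fun k => k / p)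
    · intro j hj
      simp only [Finset.mem_range] at hj
      simp only [Finset.mem_filter, Finset.mem_range]
      constructor
      · have : p * j ≤ p * a := Nat.mul_le_mul_left _ (by omega)
        omega
      · exact Dvd.intro j rfl
    · intro k hk
      simp only [Finset.mem_filter, Finset.mem_range] at hk
      obtain ⟨hk1, t, rfl⟩ := hk
      simp only [Finset.mem_range]
      rw [Nat.mul_div_cancel_left t hp0]
      by_contra h
      push_neg at h
      have h5 : p * (a+1) ≤ p * t := Nat.mul_le_mul_left _ (by omega)
      have h6 : p * (a+1) = p * a + p := by ring
      omega
    · intro j _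
      exact Nat.mul_div_cancel_left j hp0
    · intro k hk
      simp only [Finset.mem_filter, Finset.mem_range] at hk
      exact Nat.mul_div_cancel' hk.2
    · intro j _
      have : p * a + p * j = p * (a + j) := by ring
      rw [this]
  have hsum : apery (p*a) - apery a
      = (∑ k ∈ (Finset.range (p*a+1)).filter (fun k => ¬ p ∣ k),
          (((p*a).choose k : ℤ) ^ 2 * (((p*a) + k).choose k : ℤ) ^ 2))
        + ∑ j ∈ Finset.range (a+1),
          ((((p*a).choose (p*j) : ℤ)) ^ 2 * (((p*(a+j))).choose (p*j) : ℤ) ^ 2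
            - ((a.choose j : ℤ) ^ 2 * ((a + j).choose j : ℤ) ^ 2)) := by
    unfold apery
    rw [Finset.sum_sub_distrib, ← hre,
      ← Finset.sum_filter_add_sum_filter_not (Finset.range (p*a+1)) (fun k => p ∣ k)
        (fun k => (((p*a).choose k : ℤ) ^ 2 * (((p*a) + k).choose k : ℤ) ^ 2))]
    ring
  rw [hsum]
  apply dvd_add
  · -- terms with p ∤ k
    apply Finset.dvd_sum
    intro k hk
    simp only [Finset.mem_filter, Finset.mem_range] at hk
    obtain ⟨hk2, hk1⟩ := hk
    have hk0 : 1 ≤ k := by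
      rcases Nat.eq_zero_or_pos k with rfl | h
      · exact absurd (dvd_zero p) hk1
      · exact h
    have hch : p ^ r ∣ (p*a).choose k := by
      have := pow_dvd_choose_aux p r 0 k (p*a) k hp (by simp) hk1 hk0 (by omega)
        (by rw [← hNa]; exact dvd_mul_right _ _) (by omega)
      simpa using this
    have hchz : ((p:ℤ))^r ∣ ((p*a).choose k : ℤ) := by
      exact_mod_cast Int.natCast_dvd_natCast.mpr hch
    have : ((p:ℤ)^r)^2 ∣ ((p*a).choose k : ℤ)^2 := pow_dvd_pow_of_dvd hchz 2
    rw [← pow_mul, mul_comm r 2] at this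
    exact this.mul_right _
  · -- paired terms
    apply Finset.dvd_sum
    intro j hjr
    simp only [Finset.mem_range] at hjr
    have hja : j ≤ a := by omega
    rcases Nat.eq_zero_or_pos j with rfl | hj1
    · simp
    · set s0 := j.factorization p with hs0
      set u := j / p ^ s0 with hudef
      have hju : j = p ^ s0 * u := (Nat.ordProj_mul_ordCompl_eq_self j p).symm
      have hnu : ¬ p ∣ u := Nat.not_dvd_ordCompl hp (by omega)
      set s := min s0 (r - 1) with hs
      have hsr : s ≤ r - 1 := min_le_right _ _
      set χ := r - 1 - s with hχ
      have hsj : p ^ s ∣ j :=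
        dvd_trans (pow_dvd_pow p (min_le_left _ _)) (Nat.ordProj_dvd j p)
      have hsa : p ^ s ∣ a := dvd_trans (pow_dvd_pow p hsr) hadvd
      have hra : p ^ (r-1) ∣ (a + j) - j := by simpa using hadvd
      have hχC : p ^ χ ∣ a.choose j := by
        rcases le_or_gt (r-1) s0 with h | h
        · have hz : χ = 0 := by omega
          simp [hz]
        · have hss : s = s0 := by omega
          have := pow_dvd_choose_aux p (r-1) s0 u a j hp hju hnu hj1 hja hadvd (by omega)
          rwa [hχ, hss]
      have hχX : p ^ χ ∣ (p*a).choose (p*j) := by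
        rcases le_or_gt (r-1) s0 with h | h
        · have hz : χ = 0 := by omega
          simp [hz]
        · have hpj : p * j = p ^ (s0+1) * u := by rw [hju]; ring
          have := pow_dvd_choose_aux p r (s0+1) u (p*a) (p*j) hp hpj hnu (Nat.mul_pos hp0 hj1)
            (Nat.mul_le_mul_left _ hja) (by rw [← hNa]; exact dvd_mul_right _ _) (by omega)
          have e : r - (s0+1) = χ := by omega
          rwa [e] at this
      have h1 : (p:ℤ) ^ (2 + s + s + χ)
          ∣ ((p*a).choose (p*j) : ℤ) - (a.choose j : ℤ) :=
        choose_congr p a j s s χ hp hp3 hja hsj (Nat.dvd_sub hsa hsj) hχC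
      have h2 : (p:ℤ) ^ (2 + s + (r-1) + 0)
          ∣ ((p*(a+j)).choose (p*j) : ℤ) - ((a+j).choose j : ℤ) :=
        choose_congr p (a+j) j s (r-1) 0 hp hp3 (by omega) hsj hra (by simp)
      have hχXz : (p:ℤ)^χ ∣ ((p*a).choose (p*j) : ℤ) := by
        exact_mod_cast Int.natCast_dvd_natCast.mpr hχX
      have hχCz : (p:ℤ)^χ ∣ (a.choose j : ℤ) := by
        exact_mod_cast Int.natCast_dvd_natCast.mpr hχC
      set X : ℤ := ((p*a).choose (p*j) : ℤ) with hX
      set X' : ℤ := (a.choose j : ℤ) with hX'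
      set Y : ℤ := ((p*(a+j)).choose (p*j) : ℤ) with hY
      set Y' : ℤ := ((a+j).choose j : ℤ) with hY'
      have hXX' : (p:ℤ)^χ ∣ X + X' := dvd_add hχXz hχCz
      have key1 : (p:ℤ)^(2*r) ∣ (X - X') * (X + X') * Y^2 := by
        apply Dvd.dvd.mul_right
        have hmul := mul_dvd_mul h1 hXX'
        rwa [← pow_add, show 2+s+s+χ+χ = 2*r by omega] at hmul
      have key2 : (p:ℤ)^(2*r) ∣ X'^2 * ((Y - Y') * (Y + Y')) := by
        have hA : (p:ℤ)^(2*χ) ∣ X'^2 := by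
          have := pow_dvd_pow_of_dvd hχCz 2
          rwa [← pow_mul, mul_comm χ 2] at this
        have hB : (p:ℤ)^(2+s+(r-1)) ∣ (Y-Y')*(Y+Y') := by
          apply Dvd.dvd.mul_right
          simpa using h2
        have hmul := mul_dvd_mul hA hB
        rw [← pow_add] at hmul
        exact dvd_trans (pow_dvd_pow _ (by omega)) hmul
      have hring : X^2 * Y^2 - X'^2 * Y'^2
          = (X - X') * (X + X') * Y^2 + X'^2 * ((Y - Y') * (Y + Y')) := by ring
      rw [hring]
      exact dvd_add key1 key2
end

section
/- Let A_D(n) = \sum_{k=0}^{n} \binom{n}{k}^2 \binom{n+k}{k} (Zagier's sporadic sequence D). Then for every prime p \ge 3 and all positive integers n and r, we have A_D(p^r n) \equiv A_D(p^{r-1} n) (mod p^{2r}), i.e., p^{2r} divides A_D(p^r n) - A_D(p^{r-1} n). -/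
open Finset

namespace SupercongD

/-- product over [1, p*c] with multiples of p replaced by 1 -/
def U (p c : ℕ) : ℕ := ∏ k ∈ range (p * c), if p ∣ (k + 1) then 1 else (k + 1)

/-- same product with p*b added to each non-multiple factor -/
def W (p b c : ℕ) : ℕ := ∏ k ∈ range (p * c), if p ∣ (k + 1) then 1 else (k + 1 + p * b)

lemma factorial_add (m n : ℕ) :
    (m + n).factorial = m.factorial * ∏ i ∈ range n, (m + i + 1) := by
  induction n with
  | zero => simp
  | succ n ih =>
      rw [← Nat.add_assoc, Nat.factorial_succ, prod_range_succ, ih]; ring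

lemma fact_eq (p : ℕ) (hp : p.Prime) (a : ℕ) :
    (p * a).factorial = a.factorial * p ^ a * U p a := by
  induction a with
  | zero => simp [U]
  | succ a ih =>
      obtain ⟨q, hq⟩ : ∃ q, p = q + 1 := ⟨p - 1, by have := hp.one_lt; omega⟩
      have h1 : p * (a + 1) = p * a + p := by ring
      rw [h1, factorial_add]
      have hb : ∀ i ∈ range q, (if p ∣ (p * a + i + 1) then 1 else (p * a + i + 1))
          = p * a + i + 1 := by
        intro i hi
        simp only [mem_range] at hi
        have : ¬ p ∣ (p * a + i + 1) := by
          intro h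
          have h2 : p ∣ (i + 1) :=
            (Nat.dvd_add_right (Dvd.intro a rfl)).mp (by rwa [Nat.add_assoc] at h)
          have := Nat.le_of_dvd (by omega) h2
          omega
        simp [this]
      have hU : U p (a + 1) = U p a * ∏ i ∈ range q, (p * a + i + 1) := by
        unfold U
        rw [h1, prod_range_add]
        congr 1
        calc (∏ i ∈ range p, if p ∣ (p * a + i + 1) then 1 else (p * a + i + 1))
            = (∏ i ∈ range (q+1), if p ∣ (p * a + i + 1) then 1 else (p * a + i + 1)) := by
              rw [hq]
          _ = (∏ i ∈ range q, if p ∣ (p * a + i + 1) then 1 else (p * a + i + 1)) *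
              (if p ∣ (p * a + q + 1) then 1 else (p * a + q + 1)) := prod_range_succ _ _
          _ = ∏ i ∈ range q, (p * a + i + 1) := by
              have hdvd : p ∣ (p * a + q + 1) := by
                have he : p * a + q + 1 = p * (a + 1) := by omega
                rw [he]; exact Dvd.intro (a+1) rfl
              rw [if_pos hdvd, mul_one]
              exact prod_congr rfl hb
      have hblock : (∏ i ∈ range p, (p * a + i + 1))
          = (∏ i ∈ range q, (p * a + i + 1)) * (p * (a + 1)) := by
        calc (∏ i ∈ range p, (p * a + i + 1)) = ∏ i ∈ range (q+1), (p * a + i + 1) := by rw [hq]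
          _ = (∏ i ∈ range q, (p * a + i + 1)) * (p * a + q + 1) := prod_range_succ _ _
          _ = (∏ i ∈ range q, (p * a + i + 1)) * (p * (a + 1)) := by
              congr 1; omega
      rw [hblock, ih, hU, Nat.factorial_succ, pow_succ]
      ring

lemma U_coprime (p : ℕ) (hp : p.Prime) (c : ℕ) : Nat.Coprime p (U p c) := by
  apply Nat.Coprime.prod_right
  intro k _
  by_cases h : p ∣ (k + 1)
  · simp [h]
  · simp only [h, if_false]
    exact (hp.coprime_iff_not_dvd).mpr h

lemma U_split (p b c : ℕ) : U p (b + c) = U p b * W p b c := by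
  unfold U W
  rw [Nat.mul_add, prod_range_add]
  congr 1
  refine prod_congr rfl fun k _ => ?_
  have h : p ∣ (p * b + k + 1) ↔ p ∣ (k + 1) := by
    rw [Nat.add_assoc]
    exact Nat.dvd_add_right (Dvd.intro b rfl)
  by_cases hk : p ∣ (k + 1)
  · simp [hk, h.mpr hk]
  · have : ¬ p ∣ (p * b + k + 1) := fun hc => hk (h.mp hc)
    simp only [hk, this, if_false]
    omega

lemma key_identity (p : ℕ) (hp : p.Prime) {a b : ℕ} (hb : b ≤ a) :
    (p * a).choose (p * b) * U p (a - b) = a.choose b * W p b (a - b) := by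
  set c := a - b with hc
  have hac : a = b + c := by omega
  have h1 : (p * a).choose (p * b) * (p * b).factorial * (p * c).factorial
      = (p * a).factorial := by
    have h2 : p * b ≤ p * a := Nat.mul_le_mul_left _ hb
    have h3 : p * a - p * b = p * c := by rw [hac, Nat.mul_add]; omega
    rw [← h3]; exact Nat.choose_mul_factorial_mul_factorial h2
  have h2 : a.choose b * b.factorial * c.factorial = a.factorial := by
    have h3 : a - b = c := hc.symm
    rw [← h3]; exact Nat.choose_mul_factorial_mul_factorial hb
  rw [fact_eq p hp b, fact_eq p hp c, fact_eq p hp a] at h1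
  rw [← h2, hac, U_split p b c] at h1
  have hpow : p ^ (b + c) = p ^ b * p ^ c := pow_add p b c
  rw [hpow] at h1
  have hM : 0 < b.factorial * c.factorial * (p ^ b * p ^ c) * U p b := by
    have h4 : 0 < U p b := by
      unfold U
      apply Finset.prod_pos
      intro k _
      by_cases h : p ∣ (k + 1) <;> simp [h]
    have h5 := Nat.factorial_pos b
    have h6 := Nat.factorial_pos c
    have h7 : 0 < p ^ b * p ^ c := by
      have := hp.pos; positivity
    exact Nat.mul_pos (Nat.mul_pos (Nat.mul_pos h5 h6) h7) h4
  rw [hac]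
  apply Nat.eq_of_mul_eq_mul_left hM
  calc b.factorial * c.factorial * (p ^ b * p ^ c) * U p b * ((p * (b + c)).choose (p * b) * U p c)
      = (p * (b + c)).choose (p * b) * (b.factorial * p ^ b * U p b) *
          (c.factorial * p ^ c * U p c) := by ring
    _ = (b + c).choose b * b.factorial * c.factorial * (p ^ b * p ^ c) * (U p b * W p b c) := h1
    _ = b.factorial * c.factorial * (p ^ b * p ^ c) * U p b * ((b + c).choose b * W p b c) := by
        ring

lemma dvd_prod_sub_prod {ι : Type*} (s : Finset ι) (f g : ι → ℤ) (d : ℤ)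
    (h : ∀ i ∈ s, d ∣ f i - g i) : d ∣ (∏ i ∈ s, f i) - ∏ i ∈ s, g i := by
  classical
  induction s using Finset.induction with
  | empty => simp
  | insert _ _ hx ih =>
      rename_i x s'
      rw [prod_insert hx, prod_insert hx]
      have key : f x * ∏ i ∈ s', f i - g x * ∏ i ∈ s', g i
          = (f x - g x) * ∏ i ∈ s', f i + g x * ((∏ i ∈ s', f i) - ∏ i ∈ s', g i) := by ring
      rw [key]
      exact dvd_add (Dvd.dvd.mul_right (h x (mem_insert_self x s')) _)
        (Dvd.dvd.mul_left (ih (fun i hi => h i (mem_insert_of_mem hi))) _)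

lemma W_sub_U (p : ℕ) (hp : p.Prime) (hp3 : 3 ≤ p) (b c : ℕ) :
    ((p:ℤ)^2 * ((b:ℤ) + c) * b) ∣ ((W p b c : ℤ) - (U p c : ℤ)) := by
  rcases Nat.eq_zero_or_pos c with hc | hc
  · subst hc; simp [U, W]
  have hpc : 1 ≤ p * c := by have := hp.pos; exact Nat.mul_pos this hc
  have hdpc : p ∣ p * c := Dvd.intro c rfl
  set F : ℕ → ℤ := fun m => if p ∣ m then 1 else (m : ℤ) with hF
  set G : ℕ → ℤ := fun m => if p ∣ m then 1 else ((m : ℤ) + p * b) with hG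
  have hcastU : (U p c : ℤ) = ∏ m ∈ Ico 1 (p * c), F m := by
    unfold U
    push_cast
    have h1 : ∏ m ∈ Ico 1 (p * c + 1), F m = ∏ m ∈ Ico 1 (p * c), F m := by
      rw [prod_Ico_succ_top hpc]
      have h2 : F (p * c) = 1 := by simp [hF, hdpc]
      rw [h2, mul_one]
    rw [← h1, Finset.prod_Ico_eq_prod_range]
    simp only [Nat.add_sub_cancel]
    refine prod_congr rfl fun k _ => ?_
    simp only [hF]
    rw [Nat.add_comm 1 k]
    by_cases h : p ∣ (k + 1) <;> simp [h]
  have hcastW : (W p b c : ℤ) = ∏ m ∈ Ico 1 (p * c), G m := by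
    unfold W
    push_cast
    have h1 : ∏ m ∈ Ico 1 (p * c + 1), G m = ∏ m ∈ Ico 1 (p * c), G m := by
      rw [prod_Ico_succ_top hpc]
      have h2 : G (p * c) = 1 := by simp [hG, hdpc]
      rw [h2, mul_one]
    rw [← h1, Finset.prod_Ico_eq_prod_range]
    simp only [Nat.add_sub_cancel]
    refine prod_congr rfl fun k _ => ?_
    simp only [hG]
    rw [Nat.add_comm 1 k]
    by_cases h : p ∣ (k + 1) <;> simp [h] <;> push_cast <;> ring
  rw [hcastU, hcastW]
  set s := Ico 1 (p * c) with hs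
  set A := s.filter (fun m => 2 * m < p * c) with hA
  -- structure of products
  have hstruct : ∀ h : ℕ → ℤ, (∀ m ∈ s, 2 * m = p * c → h m = 1) →
      ∏ m ∈ s, h m = ∏ m ∈ A, (h m * h (p * c - m)) := by
    intro h hmid
    have e1 := prod_filter_mul_prod_filter_not s (fun m => 2 * m < p * c) h
    have e2 := prod_filter_mul_prod_filter_not (s.filter fun m => ¬ 2 * m < p * c)
      (fun m => 2 * m = p * c) h
    have hBeq : ((s.filter fun m => ¬ 2 * m < p * c).filter fun m => 2 * m = p * c)
        = s.filter (fun m => 2 * m = p * c) := by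
      ext m
      simp only [mem_filter, mem_Ico, hs]
      omega
    have hCeq : ((s.filter fun m => ¬ 2 * m < p * c).filter fun m => ¬ 2 * m = p * c)
        = s.filter (fun m => p * c < 2 * m) := by
      ext m
      simp only [mem_filter, mem_Ico, hs]
      omega
    rw [hBeq, hCeq] at e2
    have hmid1 : ∏ m ∈ s.filter (fun m => 2 * m = p * c), h m = 1 := by
      apply prod_eq_one
      intro m hm
      rw [mem_filter] at hm
      exact hmid m hm.1 hm.2
    have hCprod : ∏ m ∈ s.filter (fun m => p * c < 2 * m), h m
        = ∏ m ∈ A, h (p * c - m) := by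
      apply prod_nbij' (fun m => p * c - m) (fun m => p * c - m)
      · intro m hm
        simp only [hA, hs, mem_filter, mem_Ico] at hm ⊢
        omega
      · intro m hm
        simp only [hA, hs, mem_filter, mem_Ico] at hm ⊢
        omega
      · intro m hm
        simp only [hs, mem_filter, mem_Ico] at hm
        omega
      · intro m hm
        simp only [hA, hs, mem_filter, mem_Ico] at hm
        omega
      · intro m hm
        simp only [hs, mem_filter, mem_Ico] at hm
        have : p * c - (p * c - m) = m := by omega
        rw [this]
    rw [hmid1, one_mul] at e2
    rw [← e1, ← e2, hCprod, ← prod_mul_distrib]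
  have hdvd2m : ∀ m, 2 * m = p * c → p ∣ m := by
    intro m hm
    have h2 : p ∣ 2 * m := hm ▸ hdpc
    rcases (Nat.Prime.dvd_mul hp).mp h2 with h | h
    · have := Nat.le_of_dvd (by norm_num) h
      omega
    · exact h
  have hFs := hstruct F (by
    intro m _ hm
    have := hdvd2m m hm
    simp [hF, this])
  have hGs := hstruct G (by
    intro m _ hm
    have := hdvd2m m hm
    simp [hG, this])
  rw [hFs, hGs]
  apply dvd_prod_sub_prod
  intro m hm
  simp only [hA, hs, mem_filter, mem_Ico] at hm
  obtain ⟨⟨hm1, hm2⟩, hm3⟩ := hm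
  have hmle : m ≤ p * c := hm2.le
  have hiff : p ∣ (p * c - m) ↔ p ∣ m := by
    constructor
    · intro h
      have h2 : p ∣ (p * c - (p * c - m)) := Nat.dvd_sub hdpc h
      have h3 : p * c - (p * c - m) = m := by omega
      rwa [h3] at h2
    · intro h
      exact Nat.dvd_sub hdpc h
  by_cases hpm : p ∣ m
  · simp [hF, hG, hpm, hiff.mpr hpm]
  · have hpm2 : ¬ p ∣ (p * c - m) := fun h => hpm (hiff.mp h)
    simp only [hF, hG, hpm, hpm2, if_false]
    have hcast : ((p * c - m : ℕ) : ℤ) = (p : ℤ) * c - m := by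
      push_cast [Nat.cast_sub hmle]
      ring
    rw [hcast]
    refine ⟨1, ?_⟩
    push_cast
    ring

lemma pow_dvd_mul_choose {p t m k : ℕ} (hk : 1 ≤ k) (ht : p ^ t ∣ m) :
    p ^ t ∣ k * m.choose k := by
  rcases Nat.eq_zero_or_pos m with hm | hm
  · subst hm
    have : Nat.choose 0 k = 0 := Nat.choose_eq_zero_of_lt hk
    simp [this]
  obtain ⟨m', hm'⟩ : ∃ m', m = m' + 1 := ⟨m - 1, by omega⟩
  obtain ⟨k', hk'⟩ : ∃ k', k = k' + 1 := ⟨k - 1, by omega⟩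
  subst hm' hk'
  have h := Nat.add_one_mul_choose_eq m' k'
  have h2 : (k' + 1) * (m' + 1).choose (k' + 1) = (m' + 1) * m'.choose k' := by
    rw [h]; ring
  rw [h2]
  exact Dvd.dvd.mul_right ht _

lemma jaco (p : ℕ) (hp : p.Prime) (hp3 : 3 ≤ p) {a b : ℕ} (hb : b ≤ a) (α δ : ℕ)
    (hα : p ^ α ∣ a) (hδ : p ^ δ ∣ b * a.choose b) :
    (p : ℤ) ^ (2 + α + δ) ∣ ((p * a).choose (p * b) : ℤ) - (a.choose b : ℤ) := by
  have hkey := key_identity p hp hb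
  have hkeyZ : ((p * a).choose (p * b) : ℤ) * (U p (a - b) : ℤ)
      = (a.choose b : ℤ) * (W p b (a - b) : ℤ) := by exact_mod_cast congrArg (Nat.cast : ℕ → ℤ) hkey
  have hW := W_sub_U p hp hp3 b (a - b)
  have hbc : ((b : ℤ) + (a - b : ℕ)) = (a : ℤ) := by
    rw [Nat.cast_sub hb]; ring
  rw [hbc] at hW
  obtain ⟨E, hE⟩ := hW
  have hmain : (U p (a - b) : ℤ) * (((p * a).choose (p * b) : ℤ) - (a.choose b : ℤ))
      = (p : ℤ) ^ 2 * a * (b * a.choose b) * E := by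
    have : (U p (a - b) : ℤ) * (((p * a).choose (p * b) : ℤ) - (a.choose b : ℤ))
        = (a.choose b : ℤ) * ((W p b (a - b) : ℤ) - (U p (a - b) : ℤ)) := by
      linear_combination hkeyZ
    rw [this, hE]; ring
  have hdvd : (p : ℤ) ^ (2 + α + δ) ∣ (p : ℤ) ^ 2 * a * (b * a.choose b) * E := by
    have h1 : (p : ℤ) ^ α ∣ (a : ℤ) := by exact_mod_cast hα
    have h2 : (p : ℤ) ^ δ ∣ ((b : ℤ) * a.choose b) := by exact_mod_cast hδ
    have h3 : (p : ℤ) ^ (2 + α + δ) = (p : ℤ) ^ 2 * (p : ℤ) ^ α * (p : ℤ) ^ δ := by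
      rw [← pow_add, ← pow_add]
    rw [h3]
    exact Dvd.dvd.mul_right (mul_dvd_mul (mul_dvd_mul_left _ h1) h2) E
  rw [← hmain] at hdvd
  have hcop : IsCoprime ((p : ℤ) ^ (2 + α + δ)) (U p (a - b) : ℤ) := by
    apply IsCoprime.pow_left
    rw [Int.isCoprime_iff_gcd_eq_one]
    exact U_coprime p hp (a - b)
  exact hcop.dvd_of_dvd_mul_left hdvd

end SupercongD

open SupercongD Finset

/-- Zagier's sporadic sequence D. -/
def aperyD (n : ℕ) : ℤ :=
  ∑ k ∈ Finset.range (n + 1), (n.choose k : ℤ) ^ 2 * ((n + k).choose k : ℤ)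

theorem supercongruence_D (p : ℕ) (hp : p.Prime) (hp3 : 3 ≤ p)
    (n r : ℕ) (hn : 0 < n) (hr : 0 < r) :
    (p : ℤ) ^ (2 * r) ∣ aperyD (p ^ r * n) - aperyD (p ^ (r - 1) * n) := by
  haveI := Fact.mk hp
  have hppos := hp.pos
  set M := p ^ (r - 1) * n with hM
  have hpM : p ^ r * n = p * M := by
    rw [hM, ← mul_assoc, ← pow_succ']
    congr 2
    omega
  have hprM : p ^ r ∣ p * M := by rw [← hpM]; exact dvd_mul_right _ n
  have hpr1M : p ^ (r - 1) ∣ M := dvd_mul_right _ n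
  rw [hpM]
  unfold aperyD
  set f : ℕ → ℤ := fun k => ((p * M).choose k : ℤ) ^ 2 * (((p * M) + k).choose k : ℤ) with hf
  set g : ℕ → ℤ := fun j => (M.choose j : ℤ) ^ 2 * ((M + j).choose j : ℤ) with hg
  have hsplit : ∑ k ∈ range (p * M + 1), f k
      = (∑ k ∈ (range (p * M + 1)).filter (fun k => p ∣ k), f k)
        + ∑ k ∈ (range (p * M + 1)).filter (fun k => ¬ p ∣ k), f k :=
    (Finset.sum_filter_add_sum_filter_not _ _ _).symm
  have hmult : ∑ k ∈ (range (p * M + 1)).filter (fun k => p ∣ k), f k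
      = ∑ j ∈ range (M + 1), f (p * j) := by
    apply Finset.sum_nbij' (fun k => k / p) (fun j => p * j)
    · intro k hk
      simp only [mem_filter, mem_range] at hk
      obtain ⟨hk1, hk2⟩ := hk
      simp only [mem_range]
      obtain ⟨k', rfl⟩ := hk2
      rw [Nat.mul_div_cancel_left _ hppos]
      have : k' ≤ M := by
        by_contra h
        push_neg at h
        have h2 : p * (M + 1) ≤ p * k' := Nat.mul_le_mul_left _ h
        rw [Nat.mul_add, Nat.mul_one] at h2
        omega
      omega
    · intro j hj
      simp only [mem_range] at hj
      simp only [mem_filter, mem_range]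
      constructor
      · have : p * j ≤ p * M := Nat.mul_le_mul_left _ (by omega)
        omega
      · exact Dvd.intro j rfl
    · intro k hk
      simp only [mem_filter, mem_range] at hk
      exact Nat.mul_div_cancel' hk.2
    · intro j _
      exact Nat.mul_div_cancel_left _ hppos
    · intro k hk
      simp only [mem_filter, mem_range] at hk
      rw [Nat.mul_div_cancel' hk.2]
  rw [hsplit, hmult, add_sub_right_comm, ← Finset.sum_sub_distrib]
  apply dvd_add
  · -- multiples of p
    apply Finset.dvd_sum
    intro j hj
    simp only [mem_range] at hj
    have hjM : j ≤ M := by omega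
    rcases Nat.eq_zero_or_pos j with rfl | hj1
    · simp [hf, hg]
    simp only [hf, hg]
    have hMj : p * M + p * j = p * (M + j) := by ring
    rw [hMj]
    set x1 := (M.choose j : ℤ) with hx1
    set X1 := ((p * M).choose (p * j) : ℤ) with hX1
    set x2 := ((M + j).choose j : ℤ) with hx2
    set X2 := ((p * (M + j)).choose (p * j) : ℤ) with hX2
    have hδ1 : p ^ (r - 1) ∣ j * M.choose j := pow_dvd_mul_choose hj1 hpr1M
    have hd1 : (p : ℤ) ^ (2 * r) ∣ X1 - x1 := by
      have h := jaco p hp hp3 hjM (r - 1) (r - 1) hpr1M hδ1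
      have he : 2 + (r - 1) + (r - 1) = 2 * r := by omega
      rwa [he] at h
    have hd2 : (p : ℤ) ^ (2 * r) ∣ x1 ^ 2 * (X2 - x2) := by
      by_cases hcase : p ^ (r - 1) ∣ j
      · have h := jaco p hp hp3 (Nat.le_add_left j M) (r - 1) (r - 1)
          (dvd_add hpr1M hcase) (dvd_mul_of_dvd_left hcase _)
        have he : 2 + (r - 1) + (r - 1) = 2 * r := by omega
        rw [he] at h
        exact Dvd.dvd.mul_left h _
      · set v := padicValNat p j with hv
        have hpv : p ^ v ∣ j := pow_padicValNat_dvd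
        have hv1 : ¬ p ^ (v + 1) ∣ j := pow_succ_padicValNat_not_dvd (by omega)
        have hvlt : v < r - 1 := by
          by_contra h
          push_neg at h
          exact hcase ((pow_dvd_pow p h).trans hpv)
        have hpvM : p ^ v ∣ M := (pow_dvd_pow p hvlt.le).trans hpr1M
        have hX2d : (p : ℤ) ^ (2 + v + v) ∣ X2 - x2 :=
          jaco p hp hp3 (Nat.le_add_left j M) v v (dvd_add hpvM hpv)
            (dvd_mul_of_dvd_left hpv _)
        obtain ⟨j', hj'⟩ := hpv
        have hpj' : ¬ p ∣ j' := by
          intro h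
          apply hv1
          rw [hj', pow_succ]
          exact mul_dvd_mul_left _ h
        have h3 : p ^ v * p ^ (r - 1 - v) ∣ p ^ v * (j' * M.choose j) := by
          rw [← pow_add]
          have he2 : v + (r - 1 - v) = r - 1 := by omega
          rw [he2, ← mul_assoc, ← hj']
          exact hδ1
        have h4 : p ^ (r - 1 - v) ∣ j' * M.choose j :=
          (mul_dvd_mul_iff_left (a := p ^ v) (by positivity : (p:ℕ) ^ v ≠ 0)).mp h3
        have h5 : p ^ (r - 1 - v) ∣ M.choose j := by
          have hcop : Nat.Coprime (p ^ (r - 1 - v)) j' :=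
            Nat.Coprime.pow_left _ ((hp.coprime_iff_not_dvd).mpr hpj')
          exact hcop.dvd_of_dvd_mul_left h4
        have h6 : ((p : ℤ) ^ (r - 1 - v)) ^ 2 ∣ x1 ^ 2 := by
          apply pow_dvd_pow_of_dvd
          rw [hx1]
          exact_mod_cast h5
        have he3 : (p : ℤ) ^ (2 * r) = ((p : ℤ) ^ (r - 1 - v)) ^ 2 * (p : ℤ) ^ (2 + v + v) := by
          rw [← pow_mul, ← pow_add]
          congr 1
          omega
        rw [he3]
        exact mul_dvd_mul h6 hX2d
    have hident : X1 ^ 2 * X2 - x1 ^ 2 * x2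
        = (X1 + x1) * X2 * (X1 - x1) + x1 ^ 2 * (X2 - x2) := by ring
    rw [hident]
    exact dvd_add (Dvd.dvd.mul_left hd1 _) hd2
  · -- non-multiples of p
    apply Finset.dvd_sum
    intro k hk
    simp only [mem_filter, mem_range] at hk
    obtain ⟨hk1, hk2⟩ := hk
    have hk0 : 1 ≤ k := by
      rcases Nat.eq_zero_or_pos k with rfl | h
      · exact absurd (dvd_zero p) hk2
      · exact h
    have h1 : p ^ r ∣ k * (p * M).choose k := pow_dvd_mul_choose hk0 hprM
    have hcop : Nat.Coprime (p ^ r) k :=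
      Nat.Coprime.pow_left _ ((hp.coprime_iff_not_dvd).mpr hk2)
    have h2 : p ^ r ∣ (p * M).choose k := hcop.dvd_of_dvd_mul_left h1
    have h3 : ((p : ℤ) ^ r) ^ 2 ∣ ((p * M).choose k : ℤ) ^ 2 := by
      apply pow_dvd_pow_of_dvd
      exact_mod_cast Int.natCast_dvd_natCast.mpr h2
    have he : (p : ℤ) ^ (2 * r) = ((p : ℤ) ^ r) ^ 2 := by
      rw [← pow_mul]
      congr 1
      omega
    rw [he, hf]
    exact Dvd.dvd.mul_right h3 _
end

section
/- Let A(n) = \sum_{k=0}^{n} \binom{n}{k}^2 \binom{n+k}{k}^2 (the Apéry numbers). Then for every prime p and all integers n \ge 0 and k with 0 \le k < p, we have A(p n + k) \equiv A(k) \cdot A(n) (mod p). -/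
section aux

variable {p : ℕ} [Fact p.Prime]

/-- Lucas' theorem, cast into `ZMod p`. -/
lemma lucas_zmod (a b : ℕ) :
    ((a.choose b : ℕ) : ZMod p) =
      ((a % p).choose (b % p) : ℕ) * ((a / p).choose (b / p) : ℕ) := by
  have := (Choose.choose_modEq_choose_mod_mul_choose_div_nat (n := a) (k := b) (p := p))
  have := (ZMod.natCast_eq_natCast_iff _ _ _).mpr this
  simpa using this

lemma sum_range_mul {M : Type*} [AddCommMonoid M] (f : ℕ → M) (a b : ℕ) :
    ∑ m ∈ Finset.range (a * b), f m =
      ∑ i ∈ Finset.range b, ∑ j ∈ Finset.range a, f (a * i + j) := by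
  induction b with
  | zero => simp
  | succ b ih =>
    rw [Nat.mul_succ, Finset.sum_range_add, ih, Finset.sum_range_succ]

lemma apery_cast (m : ℕ) :
    ((apery m : ℤ) : ZMod p) =
      ∑ j ∈ Finset.range (m + 1),
        (m.choose j : ZMod p) ^ 2 * ((m + j).choose j : ZMod p) ^ 2 := by
  unfold apery
  push_cast
  rfl

end aux

theorem lucas_apery (p : ℕ) (hp : p.Prime) (n k : ℕ) (hk : k < p) :
    (p : ℤ) ∣ apery (p * n + k) - apery k * apery n := by
  haveI : Fact p.Prime := ⟨hp⟩
  have hp0 : 0 < p := hp.pos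
  rw [← ZMod.intCast_zmod_eq_zero_iff_dvd, Int.cast_sub, Int.cast_mul, sub_eq_zero]
  -- the summand, as a function into ZMod p
  set F : ℕ → ZMod p := fun m =>
      ((p * n + k).choose m : ZMod p) ^ 2 * ((p * n + k + m).choose m : ZMod p) ^ 2
    with hF
  set g : ℕ → ZMod p := fun q => (n.choose q : ZMod p) ^ 2 * ((n + q).choose q : ZMod p) ^ 2
    with hg
  set h : ℕ → ZMod p := fun r => (k.choose r : ZMod p) ^ 2 * ((k + r).choose r : ZMod p) ^ 2
    with hh
  have hMp : (p * n + k) % p = k := by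
    rw [Nat.mul_add_mod, Nat.mod_eq_of_lt hk]
  have hMd : (p * n + k) / p = n := by
    rw [Nat.mul_add_div hp0, Nat.div_eq_of_lt hk, add_zero]
  -- key pointwise identity
  have key : ∀ q r : ℕ, r < p → F (p * q + r) = g q * h r := by
    intro q r hr
    have hrm : (p * q + r) % p = r := by rw [Nat.mul_add_mod, Nat.mod_eq_of_lt hr]
    have hrd : (p * q + r) / p = q := by rw [Nat.mul_add_div hp0, Nat.div_eq_of_lt hr, add_zero]
    have h1 : ((p * n + k).choose (p * q + r) : ZMod p) = (k.choose r : ZMod p) * (n.choose q : ZMod p) := by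
      rw [lucas_zmod, hMp, hMd, hrm, hrd]
    by_cases hc : k + r < p
    · -- no carry
      have h2 : ((p * n + k + (p * q + r)).choose (p * q + r) : ZMod p) =
          ((k + r).choose r : ZMod p) * ((n + q).choose q : ZMod p) := by
        have hE : p * n + k + (p * q + r) = p * (n + q) + (k + r) := by ring
        rw [hE, lucas_zmod]
        rw [Nat.mul_add_mod, Nat.mod_eq_of_lt hc, Nat.mul_add_div hp0, Nat.div_eq_of_lt hc,
          add_zero, hrm, hrd]
      simp only [hF, hg, hh]
      rw [h1, h2]
      ring
    · -- carry: both sides vanish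
      push_neg at hc
      have hs : k + r - p < r := by omega
      have h2 : ((p * n + k + (p * q + r)).choose (p * q + r) : ZMod p) = 0 := by
        have h6 : p + (k + r - p) = k + r := by omega
        have hE : p * n + k + (p * q + r) = p * (n + q + 1) + (k + r - p) := by
          calc p * n + k + (p * q + r) = p * (n + q) + (k + r) := by ring
            _ = p * (n + q) + (p + (k + r - p)) := by rw [h6]
            _ = p * (n + q + 1) + (k + r - p) := by ring
        have hsp : k + r - p < p := by omega
        rw [hE, lucas_zmod]
        rw [Nat.mul_add_mod, Nat.mod_eq_of_lt hsp, hrm, Nat.choose_eq_zero_of_lt hs]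
        simp
      have h3 : (((k + r).choose r : ℕ) : ZMod p) = 0 := by
        rw [lucas_zmod (k + r) r]
        have h4 : (k + r) % p = k + r - p := by
          have h7 : k + r = p + (k + r - p) := by omega
          rw [h7, Nat.add_mod_left, Nat.mod_eq_of_lt (by omega)]
          omega
        have h5 : r % p = r := Nat.mod_eq_of_lt hr
        rw [h4, h5, Nat.choose_eq_zero_of_lt hs]
        simp
      simp only [hF, hg, hh]
      rw [h2]
      simp [h3]
  -- rewrite the LHS
  rw [apery_cast, apery_cast, apery_cast]
  have hsub : Finset.range (p * n + k + 1) ⊆ Finset.range (p * (n + 1)) := by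
    intro x hx
    simp only [Finset.mem_range] at *
    have h8 : p * (n + 1) = p * n + p := by ring
    omega
  calc ∑ m ∈ Finset.range (p * n + k + 1),
        ((p * n + k).choose m : ZMod p) ^ 2 * ((p * n + k + m).choose m : ZMod p) ^ 2
      = ∑ m ∈ Finset.range (p * (n + 1)), F m := by
        refine Finset.sum_subset hsub ?_
        intro x _ hx
        simp only [Finset.mem_range, not_lt] at hx
        have h8 : p * (n + 1) = p * n + p := by ring
        have hz : (p * n + k).choose x = 0 := Nat.choose_eq_zero_of_lt (by omega)
        simp [hF, hz]
    _ = ∑ q ∈ Finset.range (n + 1), ∑ r ∈ Finset.range p, F (p * q + r) :=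
        sum_range_mul F p (n + 1)
    _ = ∑ q ∈ Finset.range (n + 1), ∑ r ∈ Finset.range p, g q * h r := by
        refine Finset.sum_congr rfl fun q _ => Finset.sum_congr rfl fun r hr => ?_
        exact key q r (Finset.mem_range.mp hr)
    _ = (∑ q ∈ Finset.range (n + 1), g q) * (∑ r ∈ Finset.range p, h r) := by
        rw [Finset.sum_mul]
        exact Finset.sum_congr rfl fun q _ => by rw [Finset.mul_sum]
    _ = (∑ q ∈ Finset.range (n + 1), g q) * (∑ r ∈ Finset.range (k + 1), h r) := by
        congr 1
        refine (Finset.sum_subset (by intro x hx; simp only [Finset.mem_range] at *; omega) ?_).symm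
        intro x _ hx
        simp only [Finset.mem_range, not_lt] at hx
        have hz : k.choose x = 0 := Nat.choose_eq_zero_of_lt (by omega)
        simp [hh, hz]
    _ = (∑ r ∈ Finset.range (k + 1), h r) * (∑ q ∈ Finset.range (n + 1), g q) := mul_comm _ _
end

section
/- Let A_D(n) = \sum_{k=0}^{n} \binom{n}{k}^2 \binom{n+k}{k} (Zagier's sporadic sequence D). Then for every prime p and all integers n \ge 0 and k with 0 \le k < p, we have A_D(p n + k) \equiv A_D(k) \cdot A_D(n) (mod p). -/
section aux

variable (p : ℕ) [Fact p.Prime]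

/-- Lucas's theorem for a two-digit base-`p` expansion. -/
lemma lucas_digits (a b m j : ℕ) (hb : b < p) (hj : j < p) :
    (((p * a + b).choose (p * m + j) : ℕ) : ZMod p)
      = (a.choose m : ZMod p) * (b.choose j : ZMod p) := by
  have hp : 0 < p := (Fact.out : p.Prime).pos
  have h := Choose.choose_modEq_choose_mod_mul_choose_div (p := p)
    (n := p * a + b) (k := p * m + j)
  have h' := (ZMod.intCast_eq_intCast_iff _ _ _).mpr h
  have hb' : (p * a + b) % p = b := by
    rw [Nat.mul_add_mod]; exact Nat.mod_eq_of_lt hb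
  have ha' : (p * a + b) / p = a := by
    rw [Nat.mul_add_div hp, Nat.div_eq_of_lt hb]; ring
  have hj' : (p * m + j) % p = j := by
    rw [Nat.mul_add_mod]; exact Nat.mod_eq_of_lt hj
  have hm' : (p * m + j) / p = m := by
    rw [Nat.mul_add_div hp, Nat.div_eq_of_lt hj]; ring
  rw [hb', ha', hj', hm'] at h'
  push_cast at h'
  rw [h']; ring

lemma carry_zero (k j : ℕ) (hk : k < p) (hj : j < p) (h : p ≤ k + j) :
    (((k + j).choose j : ℕ) : ZMod p) = 0 := by
  have h2 : k + j - p < j := by omega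
  have h3 : k + j - p < p := by omega
  have e : (k + j).choose j = (p * 1 + (k + j - p)).choose (p * 0 + j) := by
    congr 1 <;> omega
  rw [e, lucas_digits p 1 (k + j - p) 0 j h3 hj, Nat.choose_eq_zero_of_lt h2]
  simp

lemma term_eq (n k : ℕ) (hk : k < p) (m j : ℕ) (hj : j < p) :
    (((p * n + k).choose (p * m + j) : ℕ) : ZMod p) ^ 2
        * (((p * n + k) + (p * m + j)).choose (p * m + j) : ℕ)
      = ((n.choose m : ZMod p) ^ 2 * ((n + m).choose m : ℕ))
        * ((k.choose j : ZMod p) ^ 2 * ((k + j).choose j : ℕ)) := by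
  rw [lucas_digits p n k m j hk hj]
  rcases lt_or_ge (k + j) p with h | h
  · rw [show (p * n + k) + (p * m + j) = p * (n + m) + (k + j) by ring,
      lucas_digits p (n + m) (k + j) m j h hj]
    ring
  · have h2 : k + j - p < j := by omega
    have h3 : k + j - p < p := by omega
    rw [show (p * n + k) + (p * m + j) = p * (n + m + 1) + (k + j - p) by
        have : p * (n + m + 1) = p * n + p * m + p := by ring
        omega,
      lucas_digits p (n + m + 1) (k + j - p) m j h3 hj,
      Nat.choose_eq_zero_of_lt h2, carry_zero p k j hk hj h]
    push_cast
    ring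

end aux

theorem lucas_D (p : ℕ) (hp : p.Prime) (n k : ℕ) (hk : k < p) :
    (p : ℤ) ∣ aperyD (p * n + k) - aperyD k * aperyD n := by
  haveI : Fact p.Prime := ⟨hp⟩
  have hp0 : 0 < p := hp.pos
  set F : ℕ → ZMod p := fun i =>
    (((p * n + k).choose i : ℕ) : ZMod p) ^ 2 * (((p * n + k) + i).choose i : ℕ) with hF
  have key : ((aperyD (p * n + k) : ℤ) : ZMod p)
      = ((aperyD k : ℤ) : ZMod p) * ((aperyD n : ℤ) : ZMod p) := by
    unfold aperyD
    push_cast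
    have e1 : ∑ i ∈ Finset.range (p * n + k + 1), F i
        = ∑ i ∈ Finset.range (p * (n + 1)), F i := by
      apply Finset.sum_subset (Finset.range_subset_range.mpr (by nlinarith))
      intro i hi hni
      simp only [Finset.mem_range, not_lt] at hi hni
      have : p * n + k < i := by omega
      simp [hF, Nat.choose_eq_zero_of_lt this]
    have e2 : ∑ i ∈ Finset.range (p * (n + 1)), F i
        = ∑ q ∈ Finset.range (n + 1) ×ˢ Finset.range p, F (p * q.1 + q.2) := by
      apply Finset.sum_nbij' (fun i => (i / p, i % p)) (fun q => p * q.1 + q.2)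
      · intro a ha
        simp only [Finset.mem_range, Finset.mem_product] at ha ⊢
        constructor
        · exact Nat.div_lt_of_lt_mul (by omega)
        · exact Nat.mod_lt _ hp0
      · intro q hq
        simp only [Finset.mem_range, Finset.mem_product] at hq ⊢
        have := hq.1; have := hq.2; nlinarith
      · intro a _; exact Nat.div_add_mod a p
      · intro q hq
        simp only [Finset.mem_range, Finset.mem_product] at hq
        have h1 : (p * q.1 + q.2) / p = q.1 := by
          rw [Nat.mul_add_div hp0, Nat.div_eq_of_lt hq.2]; ring
        have h2 : (p * q.1 + q.2) % p = q.2 := by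
          rw [Nat.mul_add_mod]; exact Nat.mod_eq_of_lt hq.2
        exact Prod.ext h1 h2
      · intro a _; rw [Nat.div_add_mod]
    have e3 : ∑ q ∈ Finset.range (n + 1) ×ˢ Finset.range p, F (p * q.1 + q.2)
        = (∑ m ∈ Finset.range (n + 1),
            (n.choose m : ZMod p) ^ 2 * ((n + m).choose m : ℕ))
          * (∑ j ∈ Finset.range p,
            (k.choose j : ZMod p) ^ 2 * ((k + j).choose j : ℕ)) := by
      rw [Finset.sum_mul_sum, ← Finset.sum_product']
      apply Finset.sum_congr rfl
      intro q hq
      simp only [Finset.mem_range, Finset.mem_product] at hq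
      exact term_eq p n k hk q.1 q.2 hq.2
    have e4 : ∑ j ∈ Finset.range p,
          (k.choose j : ZMod p) ^ 2 * ((k + j).choose j : ℕ)
        = ∑ j ∈ Finset.range (k + 1),
          (k.choose j : ZMod p) ^ 2 * ((k + j).choose j : ℕ) := by
      symm
      apply Finset.sum_subset (Finset.range_subset_range.mpr (by omega))
      intro j hj hnj
      simp only [Finset.mem_range, not_lt] at hj hnj
      simp [Nat.choose_eq_zero_of_lt (show k < j by omega)]
    calc ∑ i ∈ Finset.range (p * n + k + 1),
          (((p * n + k).choose i : ℕ) : ZMod p) ^ 2 * (((p * n + k) + i).choose i : ℕ)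
        = ∑ i ∈ Finset.range (p * n + k + 1), F i := rfl
      _ = _ := by rw [e1, e2, e3, e4]; ring
  have h0 : ((aperyD (p * n + k) - aperyD k * aperyD n : ℤ) : ZMod p) = 0 := by
    push_cast
    rw [key]; ring
  exact (ZMod.intCast_zmod_eq_zero_iff_dvd _ p).mp h0
end

section
/- Let A_F(n) = \sum_{k=0}^{n} (-1)^k 8^{n-k} \binom{n}{k} \sum_{l=0}^{k} \binom{k}{l}^3 (Zagier's sporadic sequence F). Then for every prime p and all integers n \ge 0 and k with 0 \le k < p, we have A_F(p n + k) \equiv A_F(k) \cdot A_F(n) (mod p). -/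
open MvPolynomial Finset

noncomputable def dg (a b : ℕ) : Fin 2 →₀ ℕ := Finsupp.single 0 a + Finsupp.single 1 b

lemma dg_eq_iff {a b c d : ℕ} : dg a b = dg c d ↔ a = c ∧ b = d := by
  constructor
  · intro h
    constructor
    · have := congrArg (fun f => f 0) h; simpa [dg] using this
    · have := congrArg (fun f => f 1) h; simpa [dg] using this
  · rintro ⟨rfl, rfl⟩; rfl

lemma dg_add (a b c d : ℕ) : dg (a+c) (b+d) = dg a b + dg c d := by
  ext i; fin_cases i <;> simp [dg]

lemma single0_eq_dg (i : ℕ) : Finsupp.single (0 : Fin 2) i = dg i 0 := by simp [dg]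
lemma single1_eq_dg (j : ℕ) : Finsupp.single (1 : Fin 2) j = dg 0 j := by simp [dg]

lemma one_add_X_pow (v : Fin 2) (k : ℕ) :
    ((1 : MvPolynomial (Fin 2) ℤ) + X v) ^ k
      = ∑ i ∈ range (k+1), monomial (Finsupp.single v i) (k.choose i : ℤ) := by
  rw [add_comm, add_pow]
  refine Finset.sum_congr rfl fun i hi => ?_
  rw [one_pow, mul_one, X_pow_eq_monomial]
  rw [show ((k.choose i : ℕ) : MvPolynomial (Fin 2) ℤ) = C ((k.choose i : ℤ)) by rfl]
  rw [mul_comm, C_mul_monomial, mul_one]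

lemma one_add_XX_pow (k : ℕ) :
    ((1 : MvPolynomial (Fin 2) ℤ) + X 0 * X 1) ^ k
      = ∑ l ∈ range (k+1), monomial (dg l l) (k.choose l : ℤ) := by
  rw [add_comm, add_pow]
  refine Finset.sum_congr rfl fun l hl => ?_
  rw [one_pow, mul_one, mul_pow, X_pow_eq_monomial, X_pow_eq_monomial, monomial_mul, mul_one]
  rw [show ((k.choose l : ℕ) : MvPolynomial (Fin 2) ℤ) = C ((k.choose l : ℤ)) by rfl]
  rw [mul_comm, C_mul_monomial, mul_one]
  rfl

lemma coeff_two (k a b : ℕ) (ha : a ≤ k) (hb : b ≤ k) :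
    coeff (dg a b) (((1 + X 0 : MvPolynomial (Fin 2) ℤ)) ^ k * (1 + X 1) ^ k)
      = (k.choose a : ℤ) * (k.choose b : ℤ) := by
  rw [one_add_X_pow, one_add_X_pow, Finset.sum_mul_sum]
  simp only [monomial_mul, coeff_sum, coeff_monomial, single0_eq_dg, single1_eq_dg,
    ← dg_add, dg_eq_iff]
  simp only [Nat.add_zero, Nat.zero_add]
  rw [Finset.sum_eq_single a]
  · rw [Finset.sum_eq_single b]
    · simp
    · intro j hj hne; simp [hne]
    · intro h; exact absurd (mem_range.2 (Nat.lt_succ_of_le hb)) h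
  · intro i hi hne
    rw [Finset.sum_eq_zero]
    intro j hj; simp [hne]
  · intro h; exact absurd (mem_range.2 (Nat.lt_succ_of_le ha)) h

lemma coeff_G (k : ℕ) :
    coeff (dg k k) (((1 + X 0 : MvPolynomial (Fin 2) ℤ)) ^ k * (1 + X 1) ^ k * (1 + X 0 * X 1) ^ k)
      = ∑ l ∈ range (k+1), (k.choose l : ℤ) ^ 3 := by
  rw [one_add_XX_pow, Finset.mul_sum, coeff_sum]
  refine Finset.sum_congr rfl fun l hl => ?_
  have hlk : l ≤ k := Nat.lt_succ_iff.1 (mem_range.1 hl)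
  have hdg : dg k k = dg (k - l) (k - l) + dg l l := by
    rw [← dg_add]; congr 1 <;> omega
  rw [hdg, coeff_mul_monomial, coeff_two k _ _ (Nat.sub_le _ _) (Nat.sub_le _ _),
    Nat.choose_symm hlk]
  ring

lemma coeff_PP_pow (n : ℕ) :
    coeff (dg n n) ((C 8 * X 0 * X 1 - (1 + X 0) * (1 + X 1) * (1 + X 0 * X 1)
        : MvPolynomial (Fin 2) ℤ) ^ n)
      = ∑ k ∈ Finset.range (n + 1),
          (-1) ^ k * 8 ^ (n - k) * (n.choose k : ℤ) *
            ∑ l ∈ Finset.range (k + 1), (k.choose l : ℤ) ^ 3 := by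
  rw [sub_eq_add_neg, add_comm, add_pow, coeff_sum]
  refine Finset.sum_congr rfl fun k hk => ?_
  have hkn : k ≤ n := Nat.lt_succ_iff.1 (mem_range.1 hk)
  have h1 : ((-((1 + X 0) * (1 + X 1) * (1 + X 0 * X 1)) : MvPolynomial (Fin 2) ℤ)) ^ k
      * (C 8 * X 0 * X 1) ^ (n - k) * ((n.choose k : ℕ) : MvPolynomial (Fin 2) ℤ)
      = C ((-1) ^ k * 8 ^ (n - k) * (n.choose k : ℤ)) *
        (((1 + X 0) ^ k * (1 + X 1) ^ k * (1 + X 0 * X 1) ^ k) *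
          monomial (dg (n - k) (n - k)) 1) := by
    rw [show ((n.choose k : ℕ) : MvPolynomial (Fin 2) ℤ) = C ((n.choose k : ℤ)) from rfl]
    rw [show ((C 8 * X 0 * X 1 : MvPolynomial (Fin 2) ℤ)) ^ (n - k)
        = C ((8 : ℤ) ^ (n - k)) * monomial (dg (n - k) (n - k)) 1 by
      rw [mul_pow, mul_pow, ← C_pow, X_pow_eq_monomial, X_pow_eq_monomial, mul_assoc,
        monomial_mul, mul_one]; rfl]
    rw [neg_pow]
    rw [show ((-1 : MvPolynomial (Fin 2) ℤ) ^ k) = C ((-1 : ℤ) ^ k) by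
      rw [C_pow]; norm_num]
    simp only [C_mul, mul_pow]
    ring
  rw [h1, coeff_C_mul]
  have hdg : dg n n = dg k k + dg (n - k) (n - k) := by
    rw [← dg_add]; congr 1 <;> omega
  rw [hdg, coeff_mul_monomial, coeff_G, mul_one]

lemma expand_monomial' {R : Type*} [CommSemiring R] (p : ℕ) (d : Fin 2 →₀ ℕ) (r : R) :
    expand p (monomial d r) = monomial (p • d) r := by
  rw [expand_monomial, monomial_eq]

lemma pow_card_eq_expand (p : ℕ) [Fact p.Prime] (f : MvPolynomial (Fin 2) (ZMod p)) :
    f ^ p = expand p f := by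
  conv_lhs => rw [f.as_sum]
  conv_rhs => rw [f.as_sum]
  rw [sum_pow_char, map_sum]
  refine Finset.sum_congr rfl fun d _ => ?_
  rw [monomial_pow, ZMod.pow_card, expand_monomial']

lemma smul_dg (p a b : ℕ) : p • dg a b = dg (p * a) (p * b) := by
  ext i; fin_cases i <;> simp [dg]

lemma dg_le_dg {a b c d : ℕ} (h1 : a ≤ c) (h2 : b ≤ d) : dg a b ≤ dg c d := by
  rw [Finsupp.le_def]
  intro i; fin_cases i <;> simp [dg, h1, h2]

lemma dg_sub (a b c d : ℕ) : dg a b - dg c d = dg (a - c) (b - d) := by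
  ext i; fin_cases i <;> simp [dg, Finsupp.tsub_apply]

lemma coeff_expand_mul_key {R : Type*} [CommRing R] (p n k : ℕ) (hk : k < p)
    (A B : MvPolynomial (Fin 2) R)
    (hB : ∀ (i : Fin 2) (e : Fin 2 →₀ ℕ), coeff e B ≠ 0 → e i ≤ 2 * k) :
    coeff (dg (p*n+k) (p*n+k)) (expand p A * B)
      = coeff (dg n n) A * coeff (dg k k) B := by
  have hp : 0 < p := lt_of_le_of_lt (Nat.zero_le k) hk
  rw [show (expand p A : MvPolynomial (Fin 2) R)
      = ∑ d ∈ A.support, monomial (p • d) (coeff d A) by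
    conv_lhs => rw [A.as_sum]
    rw [map_sum]
    exact Finset.sum_congr rfl fun d _ => expand_monomial' p d _]
  rw [Finset.sum_mul, coeff_sum]
  simp only [coeff_monomial_mul']
  rw [Finset.sum_eq_single (dg n n)]
  · rw [if_pos, smul_dg, dg_sub]
    · rw [Nat.add_sub_cancel_left]
    · rw [smul_dg]
      exact dg_le_dg (Nat.le_add_right _ _) (Nat.le_add_right _ _)
  · intro d _ hne
    split_ifs with h
    · -- some coordinate of d differs from n
      obtain ⟨i, hi⟩ : ∃ i : Fin 2, d i ≠ n := by
        by_contra hc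
        push_neg at hc
        exact hne (by ext j; fin_cases j <;> simp [dg, hc 0, hc 1])
      suffices hz : coeff (dg (p*n+k) (p*n+k) - p • d) B = 0 by rw [hz, mul_zero]
      by_contra hc
      have hle := Finsupp.le_def.1 h i
      have hcoef := hB i _ hc
      rw [Finsupp.tsub_apply] at hcoef
      have hdgi : dg (p*n+k) (p*n+k) i = p*n+k := by fin_cases i <;> simp [dg]
      rw [Finsupp.smul_apply, smul_eq_mul, hdgi] at hle hcoef
      have h1 : d i < n + 1 := by
        refine Nat.lt_of_mul_lt_mul_left (a := p) ?_
        calc p * d i ≤ p * n + k := hle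
          _ < p * (n + 1) := by rw [Nat.mul_add, Nat.mul_one]; omega
      have h2 : d i < n := by omega
      have h3 : p * (d i + 1) ≤ p * n := Nat.mul_le_mul_left p h2
      rw [Nat.mul_add, Nat.mul_one] at h3
      omega
    · rfl
  · intro hns
    rw [MvPolynomial.notMem_support_iff.1 hns]
    split_ifs <;> simp

noncomputable def PP (R : Type*) [CommRing R] : MvPolynomial (Fin 2) R :=
  C 8 * X 0 * X 1 - (1 + X 0) * (1 + X 1) * (1 + X 0 * X 1)

lemma degreeOf_PP_le {R : Type*} [CommRing R] [Nontrivial R] (i : Fin 2) :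
    degreeOf i (PP R) ≤ 2 := by
  have hab : degreeOf i (X 0 : MvPolynomial (Fin 2) R)
      + degreeOf i (X 1 : MvPolynomial (Fin 2) R) ≤ 1 := by
    fin_cases i <;> simp [degreeOf_X]
  have hone : degreeOf i (1 : MvPolynomial (Fin 2) R) = 0 := by
    rw [← C_1]; exact degreeOf_C _ _
  have h0 : degreeOf i ((1 : MvPolynomial (Fin 2) R) + X 0) ≤ degreeOf i (X 0 : MvPolynomial (Fin 2) R) :=
    le_trans (degreeOf_add_le _ _ _) (by rw [hone]; simp)
  have h1 : degreeOf i ((1 : MvPolynomial (Fin 2) R) + X 1) ≤ degreeOf i (X 1 : MvPolynomial (Fin 2) R) :=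
    le_trans (degreeOf_add_le _ _ _) (by rw [hone]; simp)
  have hXX : degreeOf i (X 0 * X 1 : MvPolynomial (Fin 2) R)
      ≤ degreeOf i (X 0 : MvPolynomial (Fin 2) R) + degreeOf i (X 1 : MvPolynomial (Fin 2) R) :=
    degreeOf_mul_le _ _ _
  have h2 : degreeOf i ((1 : MvPolynomial (Fin 2) R) + X 0 * X 1)
      ≤ degreeOf i (X 0 : MvPolynomial (Fin 2) R) + degreeOf i (X 1 : MvPolynomial (Fin 2) R) :=
    le_trans (degreeOf_add_le _ _ _) (by rw [hone]; simpa using hXX)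
  have hL : degreeOf i (C 8 * X 0 * X 1 : MvPolynomial (Fin 2) R)
      ≤ degreeOf i (X 0 : MvPolynomial (Fin 2) R) + degreeOf i (X 1 : MvPolynomial (Fin 2) R) := by
    refine le_trans (degreeOf_mul_le _ _ _) ?_
    have := le_trans (degreeOf_mul_le i (C 8) (X 0)) (by rw [degreeOf_C] : degreeOf i (C (8:R)) + degreeOf i (X 0 : MvPolynomial (Fin 2) R) ≤ 0 + degreeOf i (X 0 : MvPolynomial (Fin 2) R))
    omega
  have hR : degreeOf i ((1 + X 0) * (1 + X 1) * (1 + X 0 * X 1) : MvPolynomial (Fin 2) R)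
      ≤ 2 := by
    have := degreeOf_mul_le i ((1 + X 0) * (1 + X 1) : MvPolynomial (Fin 2) R) (1 + X 0 * X 1)
    have := degreeOf_mul_le i ((1 + X 0) : MvPolynomial (Fin 2) R) (1 + X 1)
    omega
  refine le_trans (degreeOf_sub_le _ _ _) (max_le ?_ hR)
  omega

lemma coeff_PP_pow_bound {R : Type*} [CommRing R] [Nontrivial R] (k : ℕ) (i : Fin 2)
    (e : Fin 2 →₀ ℕ) (h : coeff e (PP R ^ k) ≠ 0) : e i ≤ 2 * k := by
  have he : e ∈ (PP R ^ k).support := mem_support_iff.2 h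
  have := monomial_le_degreeOf i he
  have h2 := degreeOf_pow_le i (PP R) k
  have h3 := degreeOf_PP_le (R := R) i
  have : k * degreeOf i (PP R) ≤ k * 2 := Nat.mul_le_mul_left k h3
  omega

/-- Zagier's sporadic sequence F. -/
def aperyF (n : ℕ) : ℤ :=
  ∑ k ∈ Finset.range (n + 1),
    (-1) ^ k * 8 ^ (n - k) * (n.choose k : ℤ) *
      ∑ l ∈ Finset.range (k + 1), (k.choose l : ℤ) ^ 3

lemma coeff_PP_int (n : ℕ) : coeff (dg n n) (PP ℤ ^ n) = aperyF n :=
  coeff_PP_pow n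

lemma map_PP (p : ℕ) [Fact p.Prime] :
    MvPolynomial.map (Int.castRingHom (ZMod p)) (PP ℤ) = PP (ZMod p) := by
  simp only [PP, map_sub, map_mul, map_add, map_one, MvPolynomial.map_C, MvPolynomial.map_X]
  norm_num

lemma coeff_PP_zmod (p : ℕ) [Fact p.Prime] (n : ℕ) :
    coeff (dg n n) (PP (ZMod p) ^ n) = ((aperyF n : ℤ) : ZMod p) := by
  rw [← map_PP p, ← map_pow, MvPolynomial.coeff_map, coeff_PP_int]
  rfl

theorem lucas_F (p : ℕ) (hp : p.Prime) (n k : ℕ) (hk : k < p) :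
    (p : ℤ) ∣ aperyF (p * n + k) - aperyF k * aperyF n := by
  haveI : Fact p.Prime := ⟨hp⟩
  have := (ZMod.intCast_zmod_eq_zero_iff_dvd (aperyF (p * n + k) - aperyF k * aperyF n) p).1
  apply this
  push_cast
  rw [sub_eq_zero]
  have h1 : (PP (ZMod p)) ^ (p * n + k)
      = expand p ((PP (ZMod p)) ^ n) * (PP (ZMod p)) ^ k := by
    rw [pow_add, pow_mul, pow_card_eq_expand, ← map_pow]
  have h2 := coeff_expand_mul_key p n k hk ((PP (ZMod p)) ^ n) ((PP (ZMod p)) ^ k)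
    (fun i e he => coeff_PP_pow_bound k i e he)
  rw [← h1] at h2
  rw [coeff_PP_zmod] at h2 -- careful: h2 LHS is coeff (dg (p*n+k) (p*n+k)) (PP ^ (p*n+k))
  rw [coeff_PP_zmod, coeff_PP_zmod] at h2
  rw [h2]
  ring
end

section
/- Let A_\delta(n) = \sum_{k=0}^{\lfloor n/3 \rfloor} (-1)^k 3^{n-3k} \binom{n}{3k} \binom{n+k}{n} (3k)!/(k!)^3 (the Almkvist–Zudilin numbers). Then for every prime p and all integers n \ge 0 and k with 0 \le k < p, we have A_\delta(p n + k) \equiv A_\delta(k) \cdot A_\delta(n) (mod p). -/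
/-- The Almkvist–Zudilin numbers. -/
def aperyDelta (n : ℕ) : ℤ :=
  ∑ k ∈ Finset.range (n / 3 + 1),
    (-1) ^ k * 3 ^ (n - 3 * k) * (n.choose (3 * k) : ℤ) * ((n + k).choose n : ℤ) *
      (((3 * k).factorial / k.factorial ^ 3 : ℕ) : ℤ)

open Finset MvPolynomial

namespace AZLucas

/-- exponent vector (a,b,c) -/
noncomputable def m3 (a b c : ℕ) : Fin 3 →₀ ℕ :=
  Finsupp.single 0 a + Finsupp.single 1 b + Finsupp.single 2 c

lemma m3_eq_iff {a b c a' b' c' : ℕ} :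
    m3 a b c = m3 a' b' c' ↔ a = a' ∧ b = b' ∧ c = c' := by
  constructor
  · intro h
    refine ⟨?_, ?_, ?_⟩
    · have := congrArg (fun f => f 0) h; simpa [m3, Finsupp.single_apply] using this
    · have := congrArg (fun f => f 1) h; simpa [m3, Finsupp.single_apply] using this
    · have := congrArg (fun f => f 2) h; simpa [m3, Finsupp.single_apply] using this
  · rintro ⟨rfl, rfl, rfl⟩; rfl

lemma m3_smul (p a b c : ℕ) : p • m3 a b c = m3 (p*a) (p*b) (p*c) := by
  simp [m3, smul_add, Finsupp.smul_single]

lemma m3_add (a b c a' b' c' : ℕ) :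
    m3 a b c + m3 a' b' c' = m3 (a + a') (b + b') (c + c') := by
  simp only [m3, Finsupp.single_add]; abel

lemma m3_diag_apply (a : ℕ) (i : Fin 3) : m3 a a a i = a := by
  fin_cases i <;> simp [m3, Finsupp.single_apply]

/-- The polynomial whose powers' diagonal coefficients are the AZ numbers. -/
noncomputable def P : MvPolynomial (Fin 3) ℤ :=
  X 2 * (1 + X 2) * (X 0 * X 1 * (X 1 + 3) - 1) + X 0 ^ 2 * X 1 * (1 + X 2) ^ 2

lemma hW (m : ℕ) : ((1 + X 2 : MvPolynomial (Fin 3) ℤ)) ^ m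
    = ∑ i ∈ range (m+1), monomial (m3 0 0 i) (m.choose i : ℤ) := by
  rw [add_comm, add_pow]
  refine Finset.sum_congr rfl fun i _ => ?_
  rw [← C_eq_coe_nat, X_pow_eq_monomial, one_pow, mul_one, mul_comm, C_mul_monomial, mul_one]
  congr 1
  simp [m3]

lemma hG (e : ℕ) : ((X 0 * X 1 * (X 1 + 3) : MvPolynomial (Fin 3) ℤ)) ^ e
    = ∑ u ∈ range (e+1), monomial (m3 e (e+u) 0) ((e.choose u : ℤ) * 3 ^ (e-u)) := by
  have h3 : ((3 : MvPolynomial (Fin 3) ℤ)) = C 3 := by simp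
  rw [mul_pow, mul_pow, add_pow, Finset.mul_sum]
  refine Finset.sum_congr rfl fun u _ => ?_
  rw [h3, ← C_pow, ← C_eq_coe_nat]
  simp only [X_pow_eq_monomial, C_apply, monomial_mul]
  congr 1
  · simp only [m3, Finsupp.single_add, Finsupp.single_zero]
    abel
  · ring

lemma hS (r : ℕ) : ((X 0 * X 1 * (X 1 + 3) - 1 : MvPolynomial (Fin 3) ℤ)) ^ r
    = ∑ e ∈ range (r+1), ∑ u ∈ range (e+1),
        monomial (m3 e (e+u) 0) ((-1:ℤ)^(r-e) * (r.choose e) * (e.choose u) * 3 ^ (e-u)) := by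
  rw [sub_eq_add_neg, add_pow]
  refine Finset.sum_congr rfl fun e _ => ?_
  rw [hG, Finset.sum_mul, Finset.sum_mul]
  refine Finset.sum_congr rfl fun u _ => ?_
  have hneg : ((-1 : MvPolynomial (Fin 3) ℤ)) ^ (r - e) = C ((-1:ℤ)^(r-e)) := by simp
  rw [hneg, ← C_eq_coe_nat]
  simp only [C_apply, monomial_mul]
  congr 1
  · simp
  · ring

lemma expandP (n : ℕ) : P ^ n
    = ∑ r ∈ range (n+1), ∑ i ∈ range (2*n - r + 1), ∑ e ∈ range (r+1), ∑ u ∈ range (e+1),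
        monomial (m3 (2*(n-r)+e) ((n-r)+(e+u)) (r+i))
          ((-1:ℤ)^(r-e) * 3^(e-u) *
            ((n.choose r : ℤ) * ((2*n-r).choose i) * (r.choose e) * (e.choose u))) := by
  rw [P, add_pow]
  refine Finset.sum_congr rfl fun r hr => ?_
  have hr' : r ≤ n := by simpa using Nat.lt_succ_iff.mp (Finset.mem_range.mp hr)
  have hcomb :
      (X 2 * (1 + X 2) * (X 0 * X 1 * (X 1 + 3) - 1)) ^ r *
        (X 0 ^ 2 * X 1 * (1 + X 2) ^ 2) ^ (n - r) * (↑(n.choose r) : MvPolynomial (Fin 3) ℤ)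
      = (X 2 ^ r * X 0 ^ (2*(n-r)) * X 1 ^ (n-r) * C (n.choose r : ℤ)) *
          ((X 0 * X 1 * (X 1 + 3) - 1) ^ r * (1 + X 2) ^ (r + 2*(n-r))) := by
    rw [← C_eq_coe_nat]
    simp only [mul_pow, ← pow_mul]
    ring
  rw [hcomb, show r + 2*(n-r) = 2*n - r by omega, hW, hS]
  simp only [Finset.mul_sum, Finset.sum_mul]
  refine Finset.sum_congr rfl fun i hi => ?_
  refine Finset.sum_congr rfl fun e he => ?_
  refine Finset.sum_congr rfl fun u hu => ?_
  simp only [X_pow_eq_monomial, C_apply, monomial_mul]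
  rw [MvPolynomial.monomial_eq_monomial_iff]
  refine Or.inl ⟨?_, ?_⟩
  · apply Finsupp.ext; intro j
    fin_cases j <;> simp [m3, Finsupp.single_apply]
  · ring

lemma trinomial_fac (k : ℕ) :
    (3*k).factorial / k.factorial ^ 3 = (3*k).choose k * (2*k).choose k := by
  have h1 : (2*k).choose k * (k.factorial * k.factorial) = (2*k).factorial := by
    have h := Nat.choose_mul_factorial_mul_factorial (show k ≤ 2*k by omega)
    rw [show 2*k-k = k by omega] at h
    rw [← mul_assoc]; exact h
  have h2 : (3*k).choose k * (k.factorial * (2*k).factorial) = (3*k).factorial := by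
    have h := Nat.choose_mul_factorial_mul_factorial (show k ≤ 3*k by omega)
    rw [show 3*k-k = 2*k by omega] at h
    rw [← mul_assoc]; exact h
  have key : (3*k).factorial = (3*k).choose k * (2*k).choose k * k.factorial ^ 3 := by
    rw [← h2, ← h1]; ring
  rw [key, Nat.mul_div_cancel _ (by positivity)]

lemma nat_id {n k : ℕ} (h : 3*k ≤ n) :
    n.choose (3*k) * ((3*k).factorial / k.factorial ^ 3)
      = n.choose k * ((n-k).choose k) * ((n-2*k).choose k) := by
  rw [trinomial_fac]
  apply Nat.eq_of_mul_eq_mul_right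
    (show 0 < k.factorial * (k.factorial * (k.factorial * (n-3*k).factorial)) by positivity)
  have hA : (2*k).choose k * (k.factorial * k.factorial) = (2*k).factorial := by
    have h2 := Nat.choose_mul_factorial_mul_factorial (show k ≤ 2*k by omega)
    rw [show 2*k-k = k by omega] at h2; rw [← mul_assoc]; exact h2
  have hB : (3*k).choose k * (k.factorial * (2*k).factorial) = (3*k).factorial := by
    have h2 := Nat.choose_mul_factorial_mul_factorial (show k ≤ 3*k by omega)
    rw [show 3*k-k = 2*k by omega] at h2; rw [← mul_assoc]; exact h2
  have hC : n.choose (3*k) * ((3*k).factorial * (n-3*k).factorial) = n.factorial := by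
    have h2 := Nat.choose_mul_factorial_mul_factorial h
    rw [← mul_assoc]; exact h2
  have hD : n.choose k * (k.factorial * (n-k).factorial) = n.factorial := by
    have h2 := Nat.choose_mul_factorial_mul_factorial (show k ≤ n by omega)
    rw [← mul_assoc]; exact h2
  have hE : (n-k).choose k * (k.factorial * (n-2*k).factorial) = (n-k).factorial := by
    have h2 := Nat.choose_mul_factorial_mul_factorial (show k ≤ n-k by omega)
    rw [show n-k-k = n-2*k by omega] at h2; rw [← mul_assoc]; exact h2
  have hF : (n-2*k).choose k * (k.factorial * (n-3*k).factorial) = (n-2*k).factorial := by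
    have h2 := Nat.choose_mul_factorial_mul_factorial (show k ≤ n-2*k by omega)
    rw [show n-2*k-k = n-3*k by omega] at h2; rw [← mul_assoc]; exact h2
  calc n.choose (3*k) * ((3*k).choose k * (2*k).choose k) *
        (k.factorial * (k.factorial * (k.factorial * (n-3*k).factorial)))
      = n.choose (3*k) * (((3*k).choose k * (k.factorial * ((2*k).choose k *
          (k.factorial * k.factorial)))) * (n-3*k).factorial) := by ring
    _ = n.factorial := by rw [hA, hB, hC]
    _ = n.choose k * (k.factorial * ((n-k).choose k * (k.factorial * ((n-2*k).choose k *
          (k.factorial * (n-3*k).factorial))))) := by rw [hF, hE, hD]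
    _ = n.choose k * (n-k).choose k * (n-2*k).choose k *
        (k.factorial * (k.factorial * (k.factorial * (n-3*k).factorial))) := by ring

/-- The key combinatorial identity. -/
lemma coeffP (n : ℕ) : coeff (m3 n n n) (P ^ n) = aperyDelta n := by
  rw [expandP]
  simp only [coeff_sum, coeff_monomial, m3_eq_iff]
  rw [← Finset.sum_range_reflect]
  simp only [Nat.add_sub_cancel]
  have main : ∀ j ∈ range (n+1),
      (∑ i ∈ range (2*n - (n - j) + 1), ∑ e ∈ range ((n-j)+1), ∑ u ∈ range (e+1),
        if 2*(n - (n-j)) + e = n ∧ (n - (n-j)) + (e+u) = n ∧ (n-j) + i = n then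
          (-1:ℤ)^((n-j)-e) * 3^(e-u) *
            ((n.choose (n-j) : ℤ) * ((2*n-(n-j)).choose i) * ((n-j).choose e) * (e.choose u))
        else 0)
      = if j ∈ range (n/3+1) then
          (-1:ℤ)^j * 3^(n-3*j) * (n.choose (3*j) : ℤ) * ((n+j).choose n : ℤ) *
            (((3*j).factorial / j.factorial ^ 3 : ℕ) : ℤ)
        else 0 := by
    intro j hj
    have hjn : j ≤ n := by simpa using Nat.lt_succ_iff.mp (mem_range.mp hj)
    by_cases h3 : 3*j ≤ n
    · rw [Finset.sum_eq_single j]; rotate_left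
      · intro b hb hbj
        refine Finset.sum_eq_zero fun e he => Finset.sum_eq_zero fun u hu => if_neg ?_
        rintro ⟨-, -, h⟩; omega
      · intro hcon; exact absurd (mem_range.mpr (by omega)) hcon
      rw [Finset.sum_eq_single (n - 2*j)]; rotate_left
      · intro b hb hbj
        refine Finset.sum_eq_zero fun u hu => if_neg ?_
        rintro ⟨h, -, -⟩; omega
      · intro hcon; exact absurd (mem_range.mpr (by omega)) hcon
      rw [Finset.sum_eq_single j]; rotate_left
      · intro b hb hbj
        refine if_neg ?_
        rintro ⟨-, h, -⟩; omega
      · intro hcon; exact absurd (mem_range.mpr (by omega)) hcon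
      rw [if_pos ⟨by omega, by omega, by omega⟩, if_pos (mem_range.mpr (by omega))]
      rw [show (n-j)-(n-2*j) = j by omega, show (n-2*j)-j = n-3*j by omega,
        show 2*n-(n-j) = n+j by omega, Nat.choose_symm hjn]
      have hs1 : (n+j).choose j = (n+j).choose n := by
        rw [← Nat.choose_symm (by omega : n ≤ n+j), show n+j-n = j by omega]
      have hs2 : (n-j).choose (n-2*j) = (n-j).choose j := by
        rw [show n-2*j = (n-j)-j by omega, Nat.choose_symm (by omega : j ≤ n-j)]
      rw [hs1, hs2]
      have key : ((n.choose j : ℤ)) * ((n-j).choose j : ℤ) * ((n-2*j).choose j : ℤ)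
          = (n.choose (3*j) : ℤ) * (((3*j).factorial / j.factorial^3 : ℕ) : ℤ) := by
        exact_mod_cast congrArg (Nat.cast : ℕ → ℤ) (nat_id h3).symm
      linear_combination ((-1:ℤ)^j * 3^(n-3*j) * ((n+j).choose n : ℤ)) * key
    · rw [if_neg (fun hcon => h3 (by simp only [mem_range] at hcon; omega))]
      refine Finset.sum_eq_zero fun i hi => Finset.sum_eq_zero fun e he =>
        Finset.sum_eq_zero fun u hu => if_neg ?_
      simp only [mem_range] at he hu
      rintro ⟨h1, h2, -⟩; omega
  rw [Finset.sum_congr rfl main]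
  rw [← Finset.sum_subset (show range (n/3+1) ⊆ range (n+1) by
        intro x hx; simp only [mem_range] at *; omega)
      (fun x _ hnx => if_neg hnx)]
  exact Finset.sum_congr rfl fun j hj => if_pos hj

lemma frob {p : ℕ} [Fact p.Prime] (f : MvPolynomial (Fin 3) (ZMod p)) :
    f ^ p = expand p f := by
  induction f using MvPolynomial.induction_on with
  | C a => rw [expand_C, ← C_pow, ZMod.pow_card]
  | add f g hf hg => rw [map_add, ← hf, ← hg, add_pow_char f g p]
  | mul_X f i hf => rw [map_mul, mul_pow, hf, expand_X]

lemma expand_monomial' {R : Type*} [CommRing R] (p : ℕ) (hp : p ≠ 0) (d : Fin 3 →₀ ℕ) (r : R) :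
    expand p (monomial d r) = monomial (p • d) r := by
  rw [expand_monomial]

lemma smul_cancel {p : ℕ} (hp : p ≠ 0) {d c : Fin 3 →₀ ℕ} (h : p • d = p • c) : d = c := by
  apply Finsupp.ext; intro i
  have := congrArg (fun f => f i) h
  simp only [Finsupp.smul_apply, smul_eq_mul] at this
  exact Nat.eq_of_mul_eq_mul_left (Nat.pos_of_ne_zero hp) this

lemma coeff_expand_smul {R : Type*} [CommRing R] {p : ℕ} (hp : p ≠ 0)
    (f : MvPolynomial (Fin 3) R) (c : Fin 3 →₀ ℕ) :
    coeff (p • c) (expand p f) = coeff c f := by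
  conv_lhs => rw [f.as_sum]
  rw [map_sum]
  simp only [expand_monomial' p hp, coeff_sum, coeff_monomial]
  rw [Finset.sum_congr rfl (fun d _ => show (if p • d = p • c then coeff d f else 0)
      = if d = c then coeff d f else 0 from if_congr ⟨smul_cancel hp, fun h => by rw [h]⟩ rfl rfl)]
  rw [Finset.sum_ite_eq' f.support c (fun d => coeff d f)]
  by_cases hc : c ∈ f.support
  · rw [if_pos hc]
  · rw [if_neg hc]; exact (MvPolynomial.notMem_support_iff.mp hc).symm

lemma coeff_expand_ne {R : Type*} [CommRing R] {p : ℕ} (hp : p ≠ 0)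
    (f : MvPolynomial (Fin 3) R) (u : Fin 3 →₀ ℕ) (h : ¬ ∀ i, p ∣ u i) :
    coeff u (expand p f) = 0 := by
  conv_lhs => rw [f.as_sum]
  rw [map_sum]
  simp only [expand_monomial' p hp, coeff_sum, coeff_monomial]
  refine Finset.sum_eq_zero fun d _ => if_neg fun hc => h fun i => ?_
  have := congrArg (fun f => f i) hc
  simp only [Finsupp.smul_apply, smul_eq_mul] at this
  exact ⟨d i, this.symm⟩

lemma coeff_P_pow_bound (m : ℕ) (c : Fin 3 →₀ ℕ) (h : coeff c (P ^ m) ≠ 0) :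
    c 0 ≤ 2*m ∧ c 1 ≤ 2*m ∧ c 2 ≤ 2*m := by
  by_contra hcon
  apply h
  rw [expandP]
  simp only [coeff_sum, coeff_monomial]
  refine Finset.sum_eq_zero fun r hr => Finset.sum_eq_zero fun i hi =>
    Finset.sum_eq_zero fun e he => Finset.sum_eq_zero fun u hu => if_neg fun heq => hcon ?_
  simp only [mem_range] at hr hi he hu
  have h0 : 2*(m-r)+e = c 0 := by
    have := congrArg (fun f => f (0 : Fin 3)) heq
    simpa [m3, Finsupp.single_apply] using this
  have h1 : (m-r)+(e+u) = c 1 := by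
    have := congrArg (fun f => f (1 : Fin 3)) heq
    simpa [m3, Finsupp.single_apply] using this
  have h2 : r+i = c 2 := by
    have := congrArg (fun f => f (2 : Fin 3)) heq
    simpa [m3, Finsupp.single_apply] using this
  refine ⟨by omega, by omega, by omega⟩

end AZLucas

open AZLucas in
theorem lucas_delta (p : ℕ) (hp : p.Prime) (n k : ℕ) (hk : k < p) :
    (p : ℤ) ∣ aperyDelta (p * n + k) - aperyDelta k * aperyDelta n := by
  haveI : Fact p.Prime := ⟨hp⟩
  have hp0 : p ≠ 0 := hp.ne_zero
  set N := p * n + k with hN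
  set φ : MvPolynomial (Fin 3) (ZMod p) := MvPolynomial.map (Int.castRingHom (ZMod p)) P with hφ
  have hcoeff : ∀ (m : ℕ) (c : Fin 3 →₀ ℕ),
      coeff c (φ ^ m) = ((coeff c (P ^ m) : ℤ) : ZMod p) := by
    intro m c
    rw [hφ, ← map_pow, coeff_map]
    rfl
  have key : coeff (m3 N N N) (φ ^ N) = coeff (m3 n n n) (φ ^ n) * coeff (m3 k k k) (φ ^ k) := by
    have h1 : φ ^ N = expand p (φ ^ n) * φ ^ k := by
      rw [hN, pow_add, pow_mul, frob, ← map_pow]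
    rw [h1, coeff_mul]
    rw [Finset.sum_eq_single ((p • m3 n n n, m3 k k k) : (Fin 3 →₀ ℕ) × (Fin 3 →₀ ℕ))]
    · rw [coeff_expand_smul hp0]
    · intro b hb hbne
      by_cases hv : coeff b.2 (φ ^ k) = 0
      · rw [hv, mul_zero]
      by_cases hu : coeff b.1 (expand p (φ ^ n)) = 0
      · rw [hu, zero_mul]
      exfalso; apply hbne
      have hvZ : coeff b.2 (P ^ k) ≠ 0 := by
        intro h0
        apply hv
        rw [hcoeff, h0, Int.cast_zero]
      have hvb := coeff_P_pow_bound k b.2 hvZ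
      have hub : ∀ i, p ∣ b.1 i := by
        by_contra hcontra
        exact hu (coeff_expand_ne hp0 _ _ hcontra)
      have hsum := Finset.HasAntidiagonal.mem_antidiagonal.mp hb
      have happ : ∀ i, b.1 i + b.2 i = N := by
        intro i
        have := congrArg (fun f => f i) hsum
        simpa [Finsupp.add_apply, m3_diag_apply] using this
      have hfix : ∀ i, b.2 i = k ∧ b.1 i = p*n := by
        intro i
        obtain ⟨t, ht⟩ := hub i
        have e1 := happ i
        have e3 : b.2 i ≤ 2*k := by fin_cases i; exacts [hvb.1, hvb.2.1, hvb.2.2]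
        have htn : t = n := by
          rcases Nat.lt_trichotomy t n with h | h | h
          · have h1 : p*(t+1) ≤ p*n := Nat.mul_le_mul_left p h
            rw [Nat.mul_succ] at h1
            omega
          · exact h
          · have h1 : p*(n+1) ≤ p*t := Nat.mul_le_mul_left p h
            rw [Nat.mul_succ] at h1
            omega
        subst htn
        constructor <;> omega
      have hb2 : b.2 = m3 k k k := by
        apply Finsupp.ext; intro i
        rw [m3_diag_apply]
        exact (hfix i).1
      have hb1 : b.1 = p • m3 n n n := by
        apply Finsupp.ext; intro i
        rw [Finsupp.smul_apply, m3_diag_apply, smul_eq_mul]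
        exact (hfix i).2
      exact Prod.ext hb1 hb2
    · intro habs
      exfalso
      apply habs
      rw [Finset.HasAntidiagonal.mem_antidiagonal, m3_smul, m3_add, hN]
  have hZ : ((aperyDelta N : ℤ) : ZMod p)
      = ((aperyDelta n : ℤ) : ZMod p) * ((aperyDelta k : ℤ) : ZMod p) := by
    have h1 := hcoeff N (m3 N N N)
    have h2 := hcoeff n (m3 n n n)
    have h3 := hcoeff k (m3 k k k)
    rw [coeffP] at h1 h2 h3
    rw [← h1, ← h2, ← h3, key]
  rw [← ZMod.intCast_zmod_eq_zero_iff_dvd]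
  push_cast
  rw [hZ]
  ring
end

section
/- Let A(n) = \sum_{k=0}^{n} \binom{n}{k}^2 \binom{n+k}{k}^2 (the Apéry numbers). Then for every prime p and every nonnegative integer n with base-p digit expansion n = n_0 + n_1 p + \cdots + n_r p^r (so 0 \le n_i < p for each i), we have A(n) \equiv A(n_0) A(n_1) \cdots A(n_r) (mod p). -/
section Key

variable {p : ℕ} [Fact p.Prime]

/-- Cast version of Lucas's theorem for one digit. -/
lemma cast_choose_lucas (n k : ℕ) :
    ((n.choose k : ℕ) : ZMod p) =
      ((n % p).choose (k % p) : ZMod p) * ((n / p).choose (k / p) : ZMod p) := by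
  have h := Choose.choose_modEq_choose_mod_mul_choose_div (p := p) (n := n) (k := k)
  have := (ZMod.intCast_eq_intCast_iff _ _ _).mpr h
  push_cast at this ⊢
  exact this

lemma cast_apery (n : ℕ) :
    ((apery n : ℤ) : ZMod p) =
      ∑ k ∈ Finset.range (n + 1),
        (n.choose k : ZMod p) ^ 2 * ((n + k).choose k : ZMod p) ^ 2 := by
  rw [apery]; push_cast; rfl

lemma apery_key (n₀ m : ℕ) (h : n₀ < p) :
    ((apery (n₀ + p * m) : ℤ) : ZMod p) =
      ((apery n₀ : ℤ) : ZMod p) * ((apery m : ℤ) : ZMod p) := by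
  have hp2 : 0 < p := (Fact.out : p.Prime).pos
  have hpm : p * (m + 1) = p * m + p := by ring
  set n := n₀ + p * m with hn
  set f : ℕ → ZMod p := fun k => (n.choose k : ZMod p) ^ 2 * ((n + k).choose k : ZMod p) ^ 2
    with hf
  set t : ℕ → ℕ → ZMod p :=
    fun a b => (a.choose b : ZMod p) ^ 2 * ((a + b).choose b : ZMod p) ^ 2 with ht
  -- extend the sum
  have h1 : ((apery n : ℤ) : ZMod p) = ∑ k ∈ Finset.range (p * (m + 1)), f k := by
    rw [cast_apery]
    apply Finset.sum_subset
    · apply Finset.range_subset_range.mpr; omega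
    · intro k _ hk
      simp only [Finset.mem_range, not_lt] at hk
      have hz : n.choose k = 0 := Nat.choose_eq_zero_of_lt (by omega)
      simp [hf, hz]
  -- double sum
  have h2 : ∑ k ∈ Finset.range (p * (m + 1)), f k =
      ∑ q ∈ Finset.range (m + 1) ×ˢ Finset.range p, f (q.2 + p * q.1) := by
    refine Finset.sum_nbij' (fun k => (k / p, k % p)) (fun q => q.2 + p * q.1)
      ?_ ?_ ?_ ?_ ?_
    · intro k hk
      simp only [Finset.mem_range] at hk
      simp only [Finset.mem_product, Finset.mem_range]
      refine ⟨?_, Nat.mod_lt _ hp2⟩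
      rw [Nat.div_lt_iff_lt_mul hp2]
      have : (m + 1) * p = p * (m + 1) := by ring
      omega
    · intro q hq
      simp only [Finset.mem_product, Finset.mem_range] at hq
      simp only [Finset.mem_range]
      have h1 := hq.1; have h2 := hq.2
      have : p * q.1 ≤ p * m := Nat.mul_le_mul_left p (by omega)
      omega
    · intro k _
      show k % p + p * (k / p) = k
      exact Nat.mod_add_div k p
    · intro q hq
      simp only [Finset.mem_product, Finset.mem_range] at hq
      have e1 : (q.2 + p * q.1) / p = q.1 := by
        rw [Nat.add_mul_div_left _ _ hp2, Nat.div_eq_of_lt hq.2]; omega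
      have e2 : (q.2 + p * q.1) % p = q.2 := by
        rw [Nat.add_mul_mod_self_left, Nat.mod_eq_of_lt hq.2]
      show ((q.2 + p * q.1) / p, (q.2 + p * q.1) % p) = q
      rw [e1, e2]
    · intro k _
      show f k = f (k % p + p * (k / p))
      rw [Nat.mod_add_div]
  -- pointwise evaluation
  have h3 : ∀ q ∈ Finset.range (m + 1) ×ˢ Finset.range p,
      f (q.2 + p * q.1) = t n₀ q.2 * t m q.1 := by
    rintro ⟨k₁, k₀⟩ hq
    simp only [Finset.mem_product, Finset.mem_range] at hq
    obtain ⟨hk₁, hk₀⟩ := hq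
    set k := k₀ + p * k₁ with hk
    have hknp : k % p = k₀ := by
      rw [hk, Nat.add_mul_mod_self_left, Nat.mod_eq_of_lt hk₀]
    have hkdp : k / p = k₁ := by
      rw [hk, Nat.add_mul_div_left _ _ hp2, Nat.div_eq_of_lt hk₀]; omega
    have hnnp : n % p = n₀ := by
      rw [hn, Nat.add_mul_mod_self_left, Nat.mod_eq_of_lt h]
    have hndp : n / p = m := by
      rw [hn, Nat.add_mul_div_left _ _ hp2, Nat.div_eq_of_lt h]; omega
    have hc1 : (n.choose k : ZMod p) = (n₀.choose k₀ : ZMod p) * (m.choose k₁ : ZMod p) := by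
      rw [cast_choose_lucas, hknp, hkdp, hnnp, hndp]
    have hsplit : n + k = (n₀ + k₀) + p * (m + k₁) := by rw [hn, hk]; ring
    by_cases hcar : n₀ + k₀ < p
    · -- no carry
      have hnk : (n + k) % p = n₀ + k₀ := by
        rw [hsplit, Nat.add_mul_mod_self_left, Nat.mod_eq_of_lt hcar]
      have hnkd : (n + k) / p = m + k₁ := by
        rw [hsplit, Nat.add_mul_div_left _ _ hp2, Nat.div_eq_of_lt hcar]; omega
      have hc2 : ((n + k).choose k : ZMod p) =
          ((n₀ + k₀).choose k₀ : ZMod p) * ((m + k₁).choose k₁ : ZMod p) := by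
        rw [cast_choose_lucas, hknp, hkdp, hnk, hnkd]
      show (n.choose k : ZMod p) ^ 2 * ((n + k).choose k : ZMod p) ^ 2 = _
      rw [hc1, hc2]
      show _ = ((n₀.choose k₀ : ZMod p) ^ 2 * ((n₀ + k₀).choose k₀ : ZMod p) ^ 2) *
        ((m.choose k₁ : ZMod p) ^ 2 * ((m + k₁).choose k₁ : ZMod p) ^ 2)
      ring
    · -- carry: both sides are zero
      push_neg at hcar
      have hmod : (n₀ + k₀) % p = n₀ + k₀ - p := by
        rw [Nat.mod_eq_sub_mod hcar, Nat.mod_eq_of_lt (by omega)]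
      have hzero : ((n₀ + k₀) % p).choose k₀ = 0 := by
        apply Nat.choose_eq_zero_of_lt; omega
      have hL : ((n + k).choose k : ZMod p) = 0 := by
        rw [cast_choose_lucas, hknp]
        have : (n + k) % p = (n₀ + k₀) % p := by
          rw [hsplit, Nat.add_mul_mod_self_left]
        rw [this, hzero]; simp
      have hR : ((n₀ + k₀).choose k₀ : ZMod p) = 0 := by
        rw [cast_choose_lucas (n₀ + k₀) k₀, Nat.mod_eq_of_lt hk₀, hzero]; simp
      show (n.choose k : ZMod p) ^ 2 * ((n + k).choose k : ZMod p) ^ 2 =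
        ((n₀.choose k₀ : ZMod p) ^ 2 * ((n₀ + k₀).choose k₀ : ZMod p) ^ 2) *
        ((m.choose k₁ : ZMod p) ^ 2 * ((m + k₁).choose k₁ : ZMod p) ^ 2)
      rw [hL, hR]; ring
  rw [h1, h2, Finset.sum_congr rfl h3]
  have h4 : ∑ q ∈ Finset.range (m + 1) ×ˢ Finset.range p, t n₀ q.2 * t m q.1 =
      (∑ k₀ ∈ Finset.range p, t n₀ k₀) * (∑ k₁ ∈ Finset.range (m + 1), t m k₁) := by
    rw [Finset.sum_product, Finset.sum_comm, Finset.sum_mul_sum]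
  rw [h4]
  have h5 : ∑ k₀ ∈ Finset.range p, t n₀ k₀ = ((apery n₀ : ℤ) : ZMod p) := by
    rw [cast_apery]
    symm
    apply Finset.sum_subset
    · apply Finset.range_subset_range.mpr; omega
    · intro k _ hk
      simp only [Finset.mem_range, not_lt] at hk
      have hz : n₀.choose k = 0 := Nat.choose_eq_zero_of_lt (by omega)
      simp [ht, hz]
  rw [h5]
  congr 1
  rw [cast_apery]

end Key

lemma apery_digits_aux (p : ℕ) [Fact p.Prime] (n : ℕ) :
    ((apery n : ℤ) : ZMod p) =
      ((Nat.digits p n).map fun d => ((apery d : ℤ) : ZMod p)).prod := by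
  induction n using Nat.strong_induction_on with
  | _ n ih =>
    rcases Nat.eq_zero_or_pos n with rfl | hn
    · simp [apery]
    · have hp := (Fact.out : p.Prime)
      rw [Nat.digits_def' hp.one_lt hn, List.map_cons, List.prod_cons]
      have key := apery_key (p := p) (n % p) (n / p) (Nat.mod_lt _ hp.pos)
      rw [Nat.mod_add_div n p] at key
      rw [key, ih (n / p) (Nat.div_lt_self hn hp.one_lt)]

theorem lucas_apery_digits (p : ℕ) (hp : p.Prime) (n : ℕ) :
    (p : ℤ) ∣ apery n - ((Nat.digits p n).map fun d => apery d).prod := by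
  haveI : Fact p.Prime := ⟨hp⟩
  rw [← ZMod.intCast_zmod_eq_zero_iff_dvd]
  push_cast
  rw [sub_eq_zero, List.map_map]
  exact apery_digits_aux p n
end

section
/- For every prime p, all nonnegative integers n and k with p \nmid k, and all integers r, s with 1 \le s \le r, the prime power p^{r-s} divides the binomial coefficient \binom{p^r n}{p^s k}. -/
theorem binomial_prime_power_dvd (p : ℕ) (hp : p.Prime) (n k : ℕ) (hk : ¬ p ∣ k)
    (r s : ℕ) (hs : 1 ≤ s) (hsr : s ≤ r) :
    p ^ (r - s) ∣ (p ^ r * n).choose (p ^ s * k) := by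
  have hk0 : 0 < k := Nat.pos_of_ne_zero (fun h => hk (h ▸ dvd_zero p))
  have hp0 : 0 < p := hp.pos
  have hK : 0 < p ^ s * k := Nat.mul_pos (pow_pos hp0 s) hk0
  set N := p ^ r * n with hN
  set K := p ^ s * k with hKdef
  -- key identity: K * choose N K = N * choose (N-1) (K-1)
  have key : K * N.choose K = N * (N - 1).choose (K - 1) := by
    rcases Nat.eq_zero_or_pos N with h0 | hNpos
    · rw [h0]
      rcases Nat.eq_zero_or_pos K with h1 | h2
      · omega
      · rw [Nat.choose_eq_zero_of_lt h2]; ring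
    · have := Nat.add_one_mul_choose_eq (N - 1) (K - 1)
      simp only [Nat.succ_eq_add_one, Nat.sub_add_cancel hNpos, Nat.sub_add_cancel hK] at this
      linarith [this]
  have hdvd : p ^ r ∣ K * N.choose K := by
    rw [key]; exact Dvd.dvd.mul_right (Dvd.intro n rfl) _
  -- p^r = p^s * p^(r-s)
  have hsplit : p ^ r = p ^ s * p ^ (r - s) := by
    rw [← pow_add]; congr 1; omega
  have hdvd2 : p ^ (r - s) ∣ k * N.choose K := by
    have : p ^ s * p ^ (r - s) ∣ p ^ s * (k * N.choose K) := by
      rw [← hsplit, ← mul_assoc, ← hKdef]; exact hdvd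
    exact (mul_dvd_mul_iff_left (pow_pos hp0 s).ne').mp this
  have hcop : Nat.Coprime (p ^ (r - s)) k :=
    Nat.Coprime.pow_left _ ((Nat.Prime.coprime_iff_not_dvd hp).mpr hk)
  exact hcop.dvd_of_dvd_mul_left hdvd2
end

section
/- Let p \ge 3 be a prime, and let n, r be positive integers. Let (a, b, c, d, e) \in U(p^r n), where U(N) is the set of tuples of five triples of nonnegative integers (a, b, c, d, e), each triple summing to N, with a_i + b_i + c_i + d_i + 2 e_i = 2N for each i \in \{1, 2, 3\}. If p does not divide all 15 components of (a, b, c, d, e), then p^{2r} divides B(a,b,c,d,e) = (-1)^{a_1 + b_2 + c_3} \binom{p^r n}{a_1, a_2, a_3} \binom{p^r n}{b_1, b_2, b_3} \binom{p^r n}{c_1, c_2, c_3} \binom{p^r n}{d_1, d_2, d_3} \binom{p^r n}{e_1, e_2, e_3}. -/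
/-- The trinomial (multinomial) coefficient `(a+b+c)! / (a! b! c!)`. -/
def trinom (a b c : ℕ) : ℕ :=
  (a + b + c).factorial / (a.factorial * b.factorial * c.factorial)

lemma trinom_eq (a b c : ℕ) :
    trinom a b c = (a + b + c).choose a * ((b + c).choose b) := by
  have h1 : (a + b + c).choose a * a.factorial * (b + c).factorial
      = (a + b + c).factorial := by
    have := Nat.choose_mul_factorial_mul_factorial
      (show a ≤ a + b + c by omega) (n := a + b + c)
    simpa [show a + b + c - a = b + c by omega] using this
  have h2 : (b + c).choose b * b.factorial * c.factorial = (b + c).factorial := by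
    have := Nat.choose_mul_factorial_mul_factorial
      (show b ≤ b + c by omega) (n := b + c)
    simpa [show b + c - b = c by omega] using this
  have key : (a + b + c).choose a * ((b + c).choose b)
      * (a.factorial * b.factorial * c.factorial) = (a + b + c).factorial := by
    calc (a + b + c).choose a * ((b + c).choose b)
        * (a.factorial * b.factorial * c.factorial)
        = ((a + b + c).choose a * a.factorial)
          * ((b + c).choose b * b.factorial * c.factorial) := by ring
      _ = ((a + b + c).choose a * a.factorial) * (b + c).factorial := by rw [h2]
      _ = (a + b + c).factorial := by rw [← h1]
  have hpos : 0 < a.factorial * b.factorial * c.factorial :=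
    Nat.mul_pos (Nat.mul_pos a.factorial_pos b.factorial_pos) c.factorial_pos
  unfold trinom
  exact Nat.div_eq_of_eq_mul_left hpos key.symm

lemma trinom_swap12 (a b c : ℕ) : trinom a b c = trinom b a c := by
  unfold trinom
  rw [show a + b + c = b + a + c by ring,
    show a.factorial * b.factorial * c.factorial
      = b.factorial * a.factorial * c.factorial by ring]

lemma trinom_swap13 (a b c : ℕ) : trinom a b c = trinom c b a := by
  unfold trinom
  rw [show a + b + c = c + b + a by ring,
    show a.factorial * b.factorial * c.factorial
      = c.factorial * b.factorial * a.factorial by ring]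

lemma choose_pow_dvd {p r n k : ℕ} (hp : p.Prime) (hr : 0 < r) (hn : 0 < n)
    (hk : ¬ p ∣ k) (hkle : k ≤ p ^ r * n) : p ^ r ∣ (p ^ r * n).choose k := by
  have hk0 : k ≠ 0 := by rintro rfl; exact hk (dvd_zero p)
  set m := p ^ r * n with hm
  have hm0 : 0 < m := Nat.mul_pos (Nat.pow_pos (n := r) hp.pos) hn
  have hid : m * (m - 1).choose (k - 1) = m.choose k * k := by
    have hm1 : m - 1 + 1 = m := by omega
    have hk1 : k - 1 + 1 = k := by omega
    have := Nat.add_one_mul_choose_eq (m - 1) (k - 1)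
    simpa [hm1, hk1] using this
  have hdvd : p ^ r ∣ m.choose k * k := by
    rw [← hid]; exact (dvd_mul_right (p ^ r) n).mul_right _
  have hcop : Nat.Coprime (p ^ r) k :=
    Nat.Coprime.pow_left r ((Nat.Prime.coprime_iff_not_dvd hp).mpr hk)
  exact hcop.dvd_of_dvd_mul_right hdvd

lemma trinom_pow_dvd {p r n : ℕ} (hp : p.Prime) (hr : 0 < r) (hn : 0 < n)
    {x1 x2 x3 : ℕ} (hsum : x1 + x2 + x3 = p ^ r * n)
    (hbad : ¬ (p ∣ x1 ∧ p ∣ x2 ∧ p ∣ x3)) : p ^ r ∣ trinom x1 x2 x3 := by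
  have main : ∀ y1 y2 y3 : ℕ, y1 + y2 + y3 = p ^ r * n → ¬ p ∣ y1 →
      p ^ r ∣ trinom y1 y2 y3 := by
    intro y1 y2 y3 hs hy
    rw [trinom_eq, hs]
    exact (choose_pow_dvd hp hr hn hy (by omega)).mul_right _
  by_cases hx1 : p ∣ x1
  · by_cases hx2 : p ∣ x2
    · have hx3 : ¬ p ∣ x3 := fun h => hbad ⟨hx1, hx2, h⟩
      rw [trinom_swap13]
      exact main x3 x2 x1 (by omega) hx3
    · rw [trinom_swap12]
      exact main x2 x1 x3 (by omega) hx2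
  · exact main x1 x2 x3 hsum hx1

lemma recover {p N x y1 y2 y3 y4 : ℕ} (hN : p ∣ N)
    (h : x + y1 + y2 + y3 + 2 * y4 = 2 * N)
    (d1 : p ∣ y1) (d2 : p ∣ y2) (d3 : p ∣ y3) (d4 : p ∣ y4) : p ∣ x := by
  have hx : x = 2 * N - (y1 + y2 + y3 + 2 * y4) := by omega
  rw [hx]
  exact Nat.dvd_sub (hN.mul_left 2)
    (dvd_add (dvd_add (dvd_add d1 d2) d3) (d4.mul_left 2))

lemma recover2 {p N x y1 y2 y3 y4 : ℕ} (hp : p.Prime) (hp3 : 3 ≤ p) (hN : p ∣ N)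
    (h : y1 + y2 + y3 + y4 + 2 * x = 2 * N)
    (d1 : p ∣ y1) (d2 : p ∣ y2) (d3 : p ∣ y3) (d4 : p ∣ y4) : p ∣ x := by
  have h2x : p ∣ 2 * x := by
    have hx : 2 * x = 2 * N - (y1 + y2 + y3 + y4) := by omega
    rw [hx]
    exact Nat.dvd_sub (hN.mul_left 2) (dvd_add (dvd_add (dvd_add d1 d2) d3) d4)
  have hp2 : ¬ p ∣ 2 := fun h => by have := Nat.le_of_dvd (by norm_num) h; omega
  exact ((Nat.Prime.coprime_iff_not_dvd hp).mpr hp2).dvd_of_dvd_mul_left h2x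

lemma pair_dvd {p r u v : ℕ} (hu : p ^ r ∣ u) (hv : p ^ r ∣ v) :
    p ^ (2 * r) ∣ u * v := by
  rw [two_mul, pow_add]; exact mul_dvd_mul hu hv

theorem summand_F_dvd (p : ℕ) (hp : p.Prime) (hp3 : 3 ≤ p)
    (n r : ℕ) (hn : 0 < n) (hr : 0 < r)
    (a1 a2 a3 b1 b2 b3 c1 c2 c3 d1 d2 d3 e1 e2 e3 : ℕ)
    (ha : a1 + a2 + a3 = p ^ r * n) (hb : b1 + b2 + b3 = p ^ r * n)
    (hc : c1 + c2 + c3 = p ^ r * n) (hd : d1 + d2 + d3 = p ^ r * n)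
    (he : e1 + e2 + e3 = p ^ r * n)
    (h1 : a1 + b1 + c1 + d1 + 2 * e1 = 2 * (p ^ r * n))
    (h2 : a2 + b2 + c2 + d2 + 2 * e2 = 2 * (p ^ r * n))
    (h3 : a3 + b3 + c3 + d3 + 2 * e3 = 2 * (p ^ r * n))
    (hnd : ¬ (p ∣ a1 ∧ p ∣ a2 ∧ p ∣ a3 ∧ p ∣ b1 ∧ p ∣ b2 ∧ p ∣ b3 ∧
              p ∣ c1 ∧ p ∣ c2 ∧ p ∣ c3 ∧ p ∣ d1 ∧ p ∣ d2 ∧ p ∣ d3 ∧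
              p ∣ e1 ∧ p ∣ e2 ∧ p ∣ e3)) :
    (p : ℤ) ^ (2 * r) ∣
      (-1) ^ (a1 + b2 + c3) * (trinom a1 a2 a3 : ℤ) * (trinom b1 b2 b3 : ℤ) *
        (trinom c1 c2 c3 : ℤ) * (trinom d1 d2 d3 : ℤ) * (trinom e1 e2 e3 : ℤ) := by
  have hpN : p ∣ p ^ r * n := (dvd_pow_self p hr.ne').mul_right n
  set TA := trinom a1 a2 a3
  set TB := trinom b1 b2 b3
  set TC := trinom c1 c2 c3
  set TD := trinom d1 d2 d3
  set TE := trinom e1 e2 e3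
  have kA : ¬ (p ∣ a1 ∧ p ∣ a2 ∧ p ∣ a3) → p ^ r ∣ TA :=
    trinom_pow_dvd hp hr hn ha
  have kB : ¬ (p ∣ b1 ∧ p ∣ b2 ∧ p ∣ b3) → p ^ r ∣ TB :=
    trinom_pow_dvd hp hr hn hb
  have kC : ¬ (p ∣ c1 ∧ p ∣ c2 ∧ p ∣ c3) → p ^ r ∣ TC :=
    trinom_pow_dvd hp hr hn hc
  have kD : ¬ (p ∣ d1 ∧ p ∣ d2 ∧ p ∣ d3) → p ^ r ∣ TD :=
    trinom_pow_dvd hp hr hn hd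
  have kE : ¬ (p ∣ e1 ∧ p ∣ e2 ∧ p ∣ e3) → p ^ r ∣ TE :=
    trinom_pow_dvd hp hr hn he
  have hmain : p ^ (2 * r) ∣ TA * TB * TC * TD * TE := by
    by_cases HA : p ∣ a1 ∧ p ∣ a2 ∧ p ∣ a3
    · by_cases HB : p ∣ b1 ∧ p ∣ b2 ∧ p ∣ b3
      · by_cases HC : p ∣ c1 ∧ p ∣ c2 ∧ p ∣ c3
        · by_cases HD : p ∣ d1 ∧ p ∣ d2 ∧ p ∣ d3
          · -- all of a,b,c,d divisible: derive e divisible, contradiction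
            exfalso
            exact hnd ⟨HA.1, HA.2.1, HA.2.2, HB.1, HB.2.1, HB.2.2,
              HC.1, HC.2.1, HC.2.2, HD.1, HD.2.1, HD.2.2,
              recover2 hp hp3 hpN h1 HA.1 HB.1 HC.1 HD.1,
              recover2 hp hp3 hpN h2 HA.2.1 HB.2.1 HC.2.1 HD.2.1,
              recover2 hp hp3 hpN h3 HA.2.2 HB.2.2 HC.2.2 HD.2.2⟩
          · -- d bad; show e bad
            have HE : ¬ (p ∣ e1 ∧ p ∣ e2 ∧ p ∣ e3) := by
              intro HE
              exact HD ⟨recover hpN (by omega) HA.1 HB.1 HC.1 HE.1,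
                recover hpN (by omega) HA.2.1 HB.2.1 HC.2.1 HE.2.1,
                recover hpN (by omega) HA.2.2 HB.2.2 HC.2.2 HE.2.2⟩
            exact (pair_dvd (kD HD) (kE HE)).trans ⟨TA * TB * TC, by ring⟩
        · -- c bad
          by_cases HD : p ∣ d1 ∧ p ∣ d2 ∧ p ∣ d3
          · have HE : ¬ (p ∣ e1 ∧ p ∣ e2 ∧ p ∣ e3) := by
              intro HE
              exact HC ⟨recover hpN (by omega) HA.1 HB.1 HD.1 HE.1,
                recover hpN (by omega) HA.2.1 HB.2.1 HD.2.1 HE.2.1,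
                recover hpN (by omega) HA.2.2 HB.2.2 HD.2.2 HE.2.2⟩
            exact (pair_dvd (kC HC) (kE HE)).trans ⟨TA * TB * TD, by ring⟩
          · exact (pair_dvd (kC HC) (kD HD)).trans ⟨TA * TB * TE, by ring⟩
      · -- b bad
        by_cases HC : p ∣ c1 ∧ p ∣ c2 ∧ p ∣ c3
        · by_cases HD : p ∣ d1 ∧ p ∣ d2 ∧ p ∣ d3
          · have HE : ¬ (p ∣ e1 ∧ p ∣ e2 ∧ p ∣ e3) := by
              intro HE
              exact HB ⟨recover hpN (by omega) HA.1 HC.1 HD.1 HE.1,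
                recover hpN (by omega) HA.2.1 HC.2.1 HD.2.1 HE.2.1,
                recover hpN (by omega) HA.2.2 HC.2.2 HD.2.2 HE.2.2⟩
            exact (pair_dvd (kB HB) (kE HE)).trans ⟨TA * TC * TD, by ring⟩
          · exact (pair_dvd (kB HB) (kD HD)).trans ⟨TA * TC * TE, by ring⟩
        · exact (pair_dvd (kB HB) (kC HC)).trans ⟨TA * TD * TE, by ring⟩
    · -- a bad
      by_cases HB : p ∣ b1 ∧ p ∣ b2 ∧ p ∣ b3
      · by_cases HC : p ∣ c1 ∧ p ∣ c2 ∧ p ∣ c3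
        · by_cases HD : p ∣ d1 ∧ p ∣ d2 ∧ p ∣ d3
          · have HE : ¬ (p ∣ e1 ∧ p ∣ e2 ∧ p ∣ e3) := by
              intro HE
              exact HA ⟨recover hpN (by omega) HB.1 HC.1 HD.1 HE.1,
                recover hpN (by omega) HB.2.1 HC.2.1 HD.2.1 HE.2.1,
                recover hpN (by omega) HB.2.2 HC.2.2 HD.2.2 HE.2.2⟩
            exact (pair_dvd (kA HA) (kE HE)).trans ⟨TB * TC * TD, by ring⟩
          · exact (pair_dvd (kA HA) (kD HD)).trans ⟨TB * TC * TE, by ring⟩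
        · exact (pair_dvd (kA HA) (kC HC)).trans ⟨TB * TD * TE, by ring⟩
      · exact (pair_dvd (kA HA) (kB HB)).trans ⟨TC * TD * TE, by ring⟩
  have hZ : ((p : ℤ)) ^ (2 * r) ∣ ((TA * TB * TC * TD * TE : ℕ) : ℤ) := by
    have := Int.natCast_dvd_natCast.mpr hmain
    push_cast at this ⊢
    convert this using 2
  calc (p : ℤ) ^ (2 * r) ∣ ((TA * TB * TC * TD * TE : ℕ) : ℤ) := hZ
    _ ∣ _ := ⟨(-1) ^ (a1 + b2 + c3), by push_cast; ring⟩
end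

section
/- Let p \ge 3 be a prime, and let n, r be positive integers. Let (a, b, c, d, e) \in U(p^r n), where U(N) is the set of tuples of five triples of nonnegative integers (a, b, c, d, e), each triple summing to N, with a_i + b_i + c_i + d_i + 2 e_i = 2N for each i \in \{1, 2, 3\}. Suppose p divides every one of the 15 components. Then, writing B_N(a,b,c,d,e) = (-1)^{a_1 + b_2 + c_3} \binom{N}{a_1, a_2, a_3} \binom{N}{b_1, b_2, b_3} \binom{N}{c_1, c_2, c_3} \binom{N}{d_1, d_2, d_3} \binom{N}{e_1, e_2, e_3}, we have B_{p^r n}(a, b, c, d, e) \equiv B_{p^{r-1} n}(a/p, b/p, c/p, d/p, e/p) (mod p^{2r}), where division by p is applied componentwise. -/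
open Finset

/-- product of the integers in `[1, m]` not divisible by `p` -/
def pf (p m : ℕ) : ℕ := ∏ k ∈ Finset.Ioc 0 m, if p ∣ k then 1 else k


lemma fact_eq_prod (n : ℕ) : n.factorial = ∏ k ∈ Finset.Ioc 0 n, k := by
  induction n with
  | zero => simp
  | succ n ih => rw [Nat.factorial_succ, Finset.prod_Ioc_succ_top (Nat.zero_le _), ih]; ring

lemma window_mult (p u : ℕ) (hp : 0 < p) :
    (Finset.Ioc (p*u) (p*u+p)).filter (fun k => p ∣ k) = {p*(u+1)} := by
  ext k
  simp only [Finset.mem_filter, Finset.mem_Ioc, Finset.mem_singleton]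
  constructor
  · rintro ⟨⟨h1, h2⟩, m, rfl⟩
    have : m = u + 1 := by nlinarith
    rw [this]
  · rintro rfl
    exact ⟨⟨by nlinarith, by ring_nf; omega⟩, ⟨u+1, rfl⟩⟩

lemma fact_split (p : ℕ) (hp : 0 < p) (u : ℕ) :
    (p*u).factorial = pf p (p*u) * p^u * u.factorial := by
  induction u with
  | zero => simp [pf]
  | succ u ih =>
    have hle : p * u ≤ p * (u+1) := by nlinarith
    have hsplit : ∀ f : ℕ → ℕ, (∏ k ∈ Finset.Ioc 0 (p*(u+1)), f k)
        = (∏ k ∈ Finset.Ioc 0 (p*u), f k) * ∏ k ∈ Finset.Ioc (p*u) (p*u+p), f k := by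
      intro f
      have h : p * (u+1) = p*u + p := by ring
      rw [h]
      exact (Finset.prod_Ioc_consecutive f (Nat.zero_le _) (Nat.le_add_right _ _)).symm
    have hw : (∏ k ∈ Finset.Ioc (p*u) (p*u+p), k)
        = (∏ k ∈ Finset.Ioc (p*u) (p*u+p), if p ∣ k then 1 else k) * (p*(u+1)) := by
      have : ∀ k : ℕ, k = (if p ∣ k then 1 else k) * (if p ∣ k then k else 1) := by
        intro k; split <;> simp
      calc (∏ k ∈ Finset.Ioc (p*u) (p*u+p), k)
          = ∏ k ∈ Finset.Ioc (p*u) (p*u+p),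
              (if p ∣ k then 1 else k) * (if p ∣ k then k else 1) := by
            exact Finset.prod_congr rfl (fun k _ => this k)
        _ = (∏ k ∈ Finset.Ioc (p*u) (p*u+p), if p ∣ k then 1 else k)
              * ∏ k ∈ Finset.Ioc (p*u) (p*u+p), (if p ∣ k then k else 1) := by
            rw [Finset.prod_mul_distrib]
        _ = _ := by
            congr 1
            rw [← Finset.prod_filter, window_mult p u hp, Finset.prod_singleton]
    calc (p*(u+1)).factorial
        = (p*u).factorial * ∏ k ∈ Finset.Ioc (p*u) (p*u+p), k := by
          rw [fact_eq_prod, fact_eq_prod, hsplit]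
      _ = (pf p (p*u) * p^u * u.factorial) *
            ((∏ k ∈ Finset.Ioc (p*u) (p*u+p), if p ∣ k then 1 else k) * (p*(u+1))) := by
          rw [ih, hw]
      _ = pf p (p*(u+1)) * p^(u+1) * (u+1).factorial := by
          rw [pf, pf, hsplit, Nat.factorial_succ]
          ring

lemma trinom_mul (a b c : ℕ) :
    trinom a b c * (a.factorial * b.factorial * c.factorial) = (a + b + c).factorial := by
  apply Nat.div_mul_cancel
  calc a.factorial * b.factorial * c.factorial ∣ (a+b).factorial * c.factorial :=
        mul_dvd_mul_right (Nat.factorial_mul_factorial_dvd_factorial_add a b) _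
    _ ∣ (a+b+c).factorial := Nat.factorial_mul_factorial_dvd_factorial_add _ _

lemma trinom_pos (a b c : ℕ) : 0 < trinom a b c := by
  rcases Nat.eq_zero_or_pos (trinom a b c) with h | h
  · exfalso
    have h2 := trinom_mul a b c
    rw [h, zero_mul] at h2
    exact (Nat.factorial_pos (a+b+c)).ne' h2.symm
  · exact h

lemma pf_coprime {p : ℕ} (hp : p.Prime) (m : ℕ) : Nat.Coprime p (pf p m) := by
  apply Nat.Coprime.prod_right
  intro k _
  split
  · exact Nat.coprime_one_right _
  · exact (Nat.Prime.coprime_iff_not_dvd hp).mpr (by assumption)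

/-- first-order expansion of a shifted product -/
lemma prod_add_expand (a : ℕ) (s : Finset ℕ) :
    ∃ c : ℕ, (∏ k ∈ s, (a + k)) =
      (∏ k ∈ s, k) + a * (∑ k ∈ s, ∏ k' ∈ s.erase k, k') + a^2 * c := by
  classical
  induction s using Finset.induction_on with
  | empty => exact ⟨0, by simp⟩
  | @insert x s hx ih =>
    obtain ⟨c, hc⟩ := ih
    refine ⟨(∑ k ∈ s, ∏ k' ∈ s.erase k, k') + a * c + x * c, ?_⟩
    rw [Finset.prod_insert hx, Finset.prod_insert hx, hc,
        Finset.sum_insert hx, Finset.erase_insert hx]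
    have : ∀ k ∈ s, (∏ k' ∈ (insert x s).erase k, k') = x * ∏ k' ∈ s.erase k, k' := by
      intro k hk
      have hkx : k ≠ x := by rintro rfl; exact hx hk
      rw [Finset.erase_insert_of_ne hkx.symm, Finset.prod_insert (by simp [hx])]
    rw [Finset.sum_congr rfl this, ← Finset.mul_sum]
    ring

/-- the pairing lemma: `q ∣ ∑_{k ∈ units(q)} ∏_{k'≠k} k'` for `q` an odd prime power -/
lemma pairing {p : ℕ} (hp : p.Prime) (hodd : Odd p) (j : ℕ) :
    (p^(j+1) : ℕ) ∣ ∑ k ∈ (Finset.Ioc 0 (p^(j+1))).filter (fun k => ¬ p ∣ k),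
      ∏ k' ∈ ((Finset.Ioc 0 (p^(j+1))).filter (fun k => ¬ p ∣ k)).erase k, k' := by
  classical
  set q := p^(j+1) with hq
  set s := (Finset.Ioc 0 q).filter (fun k => ¬ p ∣ k) with hs
  have hq1 : 1 < q := Nat.one_lt_pow (by omega) hp.one_lt
  have hpq : p ∣ q := dvd_pow_self p (Nat.succ_ne_zero j)
  -- cast to ZMod q and show the sum is 0
  have key : ((∑ k ∈ s, ∏ k' ∈ s.erase k, k' : ℕ) : ZMod q) = 0 := by
    push_cast
    apply Finset.sum_involution (fun k _ => q - k)
    · -- f k + f (g k) = 0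
      intro k hk
      have hks : k ∈ s := hk
      rw [hs, Finset.mem_filter, Finset.mem_Ioc] at hks
      obtain ⟨⟨hk0, hkq⟩, hknd⟩ := hks
      have hkq' : k < q := lt_of_le_of_ne hkq (fun h => hknd (h ▸ hpq))
      have hmem : q - k ∈ s := by
        rw [hs, Finset.mem_filter, Finset.mem_Ioc]
        refine ⟨⟨by omega, by omega⟩, fun hd => hknd ?_⟩
        have : p ∣ q - (q - k) := (Nat.dvd_sub hpq hd)
        simpa [Nat.sub_sub_self hkq] using this
      -- k * prod_erase k = prod s ; (q-k) * prod_erase (q-k) = prod s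
      have e1 : ((k : ZMod q)) * ∏ k' ∈ s.erase k, (k' : ZMod q) = ∏ k' ∈ s, (k' : ZMod q) :=
        Finset.mul_prod_erase _ _ hk
      have e2 : (((q - k : ℕ) : ZMod q)) * ∏ k' ∈ s.erase (q-k), (k' : ZMod q)
          = ∏ k' ∈ s, (k' : ZMod q) := Finset.mul_prod_erase _ _ hmem
      have hcast : ((q - k : ℕ) : ZMod q) = - (k : ZMod q) := by
        have : ((q - k : ℕ) : ZMod q) = ((q : ℕ) : ZMod q) - (k : ZMod q) := by
          rw [Nat.cast_sub (le_of_lt hkq')]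
        rw [this]
        simp
      have hunit : IsUnit (k : ZMod q) := by
        rw [ZMod.isUnit_iff_coprime]
        exact Nat.Coprime.pow_right _ ((Nat.Prime.coprime_iff_not_dvd hp).mpr hknd).symm
      apply hunit.mul_left_cancel
      rw [mul_add, e1, mul_zero]
      rw [hcast] at e2
      have : (k : ZMod q) * ∏ k' ∈ s.erase (q-k), (k' : ZMod q)
          = - ∏ k' ∈ s, (k' : ZMod q) := by
        rw [← e2]; ring
      rw [this]
      ring
    · -- g k ≠ k
      intro k hk _
      have hks := hk
      rw [hs, Finset.mem_filter, Finset.mem_Ioc] at hks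
      obtain ⟨⟨hk0, hkq⟩, hknd⟩ := hks
      intro h
      have h' : q - k = k := h
      -- q - k = k means 2k = q
      have h2 : 2 * k = q := by omega
      have hdvd : p ∣ 2 * k := h2 ▸ hpq
      rcases (Nat.Prime.dvd_mul hp).mp hdvd with h | h
      · have hp2 : p = 2 := (Nat.prime_dvd_prime_iff_eq hp Nat.prime_two).mp h
        rw [Nat.odd_iff] at hodd
        omega
      · exact hknd h
    · -- g k ∈ s
      intro k hk
      have hks := hk
      rw [hs, Finset.mem_filter, Finset.mem_Ioc] at hks
      obtain ⟨⟨hk0, hkq⟩, hknd⟩ := hks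
      have hkq' : k < q := lt_of_le_of_ne hkq (fun h => hknd (h ▸ hpq))
      rw [hs, Finset.mem_filter, Finset.mem_Ioc]
      refine ⟨⟨by omega, by omega⟩, fun hd => hknd ?_⟩
      have : p ∣ q - (q - k) := (Nat.dvd_sub hpq hd)
      simpa [Nat.sub_sub_self hkq] using this
    · -- involution
      intro k hk
      have hks := hk
      rw [hs, Finset.mem_filter, Finset.mem_Ioc] at hks
      obtain ⟨⟨hk0, hkq⟩, _⟩ := hks
      omega
  have := (ZMod.natCast_eq_zero_iff _ q).mp key
  exact this

lemma pf_filter (p m : ℕ) :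
    pf p m = ∏ k ∈ (Finset.Ioc 0 m).filter (fun k => ¬ p ∣ k), k := by
  rw [pf, Finset.prod_filter]
  apply Finset.prod_congr rfl
  intro k _
  by_cases h : p ∣ k <;> simp [h]

lemma window_cong {p : ℕ} (hp : p.Prime) (hodd : Odd p) (j w : ℕ) :
    (∏ k ∈ (Finset.Ioc 0 (p^(j+1))).filter (fun k => ¬ p ∣ k), (w * p^(j+1) + k))
      ≡ pf p (p^(j+1)) [MOD (p^(j+1))^2] := by
  obtain ⟨c, hc⟩ := prod_add_expand (w * p^(j+1)) ((Finset.Ioc 0 (p^(j+1))).filter (fun k => ¬ p ∣ k))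
  obtain ⟨S, hS⟩ := pairing hp hodd j
  rw [pf_filter]
  have key : (∏ k ∈ (Finset.Ioc 0 (p^(j+1))).filter (fun k => ¬ p ∣ k), (w * p^(j+1) + k))
      = (∏ k ∈ (Finset.Ioc 0 (p^(j+1))).filter (fun k => ¬ p ∣ k), k)
        + (p^(j+1))^2 * (w * S + w^2 * c) := by
    rw [hc, hS]; ring
  show _ % _ = _ % _
  rw [key, mul_comm ((p^(j+1))^2) _, Nat.add_mul_mod_self_right]

lemma pf_split (p a b : ℕ) (h : a ≤ b) :
    pf p b = pf p a * ∏ k ∈ Finset.Ioc a b, if p ∣ k then 1 else k := by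
  rw [pf, pf, Finset.prod_Ioc_consecutive _ (Nat.zero_le a) h]

lemma pf_window_eq {p : ℕ} (hp : 0 < p) (j w : ℕ) :
    (∏ k ∈ Finset.Ioc (w * p^(j+1)) (w * p^(j+1) + p^(j+1)), if p ∣ k then 1 else k)
      = ∏ k ∈ (Finset.Ioc 0 (p^(j+1))).filter (fun k => ¬ p ∣ k), (w * p^(j+1) + k) := by
  have hmap : Finset.Ioc (w * p^(j+1)) (w * p^(j+1) + p^(j+1))
      = Finset.map (addLeftEmbedding (w * p^(j+1))) (Finset.Ioc 0 (p^(j+1))) := by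
    rw [Finset.map_add_left_Ioc]
    simp
  rw [hmap, Finset.prod_map]
  have hpq : p ∣ p^(j+1) := dvd_pow_self p (Nat.succ_ne_zero j)
  have hdw : ∀ k : ℕ, (p ∣ (w * p^(j+1) + k)) ↔ p ∣ k := by
    intro k
    constructor
    · intro h; have := (Nat.dvd_add_right (Dvd.dvd.mul_left hpq w)).mp h; exact this
    · intro h; exact Nat.dvd_add (Dvd.dvd.mul_left hpq w) h
  rw [Finset.prod_filter]
  apply Finset.prod_congr rfl
  intro k _
  simp only [addLeftEmbedding_apply]
  by_cases h : p ∣ k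
  · rw [if_pos ((hdw k).mpr h), if_neg (not_not_intro h)]
  · rw [if_neg (fun hc => h ((hdw k).mp hc)), if_pos h]

lemma pf_pow_cong {p : ℕ} (hp : p.Prime) (hodd : Odd p) (j u : ℕ) :
    pf p (p^(j+1) * u) ≡ (pf p (p^(j+1)))^u [MOD (p^(j+1))^2] := by
  induction u with
  | zero => simp [pf]; rfl
  | succ u ih =>
    have h1 : p^(j+1) * u ≤ p^(j+1) * (u+1) := Nat.mul_le_mul_left _ (by omega)
    have hsp : pf p (p^(j+1) * (u+1)) = pf p (p^(j+1) * u) *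
        ∏ k ∈ Finset.Ioc (u * p^(j+1)) (u * p^(j+1) + p^(j+1)), if p ∣ k then 1 else k := by
      rw [pf_split p _ _ h1]
      congr 1
      congr 1 <;> ring
    rw [hsp, pf_window_eq hp.pos j u, pow_succ]
    exact ih.mul (window_cong hp hodd j u)

lemma star_identity {p : ℕ} (hp : 0 < p) (x' y' z' : ℕ) :
    trinom (p*x') (p*y') (p*z') * (pf p (p*x') * pf p (p*y') * pf p (p*z'))
      = trinom x' y' z' * pf p (p*x' + p*y' + p*z') := by
  have hN : p*x' + p*y' + p*z' = p * (x' + y' + z') := by ring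
  apply Nat.eq_of_mul_eq_mul_right
    (show 0 < p^(x'+y'+z') * (x'.factorial * y'.factorial * z'.factorial) by
      positivity)
  have lhs : trinom (p*x') (p*y') (p*z') * (pf p (p*x') * pf p (p*y') * pf p (p*z')) *
      (p^(x'+y'+z') * (x'.factorial * y'.factorial * z'.factorial))
      = trinom (p*x') (p*y') (p*z') * ((p*x').factorial * (p*y').factorial * (p*z').factorial) := by
    rw [fact_split p hp x', fact_split p hp y', fact_split p hp z']
    ring
  rw [lhs, trinom_mul, hN]
  have rhs : trinom x' y' z' * pf p (p * (x'+y'+z')) *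
      (p^(x'+y'+z') * (x'.factorial * y'.factorial * z'.factorial))
      = pf p (p * (x'+y'+z')) * p^(x'+y'+z') * ((x'+y'+z').factorial) := by
    rw [← trinom_mul x' y' z']
    ring
  rw [rhs, ← fact_split p hp]

lemma triple_carry {P x y z M : ℕ} (hP : 0 < P) (hPM : P ∣ M) (h : x + y + z = M) :
    ∃ d, x % P + y % P + z % P = P * d ∧ x / P + y / P + z / P + d = M / P := by
  have key : P * (x / P + y / P + z / P) + (x % P + y % P + z % P) = M := by
    have hx := Nat.div_add_mod x P
    have hy := Nat.div_add_mod y P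
    have hz := Nat.div_add_mod z P
    calc P * (x / P + y / P + z / P) + (x % P + y % P + z % P)
        = (P * (x/P) + x % P) + (P * (y/P) + y % P) + (P * (z/P) + z % P) := by ring
      _ = x + y + z := by rw [hx, hy, hz]
      _ = M := h
  have hdvd : P ∣ (x % P + y % P + z % P) := by
    have h1 : P ∣ P * (x / P + y / P + z / P) := Dvd.intro _ rfl
    have := (Nat.dvd_add_right h1).mp (key ▸ hPM)
    exact this
  obtain ⟨d, hd⟩ := hdvd
  refine ⟨d, hd, ?_⟩
  have : P * (x / P + y / P + z / P + d) = P * (M / P) := by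
    rw [Nat.mul_div_cancel' hPM]
    rw [hd] at key
    ring_nf
    ring_nf at key
    omega
  exact Nat.eq_of_mul_eq_mul_left hP this

/-- the per-level dichotomy for the five triples -/
lemma level_dichotomy {P M : ℕ} (hP : 0 < P) (hodd : Odd P) (hPM : P ∣ M)
    (a1 a2 a3 b1 b2 b3 c1 c2 c3 d1 d2 d3 e1 e2 e3 : ℕ)
    (ha : a1 + a2 + a3 = M) (hb : b1 + b2 + b3 = M)
    (hc : c1 + c2 + c3 = M) (hd : d1 + d2 + d3 = M) (he : e1 + e2 + e3 = M)
    (h1 : a1 + b1 + c1 + d1 + 2 * e1 = 2 * M)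
    (h2 : a2 + b2 + c2 + d2 + 2 * e2 = 2 * M)
    (h3 : a3 + b3 + c3 + d3 + 2 * e3 = 2 * M) :
    (P ∣ a1 ∧ P ∣ a2 ∧ P ∣ a3 ∧ P ∣ b1 ∧ P ∣ b2 ∧ P ∣ b3 ∧ P ∣ c1 ∧ P ∣ c2 ∧ P ∣ c3
      ∧ P ∣ d1 ∧ P ∣ d2 ∧ P ∣ d3 ∧ P ∣ e1 ∧ P ∣ e2 ∧ P ∣ e3) ∨
    2 + (a1/P + a2/P + a3/P + (b1/P + b2/P + b3/P) + (c1/P + c2/P + c3/P)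
      + (d1/P + d2/P + d3/P) + (e1/P + e2/P + e3/P)) ≤ 5 * (M / P) := by
  obtain ⟨da, hda1, hda2⟩ := triple_carry hP hPM ha
  obtain ⟨db, hdb1, hdb2⟩ := triple_carry hP hPM hb
  obtain ⟨dc, hdc1, hdc2⟩ := triple_carry hP hPM hc
  obtain ⟨dd, hdd1, hdd2⟩ := triple_carry hP hPM hd
  obtain ⟨de, hde1, hde2⟩ := triple_carry hP hPM he
  by_cases hsum : 2 ≤ da + db + dc + dd + de
  · right; omega
  -- otherwise at least four of the d's are zero
  · left
    have hP2 : P.Coprime 2 := hodd.coprime_two_right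
    have hPM2 : P ∣ 2 * M := Dvd.dvd.mul_left hPM 2
    have h4 : (da = 0 ∧ db = 0 ∧ dc = 0 ∧ dd = 0) ∨ (da = 0 ∧ db = 0 ∧ dc = 0 ∧ de = 0)
        ∨ (da = 0 ∧ db = 0 ∧ dd = 0 ∧ de = 0) ∨ (da = 0 ∧ dc = 0 ∧ dd = 0 ∧ de = 0)
        ∨ (db = 0 ∧ dc = 0 ∧ dd = 0 ∧ de = 0) := by omega
    -- helper facts : if d-value is zero then P divides each entry of the triple
    have htrip : ∀ x y z : ℕ, x % P + y % P + z % P = P * 0 → P ∣ x ∧ P ∣ y ∧ P ∣ z := by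
      intro x y z hxyz
      rw [mul_zero] at hxyz
      refine ⟨Nat.dvd_of_mod_eq_zero (by omega), Nat.dvd_of_mod_eq_zero (by omega),
        Nat.dvd_of_mod_eq_zero (by omega)⟩
    rcases h4 with ⟨ea, eb, ec, ed⟩ | ⟨ea, eb, ec, ee⟩ | ⟨ea, eb, ed, ee⟩
      | ⟨ea, ec, ed, ee⟩ | ⟨eb, ec, ed, ee⟩
    · -- a,b,c,d all divisible; rows give 2*e_i divisible, then e divisible
      obtain ⟨va1, va2, va3⟩ := htrip _ _ _ (ea ▸ hda1)
      obtain ⟨vb1, vb2, vb3⟩ := htrip _ _ _ (eb ▸ hdb1)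
      obtain ⟨vc1, vc2, vc3⟩ := htrip _ _ _ (ec ▸ hdc1)
      obtain ⟨vd1, vd2, vd3⟩ := htrip _ _ _ (ed ▸ hdd1)
      have ve1 : P ∣ e1 := by
        have : P ∣ 2 * e1 := by
          have : 2 * e1 = 2 * M - (a1 + b1 + c1 + d1) := by omega
          rw [this]
          exact Nat.dvd_sub hPM2 (by
            exact Nat.dvd_add (Nat.dvd_add (Nat.dvd_add va1 vb1) vc1) vd1)
        exact (Nat.Coprime.dvd_of_dvd_mul_left hP2 this)
      have ve2 : P ∣ e2 := by
        have : P ∣ 2 * e2 := by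
          have : 2 * e2 = 2 * M - (a2 + b2 + c2 + d2) := by omega
          rw [this]
          exact Nat.dvd_sub hPM2 (Nat.dvd_add (Nat.dvd_add (Nat.dvd_add va2 vb2) vc2) vd2)
        exact (Nat.Coprime.dvd_of_dvd_mul_left hP2 this)
      have ve3 : P ∣ e3 := by
        have : P ∣ 2 * e3 := by
          have : 2 * e3 = 2 * M - (a3 + b3 + c3 + d3) := by omega
          rw [this]
          exact Nat.dvd_sub hPM2 (Nat.dvd_add (Nat.dvd_add (Nat.dvd_add va3 vb3) vc3) vd3)
        exact (Nat.Coprime.dvd_of_dvd_mul_left hP2 this)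
      exact ⟨va1, va2, va3, vb1, vb2, vb3, vc1, vc2, vc3, vd1, vd2, vd3, ve1, ve2, ve3⟩
    · -- a,b,c,e divisible; rows give d divisible
      obtain ⟨va1, va2, va3⟩ := htrip _ _ _ (ea ▸ hda1)
      obtain ⟨vb1, vb2, vb3⟩ := htrip _ _ _ (eb ▸ hdb1)
      obtain ⟨vc1, vc2, vc3⟩ := htrip _ _ _ (ec ▸ hdc1)
      obtain ⟨ve1, ve2, ve3⟩ := htrip _ _ _ (ee ▸ hde1)
      have vd1 : P ∣ d1 := by
        have hh : d1 = 2 * M - (a1 + b1 + c1 + 2 * e1) := by omega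
        rw [hh]
        exact Nat.dvd_sub hPM2 (Nat.dvd_add (Nat.dvd_add (Nat.dvd_add va1 vb1) vc1)
          (Dvd.dvd.mul_left ve1 2))
      have vd2 : P ∣ d2 := by
        have hh : d2 = 2 * M - (a2 + b2 + c2 + 2 * e2) := by omega
        rw [hh]
        exact Nat.dvd_sub hPM2 (Nat.dvd_add (Nat.dvd_add (Nat.dvd_add va2 vb2) vc2)
          (Dvd.dvd.mul_left ve2 2))
      have vd3 : P ∣ d3 := by
        have hh : d3 = 2 * M - (a3 + b3 + c3 + 2 * e3) := by omega
        rw [hh]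
        exact Nat.dvd_sub hPM2 (Nat.dvd_add (Nat.dvd_add (Nat.dvd_add va3 vb3) vc3)
          (Dvd.dvd.mul_left ve3 2))
      exact ⟨va1, va2, va3, vb1, vb2, vb3, vc1, vc2, vc3, vd1, vd2, vd3, ve1, ve2, ve3⟩
    · -- a,b,d,e divisible
      obtain ⟨va1, va2, va3⟩ := htrip _ _ _ (ea ▸ hda1)
      obtain ⟨vb1, vb2, vb3⟩ := htrip _ _ _ (eb ▸ hdb1)
      obtain ⟨vd1, vd2, vd3⟩ := htrip _ _ _ (ed ▸ hdd1)
      obtain ⟨ve1, ve2, ve3⟩ := htrip _ _ _ (ee ▸ hde1)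
      have vc1 : P ∣ c1 := by
        have hh : c1 = 2 * M - (a1 + b1 + d1 + 2 * e1) := by omega
        rw [hh]
        exact Nat.dvd_sub hPM2 (Nat.dvd_add (Nat.dvd_add (Nat.dvd_add va1 vb1) vd1)
          (Dvd.dvd.mul_left ve1 2))
      have vc2 : P ∣ c2 := by
        have hh : c2 = 2 * M - (a2 + b2 + d2 + 2 * e2) := by omega
        rw [hh]
        exact Nat.dvd_sub hPM2 (Nat.dvd_add (Nat.dvd_add (Nat.dvd_add va2 vb2) vd2)
          (Dvd.dvd.mul_left ve2 2))
      have vc3 : P ∣ c3 := by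
        have hh : c3 = 2 * M - (a3 + b3 + d3 + 2 * e3) := by omega
        rw [hh]
        exact Nat.dvd_sub hPM2 (Nat.dvd_add (Nat.dvd_add (Nat.dvd_add va3 vb3) vd3)
          (Dvd.dvd.mul_left ve3 2))
      exact ⟨va1, va2, va3, vb1, vb2, vb3, vc1, vc2, vc3, vd1, vd2, vd3, ve1, ve2, ve3⟩
    · -- a,c,d,e divisible
      obtain ⟨va1, va2, va3⟩ := htrip _ _ _ (ea ▸ hda1)
      obtain ⟨vc1, vc2, vc3⟩ := htrip _ _ _ (ec ▸ hdc1)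
      obtain ⟨vd1, vd2, vd3⟩ := htrip _ _ _ (ed ▸ hdd1)
      obtain ⟨ve1, ve2, ve3⟩ := htrip _ _ _ (ee ▸ hde1)
      have vb1 : P ∣ b1 := by
        have hh : b1 = 2 * M - (a1 + c1 + d1 + 2 * e1) := by omega
        rw [hh]
        exact Nat.dvd_sub hPM2 (Nat.dvd_add (Nat.dvd_add (Nat.dvd_add va1 vc1) vd1)
          (Dvd.dvd.mul_left ve1 2))
      have vb2 : P ∣ b2 := by
        have hh : b2 = 2 * M - (a2 + c2 + d2 + 2 * e2) := by omega
        rw [hh]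
        exact Nat.dvd_sub hPM2 (Nat.dvd_add (Nat.dvd_add (Nat.dvd_add va2 vc2) vd2)
          (Dvd.dvd.mul_left ve2 2))
      have vb3 : P ∣ b3 := by
        have hh : b3 = 2 * M - (a3 + c3 + d3 + 2 * e3) := by omega
        rw [hh]
        exact Nat.dvd_sub hPM2 (Nat.dvd_add (Nat.dvd_add (Nat.dvd_add va3 vc3) vd3)
          (Dvd.dvd.mul_left ve3 2))
      exact ⟨va1, va2, va3, vb1, vb2, vb3, vc1, vc2, vc3, vd1, vd2, vd3, ve1, ve2, ve3⟩
    · -- b,c,d,e divisible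
      obtain ⟨vb1, vb2, vb3⟩ := htrip _ _ _ (eb ▸ hdb1)
      obtain ⟨vc1, vc2, vc3⟩ := htrip _ _ _ (ec ▸ hdc1)
      obtain ⟨vd1, vd2, vd3⟩ := htrip _ _ _ (ed ▸ hdd1)
      obtain ⟨ve1, ve2, ve3⟩ := htrip _ _ _ (ee ▸ hde1)
      have va1 : P ∣ a1 := by
        have hh : a1 = 2 * M - (b1 + c1 + d1 + 2 * e1) := by omega
        rw [hh]
        exact Nat.dvd_sub hPM2 (Nat.dvd_add (Nat.dvd_add (Nat.dvd_add vb1 vc1) vd1)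
          (Dvd.dvd.mul_left ve1 2))
      have va2 : P ∣ a2 := by
        have hh : a2 = 2 * M - (b2 + c2 + d2 + 2 * e2) := by omega
        rw [hh]
        exact Nat.dvd_sub hPM2 (Nat.dvd_add (Nat.dvd_add (Nat.dvd_add vb2 vc2) vd2)
          (Dvd.dvd.mul_left ve2 2))
      have va3 : P ∣ a3 := by
        have hh : a3 = 2 * M - (b3 + c3 + d3 + 2 * e3) := by omega
        rw [hh]
        exact Nat.dvd_sub hPM2 (Nat.dvd_add (Nat.dvd_add (Nat.dvd_add vb3 vc3) vd3)
          (Dvd.dvd.mul_left ve3 2))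
      exact ⟨va1, va2, va3, vb1, vb2, vb3, vc1, vc2, vc3, vd1, vd2, vd3, ve1, ve2, ve3⟩

lemma trinom_padic (p : ℕ) [hp : Fact p.Prime] {x y z M b : ℕ} (h : x + y + z = M)
    (hb : Nat.log p M < b) :
    padicValNat p (trinom x y z) + (∑ i ∈ Finset.Ico 1 b, (x/p^i + y/p^i + z/p^i))
      = ∑ i ∈ Finset.Ico 1 b, M/p^i := by
  have hleg : ∀ w, w ≤ M → padicValNat p w.factorial = ∑ i ∈ Finset.Ico 1 b, w/p^i := by
    intro w hw
    exact padicValNat_factorial (lt_of_le_of_lt (Nat.log_mono_right hw) hb)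
  have hall : padicValNat p ((x+y+z).factorial) =
      padicValNat p (trinom x y z) + (padicValNat p x.factorial + padicValNat p y.factorial
        + padicValNat p z.factorial) := by
    rw [← trinom_mul x y z, padicValNat.mul (by exact (trinom_pos x y z).ne')
      (by positivity), padicValNat.mul (by positivity) (Nat.factorial_ne_zero z),
      padicValNat.mul (Nat.factorial_ne_zero x) (Nat.factorial_ne_zero y)]
  rw [h] at hall
  rw [hleg M le_rfl] at hall
  rw [hleg x (by omega), hleg y (by omega), hleg z (by omega)] at hall
  rw [Finset.sum_add_distrib, Finset.sum_add_distrib]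
  omega

lemma div3_le {P x y z M : ℕ} (hP : 0 < P) (h : x + y + z = M) :
    x/P + y/P + z/P ≤ M/P := by
  rw [Nat.le_div_iff_mul_le hP]
  have hx := Nat.div_mul_le_self x P
  have hy := Nat.div_mul_le_self y P
  have hz := Nat.div_mul_le_self z P
  calc (x/P + y/P + z/P) * P = x/P*P + y/P*P + z/P*P := by ring
    _ ≤ x + y + z := by omega
    _ = M := h

lemma prod_trinom_valuation (p n r g : ℕ) (hp : p.Prime) (hodd : Odd p)
    (hn : 0 < n) (hr : 0 < r)
    (a1 a2 a3 b1 b2 b3 c1 c2 c3 d1 d2 d3 e1 e2 e3 : ℕ)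
    (ha : a1 + a2 + a3 = p^(r-1)*n) (hbt : b1 + b2 + b3 = p^(r-1)*n)
    (hc : c1 + c2 + c3 = p^(r-1)*n) (hd : d1 + d2 + d3 = p^(r-1)*n)
    (he : e1 + e2 + e3 = p^(r-1)*n)
    (h1 : a1 + b1 + c1 + d1 + 2 * e1 = 2 * (p^(r-1)*n))
    (h2 : a2 + b2 + c2 + d2 + 2 * e2 = 2 * (p^(r-1)*n))
    (h3 : a3 + b3 + c3 + d3 + 2 * e3 = 2 * (p^(r-1)*n))
    (hnot : ∀ i, g < i → i ≤ r - 1 →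
      ¬ (p^i ∣ a1 ∧ p^i ∣ a2 ∧ p^i ∣ a3 ∧ p^i ∣ b1 ∧ p^i ∣ b2 ∧ p^i ∣ b3 ∧ p^i ∣ c1
        ∧ p^i ∣ c2 ∧ p^i ∣ c3 ∧ p^i ∣ d1 ∧ p^i ∣ d2 ∧ p^i ∣ d3 ∧ p^i ∣ e1 ∧ p^i ∣ e2
        ∧ p^i ∣ e3)) :
    p^(2*(r-1-g)) ∣ trinom a1 a2 a3 * trinom b1 b2 b3 * trinom c1 c2 c3 *
      trinom d1 d2 d3 * trinom e1 e2 e3 := by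
  haveI : Fact p.Prime := ⟨hp⟩
  set M := p^(r-1)*n with hM
  have hM0 : M ≠ 0 := Nat.mul_ne_zero (pow_pos hp.pos _).ne' hn.ne'
  set b := Nat.log p M + 1 with hbdef
  have hb : Nat.log p M < b := Nat.lt_succ_self _
  -- total valuation of the product
  have pa := trinom_pos a1 a2 a3
  have pb := trinom_pos b1 b2 b3
  have pc := trinom_pos c1 c2 c3
  have pd := trinom_pos d1 d2 d3
  have pe := trinom_pos e1 e2 e3
  have hPne : trinom a1 a2 a3 * trinom b1 b2 b3 * trinom c1 c2 c3 * trinom d1 d2 d3 *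
      trinom e1 e2 e3 ≠ 0 := by positivity
  rw [padicValNat_dvd_iff_le hPne]
  have hval : padicValNat p (trinom a1 a2 a3 * trinom b1 b2 b3 * trinom c1 c2 c3 *
      trinom d1 d2 d3 * trinom e1 e2 e3) = padicValNat p (trinom a1 a2 a3)
      + padicValNat p (trinom b1 b2 b3) + padicValNat p (trinom c1 c2 c3)
      + padicValNat p (trinom d1 d2 d3) + padicValNat p (trinom e1 e2 e3) := by
    rw [padicValNat.mul (by positivity) pe.ne',
      padicValNat.mul (by positivity) pd.ne',
      padicValNat.mul (by positivity) pc.ne',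
      padicValNat.mul pa.ne' pb.ne']
  have hta := trinom_padic p ha hb
  have htb := trinom_padic p hbt hb
  have htc := trinom_padic p hc hb
  have htd := trinom_padic p hd hb
  have hte := trinom_padic p he hb
  set Svals : ℕ → ℕ := fun i => a1/p^i + a2/p^i + a3/p^i + (b1/p^i + b2/p^i + b3/p^i)
    + (c1/p^i + c2/p^i + c3/p^i) + (d1/p^i + d2/p^i + d3/p^i)
    + (e1/p^i + e2/p^i + e3/p^i) with hSdef
  have hsplit : ∑ i ∈ Finset.Ico 1 b, Svals i
      = (∑ i ∈ Finset.Ico 1 b, (a1/p^i + a2/p^i + a3/p^i))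
      + (∑ i ∈ Finset.Ico 1 b, (b1/p^i + b2/p^i + b3/p^i))
      + (∑ i ∈ Finset.Ico 1 b, (c1/p^i + c2/p^i + c3/p^i))
      + (∑ i ∈ Finset.Ico 1 b, (d1/p^i + d2/p^i + d3/p^i))
      + (∑ i ∈ Finset.Ico 1 b, (e1/p^i + e2/p^i + e3/p^i)) := by
    rw [← Finset.sum_add_distrib, ← Finset.sum_add_distrib, ← Finset.sum_add_distrib,
      ← Finset.sum_add_distrib]
  have hmul5 : ∑ i ∈ Finset.Ico 1 b, 5*(M/p^i) = 5 * ∑ i ∈ Finset.Ico 1 b, M/p^i :=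
    (Finset.mul_sum _ _ _).symm
  have hkey : padicValNat p (trinom a1 a2 a3 * trinom b1 b2 b3 * trinom c1 c2 c3 *
      trinom d1 d2 d3 * trinom e1 e2 e3) + ∑ i ∈ Finset.Ico 1 b, Svals i
      = ∑ i ∈ Finset.Ico 1 b, 5*(M/p^i) := by
    omega
  have hle : ∀ i ∈ Finset.Ico 1 b, Svals i ≤ 5*(M/p^i) := by
    intro i _
    have q1 := div3_le (pow_pos hp.pos i) ha
    have q2 := div3_le (pow_pos hp.pos i) hbt
    have q3 := div3_le (pow_pos hp.pos i) hc
    have q4 := div3_le (pow_pos hp.pos i) hd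
    have q5 := div3_le (pow_pos hp.pos i) he
    simp only [hSdef]
    omega
  have htsub : ∑ i ∈ Finset.Ico 1 b, (5*(M/p^i) - Svals i)
      = ∑ i ∈ Finset.Ico 1 b, 5*(M/p^i) - ∑ i ∈ Finset.Ico 1 b, Svals i :=
    Finset.sum_tsub_distrib _ hle
  -- the subset of levels between g+1 and r-1
  rcases le_or_gt r (g+1) with hgr | hgr
  · omega
  · have hsub : Finset.Icc (g+1) (r-1) ⊆ Finset.Ico 1 b := by
      intro x hx
      rw [Finset.mem_Icc] at hx
      rw [Finset.mem_Ico]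
      constructor
      · omega
      · have hpow : p^(r-1) ≤ M := by
          rw [hM]
          exact Nat.le_mul_of_pos_right _ hn
        have hlog : r-1 ≤ Nat.log p M := (Nat.le_log_iff_pow_le hp.one_lt hM0).mpr hpow
        omega
    have hlower : ∀ i ∈ Finset.Icc (g+1) (r-1), 2 ≤ 5*(M/p^i) - Svals i := by
      intro i hi
      rw [Finset.mem_Icc] at hi
      have hP : 0 < p^i := pow_pos hp.pos i
      have hPodd : Odd (p^i) := hodd.pow
      have hPM : p^i ∣ M := by
        rw [hM]
        exact dvd_mul_of_dvd_left (pow_dvd_pow p (by omega)) n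
      rcases level_dichotomy hP hPodd hPM a1 a2 a3 b1 b2 b3 c1 c2 c3 d1 d2 d3 e1 e2 e3
        ha hbt hc hd he h1 h2 h3 with hall | hbound
      · exact absurd hall (hnot i (by omega) hi.2)
      · simp only [hSdef]
        omega
    have hcard : (Finset.Icc (g+1) (r-1)).card = r-1-g := by
      rw [Nat.card_Icc]
      omega
    have hchain : 2*(r-1-g) ≤ ∑ i ∈ Finset.Icc (g+1) (r-1), (5*(M/p^i) - Svals i) := by
      calc 2*(r-1-g) = ∑ _i ∈ Finset.Icc (g+1) (r-1), 2 := by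
            rw [Finset.sum_const, hcard, smul_eq_mul]
            ring
        _ ≤ _ := Finset.sum_le_sum hlower
    have hchain2 : ∑ i ∈ Finset.Icc (g+1) (r-1), (5*(M/p^i) - Svals i)
        ≤ ∑ i ∈ Finset.Ico 1 b, (5*(M/p^i) - Svals i) :=
      Finset.sum_le_sum_of_subset hsub
    omega
theorem summand_F_congruence (p : ℕ) (hp : p.Prime) (hp3 : 3 ≤ p)
    (n r : ℕ) (hn : 0 < n) (hr : 0 < r)
    (a1 a2 a3 b1 b2 b3 c1 c2 c3 d1 d2 d3 e1 e2 e3 : ℕ)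
    (ha : a1 + a2 + a3 = p ^ r * n) (hb : b1 + b2 + b3 = p ^ r * n)
    (hc : c1 + c2 + c3 = p ^ r * n) (hd : d1 + d2 + d3 = p ^ r * n)
    (he : e1 + e2 + e3 = p ^ r * n)
    (h1 : a1 + b1 + c1 + d1 + 2 * e1 = 2 * (p ^ r * n))
    (h2 : a2 + b2 + c2 + d2 + 2 * e2 = 2 * (p ^ r * n))
    (h3 : a3 + b3 + c3 + d3 + 2 * e3 = 2 * (p ^ r * n))
    (hda1 : p ∣ a1) (hda2 : p ∣ a2) (hda3 : p ∣ a3)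
    (hdb1 : p ∣ b1) (hdb2 : p ∣ b2) (hdb3 : p ∣ b3)
    (hdc1 : p ∣ c1) (hdc2 : p ∣ c2) (hdc3 : p ∣ c3)
    (hdd1 : p ∣ d1) (hdd2 : p ∣ d2) (hdd3 : p ∣ d3)
    (hde1 : p ∣ e1) (hde2 : p ∣ e2) (hde3 : p ∣ e3) :
    (p : ℤ) ^ (2 * r) ∣
      ((-1) ^ (a1 + b2 + c3) * (trinom a1 a2 a3 : ℤ) * (trinom b1 b2 b3 : ℤ) *
        (trinom c1 c2 c3 : ℤ) * (trinom d1 d2 d3 : ℤ) * (trinom e1 e2 e3 : ℤ) -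
       (-1) ^ (a1 / p + b2 / p + c3 / p) * (trinom (a1 / p) (a2 / p) (a3 / p) : ℤ) *
        (trinom (b1 / p) (b2 / p) (b3 / p) : ℤ) * (trinom (c1 / p) (c2 / p) (c3 / p) : ℤ) *
        (trinom (d1 / p) (d2 / p) (d3 / p) : ℤ) * (trinom (e1 / p) (e2 / p) (e3 / p) : ℤ)) := by
  have hp0 : 0 < p := hp.pos
  have hodd : Odd p := hp.odd_of_ne_two (by omega)
  obtain ⟨a1', rfl⟩ := hda1
  obtain ⟨a2', rfl⟩ := hda2
  obtain ⟨a3', rfl⟩ := hda3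
  obtain ⟨b1', rfl⟩ := hdb1
  obtain ⟨b2', rfl⟩ := hdb2
  obtain ⟨b3', rfl⟩ := hdb3
  obtain ⟨c1', rfl⟩ := hdc1
  obtain ⟨c2', rfl⟩ := hdc2
  obtain ⟨c3', rfl⟩ := hdc3
  obtain ⟨d1', rfl⟩ := hdd1
  obtain ⟨d2', rfl⟩ := hdd2
  obtain ⟨d3', rfl⟩ := hdd3
  obtain ⟨e1', rfl⟩ := hde1
  obtain ⟨e2', rfl⟩ := hde2
  obtain ⟨e3', rfl⟩ := hde3
  simp only [Nat.mul_div_cancel_left _ hp0]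
  -- abbreviations
  have hNM : p ^ r * n = p * (p ^ (r-1) * n) := by
    rw [← mul_assoc, ← pow_succ']
    congr 2
    omega
  -- primed column sums
  have ha' : a1' + a2' + a3' = p ^ (r-1) * n := by
    apply Nat.eq_of_mul_eq_mul_left hp0
    calc p * (a1' + a2' + a3') = p * a1' + p * a2' + p * a3' := by ring
      _ = p ^ r * n := ha
      _ = p * (p ^ (r-1) * n) := hNM
  have hb' : b1' + b2' + b3' = p ^ (r-1) * n := by
    apply Nat.eq_of_mul_eq_mul_left hp0
    calc p * (b1' + b2' + b3') = p * b1' + p * b2' + p * b3' := by ring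
      _ = p ^ r * n := hb
      _ = p * (p ^ (r-1) * n) := hNM
  have hc' : c1' + c2' + c3' = p ^ (r-1) * n := by
    apply Nat.eq_of_mul_eq_mul_left hp0
    calc p * (c1' + c2' + c3') = p * c1' + p * c2' + p * c3' := by ring
      _ = p ^ r * n := hc
      _ = p * (p ^ (r-1) * n) := hNM
  have hd' : d1' + d2' + d3' = p ^ (r-1) * n := by
    apply Nat.eq_of_mul_eq_mul_left hp0
    calc p * (d1' + d2' + d3') = p * d1' + p * d2' + p * d3' := by ring
      _ = p ^ r * n := hd
      _ = p * (p ^ (r-1) * n) := hNM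
  have he' : e1' + e2' + e3' = p ^ (r-1) * n := by
    apply Nat.eq_of_mul_eq_mul_left hp0
    calc p * (e1' + e2' + e3') = p * e1' + p * e2' + p * e3' := by ring
      _ = p ^ r * n := he
      _ = p * (p ^ (r-1) * n) := hNM
  -- primed row sums
  have h1' : a1' + b1' + c1' + d1' + 2 * e1' = 2 * (p ^ (r-1) * n) := by
    apply Nat.eq_of_mul_eq_mul_left hp0
    calc p * (a1' + b1' + c1' + d1' + 2 * e1')
        = p * a1' + p * b1' + p * c1' + p * d1' + 2 * (p * e1') := by ring
      _ = 2 * (p ^ r * n) := h1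
      _ = p * (2 * (p ^ (r-1) * n)) := by rw [hNM]; ring
  have h2' : a2' + b2' + c2' + d2' + 2 * e2' = 2 * (p ^ (r-1) * n) := by
    apply Nat.eq_of_mul_eq_mul_left hp0
    calc p * (a2' + b2' + c2' + d2' + 2 * e2')
        = p * a2' + p * b2' + p * c2' + p * d2' + 2 * (p * e2') := by ring
      _ = 2 * (p ^ r * n) := h2
      _ = p * (2 * (p ^ (r-1) * n)) := by rw [hNM]; ring
  have h3' : a3' + b3' + c3' + d3' + 2 * e3' = 2 * (p ^ (r-1) * n) := by
    apply Nat.eq_of_mul_eq_mul_left hp0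
    calc p * (a3' + b3' + c3' + d3' + 2 * e3')
        = p * a3' + p * b3' + p * c3' + p * d3' + 2 * (p * e3') := by ring
      _ = 2 * (p ^ r * n) := h3
      _ = p * (2 * (p ^ (r-1) * n)) := by rw [hNM]; ring
  -- the maximal common divisibility level g
  classical
  set G : Finset ℕ := (Finset.range r).filter (fun j => p^j ∣ a1' ∧ p^j ∣ a2' ∧ p^j ∣ a3'
    ∧ p^j ∣ b1' ∧ p^j ∣ b2' ∧ p^j ∣ b3' ∧ p^j ∣ c1' ∧ p^j ∣ c2' ∧ p^j ∣ c3'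
    ∧ p^j ∣ d1' ∧ p^j ∣ d2' ∧ p^j ∣ d3' ∧ p^j ∣ e1' ∧ p^j ∣ e2' ∧ p^j ∣ e3') with hGdef
  have hG0 : 0 ∈ G := by
    rw [hGdef, Finset.mem_filter, Finset.mem_range]
    refine ⟨hr, ?_⟩
    simp
  have hGne : G.Nonempty := ⟨0, hG0⟩
  set g := G.max' hGne with hgdef
  have hgG : g ∈ G := Finset.max'_mem G hGne
  rw [hGdef, Finset.mem_filter, Finset.mem_range] at hgG
  obtain ⟨hgr, va1, va2, va3, vb1, vb2, vb3, vc1, vc2, vc3, vd1, vd2, vd3, ve1, ve2, ve3⟩ := hgG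
  have hgr1 : g ≤ r - 1 := by omega
  have hnot : ∀ i, g < i → i ≤ r - 1 →
      ¬ (p^i ∣ a1' ∧ p^i ∣ a2' ∧ p^i ∣ a3' ∧ p^i ∣ b1' ∧ p^i ∣ b2' ∧ p^i ∣ b3'
        ∧ p^i ∣ c1' ∧ p^i ∣ c2' ∧ p^i ∣ c3' ∧ p^i ∣ d1' ∧ p^i ∣ d2' ∧ p^i ∣ d3'
        ∧ p^i ∣ e1' ∧ p^i ∣ e2' ∧ p^i ∣ e3') := by
    intro i hgi hir hall
    have hiG : i ∈ G := by
      rw [hGdef, Finset.mem_filter, Finset.mem_range]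
      exact ⟨by omega, hall⟩
    have := Finset.le_max' G i hiG
    omega
  -- valuation bound for the primed product
  have hval := prod_trinom_valuation p n r g hp hodd hn hr a1' a2' a3' b1' b2' b3'
    c1' c2' c3' d1' d2' d3' e1' e2' e3' ha' hb' hc' hd' he' h1' h2' h3' hnot
  -- the congruence (pf p N)^5 ≡ U mod p^(2(g+1))
  obtain ⟨ua1, hua1⟩ := va1
  obtain ⟨ua2, hua2⟩ := va2
  obtain ⟨ua3, hua3⟩ := va3
  obtain ⟨ub1, hub1⟩ := vb1
  obtain ⟨ub2, hub2⟩ := vb2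
  obtain ⟨ub3, hub3⟩ := vb3
  obtain ⟨uc1, huc1⟩ := vc1
  obtain ⟨uc2, huc2⟩ := vc2
  obtain ⟨uc3, huc3⟩ := vc3
  obtain ⟨ud1, hud1⟩ := vd1
  obtain ⟨ud2, hud2⟩ := vd2
  obtain ⟨ud3, hud3⟩ := vd3
  obtain ⟨ue1, hue1⟩ := ve1
  obtain ⟨ue2, hue2⟩ := ve2
  obtain ⟨ue3, hue3⟩ := ve3
  have hq : ∀ x u : ℕ, x = p^g * u → p * x = p^(g+1) * u := by
    intro x u hx
    rw [hx, pow_succ']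
    ring
  have hMg : p ^ (r-1) * n = p^g * (p^(r-1-g) * n) := by
    rw [← mul_assoc, ← pow_add]
    congr 2
    omega
  have hN : p ^ r * n = p^(g+1) * (p^(r-1-g) * n) := by
    rw [← mul_assoc, ← pow_add]
    congr 2
    omega
  -- pf congruences
  have hWa1 := pf_pow_cong hp hodd g ua1
  have hWa2 := pf_pow_cong hp hodd g ua2
  have hWa3 := pf_pow_cong hp hodd g ua3
  have hWb1 := pf_pow_cong hp hodd g ub1
  have hWb2 := pf_pow_cong hp hodd g ub2
  have hWb3 := pf_pow_cong hp hodd g ub3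
  have hWc1 := pf_pow_cong hp hodd g uc1
  have hWc2 := pf_pow_cong hp hodd g uc2
  have hWc3 := pf_pow_cong hp hodd g uc3
  have hWd1 := pf_pow_cong hp hodd g ud1
  have hWd2 := pf_pow_cong hp hodd g ud2
  have hWd3 := pf_pow_cong hp hodd g ud3
  have hWe1 := pf_pow_cong hp hodd g ue1
  have hWe2 := pf_pow_cong hp hodd g ue2
  have hWe3 := pf_pow_cong hp hodd g ue3
  have hWN := pf_pow_cong hp hodd g (p^(r-1-g) * n)
  rw [← hq _ _ hua1] at hWa1
  rw [← hq _ _ hua2] at hWa2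
  rw [← hq _ _ hua3] at hWa3
  rw [← hq _ _ hub1] at hWb1
  rw [← hq _ _ hub2] at hWb2
  rw [← hq _ _ hub3] at hWb3
  rw [← hq _ _ huc1] at hWc1
  rw [← hq _ _ huc2] at hWc2
  rw [← hq _ _ huc3] at hWc3
  rw [← hq _ _ hud1] at hWd1
  rw [← hq _ _ hud2] at hWd2
  rw [← hq _ _ hud3] at hWd3
  rw [← hq _ _ hue1] at hWe1
  rw [← hq _ _ hue2] at hWe2
  rw [← hq _ _ hue3] at hWe3
  rw [← hN] at hWN
  -- U : the product of all 15 pf values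
  set U : ℕ := (pf p (p*a1') * pf p (p*a2') * pf p (p*a3'))
    * (pf p (p*b1') * pf p (p*b2') * pf p (p*b3'))
    * (pf p (p*c1') * pf p (p*c2') * pf p (p*c3'))
    * (pf p (p*d1') * pf p (p*d2') * pf p (p*d3'))
    * (pf p (p*e1') * pf p (p*e2') * pf p (p*e3')) with hUdef
  -- exponent sums per triple
  have hexp : ∀ x y z u v w : ℕ, x = p^g * u → y = p^g * v → z = p^g * w →
      x + y + z = p ^ (r-1) * n → u + v + w = p^(r-1-g) * n := by
    intro x y z u v w hx hy hz hs
    apply Nat.eq_of_mul_eq_mul_left (pow_pos hp0 g)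
    calc p^g * (u + v + w) = p^g * u + p^g * v + p^g * w := by ring
      _ = p ^ (r-1) * n := by rw [← hx, ← hy, ← hz]; exact hs
      _ = p^g * (p^(r-1-g) * n) := hMg
  have hea := hexp _ _ _ _ _ _ hua1 hua2 hua3 ha'
  have heb := hexp _ _ _ _ _ _ hub1 hub2 hub3 hb'
  have hec := hexp _ _ _ _ _ _ huc1 huc2 huc3 hc'
  have hed := hexp _ _ _ _ _ _ hud1 hud2 hud3 hd'
  have hee := hexp _ _ _ _ _ _ hue1 hue2 hue3 he'
  -- the congruence U ≡ W^(5 Mg)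
  set W := pf p (p^(g+1)) with hWdef
  have hUcong : U ≡ W ^ (5 * (p^(r-1-g) * n)) [MOD (p^(g+1))^2] := by
    have copies : (5:ℕ) * (p^(r-1-g) * n) = (ua1 + ua2 + ua3) + (ub1 + ub2 + ub3)
        + (uc1 + uc2 + uc3) + (ud1 + ud2 + ud3) + (ue1 + ue2 + ue3) := by
      omega
    rw [copies, hUdef]
    calc (pf p (p*a1') * pf p (p*a2') * pf p (p*a3'))
        * (pf p (p*b1') * pf p (p*b2') * pf p (p*b3'))
        * (pf p (p*c1') * pf p (p*c2') * pf p (p*c3'))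
        * (pf p (p*d1') * pf p (p*d2') * pf p (p*d3'))
        * (pf p (p*e1') * pf p (p*e2') * pf p (p*e3'))
        ≡ (W^ua1 * W^ua2 * W^ua3) * (W^ub1 * W^ub2 * W^ub3) * (W^uc1 * W^uc2 * W^uc3)
          * (W^ud1 * W^ud2 * W^ud3) * (W^ue1 * W^ue2 * W^ue3) [MOD (p^(g+1))^2] := by
          exact Nat.ModEq.mul (Nat.ModEq.mul (Nat.ModEq.mul (Nat.ModEq.mul
            ((hWa1.mul hWa2).mul hWa3) ((hWb1.mul hWb2).mul hWb3))
            ((hWc1.mul hWc2).mul hWc3)) ((hWd1.mul hWd2).mul hWd3))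
            ((hWe1.mul hWe2).mul hWe3)
      _ = W ^ ((ua1 + ua2 + ua3) + (ub1 + ub2 + ub3) + (uc1 + uc2 + uc3)
          + (ud1 + ud2 + ud3) + (ue1 + ue2 + ue3)) := by
        rw [pow_add, pow_add, pow_add, pow_add, pow_add, pow_add, pow_add, pow_add,
          pow_add, pow_add, pow_add, pow_add, pow_add, pow_add]
  have hNcong : (pf p (p ^ r * n))^5 ≡ W ^ (5 * (p^(r-1-g) * n)) [MOD (p^(g+1))^2] := by
    have := hWN.pow 5
    calc (pf p (p ^ r * n))^5 ≡ (W ^ (p^(r-1-g) * n))^5 [MOD (p^(g+1))^2] := this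
      _ = W ^ (5 * (p^(r-1-g) * n)) := by rw [← pow_mul, mul_comm]
  have hcong : (pf p (p ^ r * n))^5 ≡ U [MOD (p^(g+1))^2] := hNcong.trans hUcong.symm
  -- star identities
  have sa : trinom (p*a1') (p*a2') (p*a3') * (pf p (p*a1') * pf p (p*a2') * pf p (p*a3'))
      = trinom a1' a2' a3' * pf p (p ^ r * n) := by
    rw [star_identity hp0 a1' a2' a3', ha]
  have sb : trinom (p*b1') (p*b2') (p*b3') * (pf p (p*b1') * pf p (p*b2') * pf p (p*b3'))
      = trinom b1' b2' b3' * pf p (p ^ r * n) := by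
    rw [star_identity hp0 b1' b2' b3', hb]
  have sc : trinom (p*c1') (p*c2') (p*c3') * (pf p (p*c1') * pf p (p*c2') * pf p (p*c3'))
      = trinom c1' c2' c3' * pf p (p ^ r * n) := by
    rw [star_identity hp0 c1' c2' c3', hc]
  have sd : trinom (p*d1') (p*d2') (p*d3') * (pf p (p*d1') * pf p (p*d2') * pf p (p*d3'))
      = trinom d1' d2' d3' * pf p (p ^ r * n) := by
    rw [star_identity hp0 d1' d2' d3', hd]
  have se : trinom (p*e1') (p*e2') (p*e3') * (pf p (p*e1') * pf p (p*e2') * pf p (p*e3'))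
      = trinom e1' e2' e3' * pf p (p ^ r * n) := by
    rw [star_identity hp0 e1' e2' e3', he]
  -- big product identity
  have bigeq : (trinom (p*a1') (p*a2') (p*a3') * trinom (p*b1') (p*b2') (p*b3')
      * trinom (p*c1') (p*c2') (p*c3') * trinom (p*d1') (p*d2') (p*d3')
      * trinom (p*e1') (p*e2') (p*e3')) * U
      = (trinom a1' a2' a3' * trinom b1' b2' b3' * trinom c1' c2' c3'
        * trinom d1' d2' d3' * trinom e1' e2' e3') * (pf p (p ^ r * n))^5 := by
    rw [hUdef]
    calc (trinom (p*a1') (p*a2') (p*a3') * trinom (p*b1') (p*b2') (p*b3')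
      * trinom (p*c1') (p*c2') (p*c3') * trinom (p*d1') (p*d2') (p*d3')
      * trinom (p*e1') (p*e2') (p*e3'))
      * ((pf p (p*a1') * pf p (p*a2') * pf p (p*a3'))
        * (pf p (p*b1') * pf p (p*b2') * pf p (p*b3'))
        * (pf p (p*c1') * pf p (p*c2') * pf p (p*c3'))
        * (pf p (p*d1') * pf p (p*d2') * pf p (p*d3'))
        * (pf p (p*e1') * pf p (p*e2') * pf p (p*e3')))
        = (trinom (p*a1') (p*a2') (p*a3') * (pf p (p*a1') * pf p (p*a2') * pf p (p*a3')))
          * (trinom (p*b1') (p*b2') (p*b3') * (pf p (p*b1') * pf p (p*b2') * pf p (p*b3')))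
          * (trinom (p*c1') (p*c2') (p*c3') * (pf p (p*c1') * pf p (p*c2') * pf p (p*c3')))
          * (trinom (p*d1') (p*d2') (p*d3') * (pf p (p*d1') * pf p (p*d2') * pf p (p*d3')))
          * (trinom (p*e1') (p*e2') (p*e3') * (pf p (p*e1') * pf p (p*e2') * pf p (p*e3'))) := by
            ring
      _ = (trinom a1' a2' a3' * pf p (p ^ r * n)) * (trinom b1' b2' b3' * pf p (p ^ r * n))
          * (trinom c1' c2' c3' * pf p (p ^ r * n)) * (trinom d1' d2' d3' * pf p (p ^ r * n))
          * (trinom e1' e2' e3' * pf p (p ^ r * n)) := by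
        rw [sa, sb, sc, sd, se]
      _ = _ := by ring
  -- move to ℤ
  set TA : ℤ := (trinom (p*a1') (p*a2') (p*a3') : ℤ) * trinom (p*b1') (p*b2') (p*b3')
    * trinom (p*c1') (p*c2') (p*c3') * trinom (p*d1') (p*d2') (p*d3')
    * trinom (p*e1') (p*e2') (p*e3') with hTAdef
  set TB : ℤ := (trinom a1' a2' a3' : ℤ) * trinom b1' b2' b3' * trinom c1' c2' c3'
    * trinom d1' d2' d3' * trinom e1' e2' e3' with hTBdef
  have hIntEq : (U:ℤ) * (TA - TB) = TB * ((pf p (p ^ r * n) : ℤ)^5 - U) := by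
    have hcast := congrArg (Nat.cast : ℕ → ℤ) bigeq
    push_cast at hcast
    rw [hTAdef, hTBdef]
    push_cast
    linear_combination hcast
  have hdvd1 : (p:ℤ)^(2*(g+1)) ∣ ((pf p (p ^ r * n) : ℤ)^5 - U) := by
    have hd := hcong.symm.dvd
    push_cast at hd
    have hcast : ((p:ℤ)^(g+1))^2 = (p:ℤ)^(2*(g+1)) := by ring
    rwa [hcast] at hd
  have hdvd2 : (p:ℤ)^(2*(r-1-g)) ∣ TB := by
    rw [hTBdef]
    exact_mod_cast Int.natCast_dvd_natCast.mpr hval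
  have hdvd3 : (p:ℤ)^(2*r) ∣ (U:ℤ) * (TA - TB) := by
    rw [hIntEq]
    have hexp2 : 2*r = 2*(r-1-g) + 2*(g+1) := by omega
    rw [hexp2, pow_add]
    exact mul_dvd_mul hdvd2 hdvd1
  have hcop : IsCoprime ((p:ℤ)^(2*r)) (U:ℤ) := by
    apply IsCoprime.pow_left
    rw [Int.isCoprime_iff_gcd_eq_one]
    have hU : Nat.Coprime p U := by
      rw [hUdef]
      repeat' apply Nat.Coprime.mul_right
      all_goals exact pf_coprime hp _
    simpa [Int.gcd] using hU
  have hΔ : (p:ℤ)^(2*r) ∣ (TA - TB) := hcop.dvd_of_dvd_mul_left hdvd3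
  -- signs
  have hsign : ((-1:ℤ)) ^ (p*a1' + p*b2' + p*c3') = (-1:ℤ) ^ (a1' + b2' + c3') := by
    have : p*a1' + p*b2' + p*c3' = p * (a1' + b2' + c3') := by ring
    rw [this, pow_mul, hodd.neg_one_pow]
  have hgoal : ((-1:ℤ) ^ (p*a1' + p*b2' + p*c3') * (trinom (p*a1') (p*a2') (p*a3') : ℤ)
      * trinom (p*b1') (p*b2') (p*b3') * trinom (p*c1') (p*c2') (p*c3')
      * trinom (p*d1') (p*d2') (p*d3') * trinom (p*e1') (p*e2') (p*e3')
      - (-1:ℤ) ^ (a1' + b2' + c3') * (trinom a1' a2' a3' : ℤ) * trinom b1' b2' b3'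
      * trinom c1' c2' c3' * trinom d1' d2' d3' * trinom e1' e2' e3')
      = (-1:ℤ) ^ (a1' + b2' + c3') * (TA - TB) := by
    rw [hsign, hTAdef, hTBdef]
    ring
  rw [hgoal]
  exact Dvd.dvd.mul_left hΔ _
end
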